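/- arXiv:1806.06683 — 9 statements merged into one kernel-verified Lean document; each statement's English description precedes it below -/
import Mathlib

section
/- Let Γ = {X_n}_{n∈ℕ₀} be a difference-bounded supermartingale adapted to a filtration {F_n}_{n∈ℕ₀} such that (1) X_0 is an almost-surely constant random variable, (2) for all n and all ω one has X_n(ω) ≥ 0, and X_n(ω) = 0 implies X_{n+1}(ω) = 0, and (3) Γ satisfies the LBCAD condition with some parameter δ ∈ (0,∞). Then P(Z_Γ < ∞) = 1, and the tail probabilities satisfy P(Z_Γ ≥ k) ∈ O(1/√k), i.e., there exist C > 0 and K ∈ ℕ such that P(Z_Γ ≥ k) ≤ C/√k for all k ≥ K. -/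
/-!
Fix `t > 0` and let `ψ u = exp (-u) - 1 + u`. Since `x ↦ exp (-x)` lies above
`1 - x + ψ |x|` and `ψ` is convex, the supermartingale property and LBCAD give the one-step gain
`E[exp (-t X_{n+1})] ≥ E[exp (-t X_n)] + ψ (t δ) E[exp (-t X_n); X_n > 0]`
(on `X_n = 0` nothing moves). The expectations stay below `1`, so the gains up to time `k` add
up to at most `1 - exp (-t x₀) ≤ t x₀`. On the event `Z ≥ k`, Markov's inequality gives
`t X_n < 1`, hence a gain of at least `exp (-1)`, outside probability `t x₀`. For `t = 1 / √k`
we have `ψ (t δ) ≥ δ² / (5 k)`, and summing `k` gains yields `P(Z ≥ k) = O(1 / √k)`; letting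
`k → ∞` gives `P(Z < ∞) = 1`.
-/

open MeasureTheory ProbabilityTheory Real

lemma two_mul_le_exp_sub_exp_neg {x : ℝ} (hx : 0 ≤ x) : 2 * x ≤ exp x - exp (-x) := by
  have := self_le_sinh_iff.2 hx
  rw [sinh_eq] at this
  linarith

lemma exp_neg_abs_sub_one_add_abs_le (x : ℝ) : exp (-|x|) - 1 + |x| ≤ exp (-x) - 1 + x := by
  rcases le_or_gt 0 x with hx | hx
  · rw [abs_of_nonneg hx]
  · have := two_mul_le_exp_sub_exp_neg (neg_nonneg.2 hx.le)
    rw [abs_of_neg hx, neg_neg] at *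
    linarith

/-- The tangent at `u` of the convex function `u ↦ exp (-u) - 1 + u`. -/
lemma exp_neg_sub_one_add_tangent_le (u v : ℝ) :
    exp (-u) - 1 + u + (1 - exp (-u)) * (v - u) ≤ exp (-v) - 1 + v := by
  have h := mul_le_mul_of_nonneg_left (add_one_le_exp (u - v)) (exp_pos (-u)).le
  rw [← exp_add, show -u + (u - v) = -v by ring] at h
  nlinarith

lemma one_sub_add_le_exp_neg (u x : ℝ) :
    1 - x + (exp (-u) - 1 + u) + (1 - exp (-u)) * (|x| - u) ≤ exp (-x) := by
  linarith [exp_neg_sub_one_add_tangent_le u |x|, exp_neg_abs_sub_one_add_abs_le x]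

lemma sq_div_five_le_exp_neg_sub_one_add {u : ℝ} (h0 : 0 ≤ u) (h1 : u ≤ 1) :
    u ^ 2 / 5 ≤ exp (-u) - 1 + u := by
  have hb := Real.exp_bound (x := -u) (by rwa [abs_neg, abs_of_nonneg h0]) (n := 3) (by norm_num)
  simp only [Finset.sum_range_succ, Finset.sum_range_zero, abs_neg, abs_of_nonneg h0] at hb
  norm_num [Nat.factorial] at hb
  nlinarith [(abs_le.1 hb).1, pow_le_pow_of_le_one h0 h1 (by norm_num : 2 ≤ 3)]

section FiniteMeasure

variable {Ω : Type*} {m m0 : MeasurableSpace Ω} {μ : Measure Ω} [IsFiniteMeasure μ]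
  {f g : Ω → ℝ} {R : ℝ}

lemma integral_mul_condExp (hm : m ≤ m0) (hg : StronglyMeasurable[m] g)
    (hgR : ∀ᵐ ω ∂μ, ‖g ω‖ ≤ R) (hf : Integrable f μ) :
    ∫ ω, g ω * (μ[f|m]) ω ∂μ = ∫ ω, g ω * f ω ∂μ := by
  rw [← integral_condExp hm (f := fun ω => g ω * f ω)]
  exact integral_congr_ae (condExp_stronglyMeasurable_mul_of_bound hm hg hf R hgR).symm

lemma mul_integral_le_integral_mul_of_le_condExp (hm : m ≤ m0) (hg : StronglyMeasurable[m] g)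
    (hg0 : 0 ≤ g) (hgR : ∀ᵐ ω ∂μ, ‖g ω‖ ≤ R) (hf : Integrable f μ) {δ : ℝ}
    (hδ : ∀ᵐ ω ∂μ, 0 < g ω → δ ≤ (μ[f|m]) ω) :
    δ * ∫ ω, g ω ∂μ ≤ ∫ ω, g ω * f ω ∂μ := by
  have hg_ae : AEStronglyMeasurable g μ := (hg.mono hm).aestronglyMeasurable
  rw [← integral_mul_condExp hm hg hgR hf, ← integral_const_mul]
  refine integral_mono_ae ((Integrable.of_bound hg_ae R hgR).const_mul δ)
    (integrable_condExp.bdd_mul hg_ae hgR) ?_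
  filter_upwards [hδ] with ω hω
  rcases (hg0 ω).eq_or_lt with h | h
  · simp [← h]
  · rw [mul_comm]
    exact mul_le_mul_of_nonneg_left (hω h) h.le

namespace MeasureTheory.Supermartingale

variable {ι : Type*} [Preorder ι] {ℱ : Filtration ι m0} {X : ι → Ω → ℝ}

lemma integral_le (hX : Supermartingale X ℱ μ) {i j : ι} (hij : i ≤ j) :
    ∫ ω, X j ω ∂μ ≤ ∫ ω, X i ω ∂μ := by
  simpa using hX.setIntegral_le hij MeasurableSet.univ

lemma integral_mul_sub_nonpos (hX : Supermartingale X ℱ μ) {i j : ι} (hij : i ≤ j)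
    (hg : StronglyMeasurable[ℱ i] g) (hg0 : 0 ≤ g) (hgR : ∀ᵐ ω ∂μ, ‖g ω‖ ≤ R) :
    ∫ ω, g ω * (X j ω - X i ω) ∂μ ≤ 0 := by
  refine (integral_mul_condExp (f := X j - X i) (ℱ.le i) hg hgR
    ((hX.integrable j).sub (hX.integrable i))).symm.trans_le (integral_nonpos_of_ae ?_)
  filter_upwards [condExp_sub (hX.integrable j) (hX.integrable i) (ℱ i), hX.condExp_ae_le hij]
    with ω hsub hle
  rw [hsub, Pi.sub_apply, condExp_of_stronglyMeasurable (ℱ.le i) (hX.stronglyMeasurable i)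
    (hX.integrable i)]
  exact mul_nonpos_of_nonneg_of_nonpos (hg0 ω) (by linarith)

end MeasureTheory.Supermartingale

lemma MeasureTheory.measure_eq_zero_of_forall_le_div_sqrt {A : Set Ω} {C : ℝ} {K : ℕ}
    (h : ∀ k ≥ K, μ.real A ≤ C / √k) : μ A = 0 := by
  have hlim : Filter.Tendsto (fun k : ℕ => C / √k) Filter.atTop (nhds 0) :=
    tendsto_const_nhds.div_atTop (tendsto_sqrt_atTop.comp tendsto_natCast_atTop_atTop)
  exact (measureReal_eq_zero_iff).1 (le_antisymm
    (ge_of_tendsto hlim (Filter.eventually_atTop.2 ⟨K, h⟩)) measureReal_nonneg)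

end FiniteMeasure

section ExponentialMoment

variable {Ω : Type*} {m0 : MeasurableSpace Ω} {μ : Measure Ω} {ℱ : Filtration ℕ m0}
  {X : ℕ → Ω → ℝ} {t : ℝ}

lemma norm_exp_neg_mul_le_one (ht : 0 ≤ t) {x : ℝ} (hx : 0 ≤ x) : ‖exp (-(t * x))‖ ≤ 1 := by
  rw [norm_of_nonneg (exp_pos _).le, exp_le_one_iff, neg_nonpos]
  exact mul_nonneg ht hx

lemma stronglyMeasurable_exp_neg_mul (hX : StronglyAdapted ℱ X) (n : ℕ) :
    StronglyMeasurable[ℱ n] fun ω => exp (-(t * X n ω)) :=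
  ((hX n).measurable.const_mul t).neg.exp.stronglyMeasurable

section

variable [IsFiniteMeasure μ]

lemma integrable_exp_neg_mul {Y : Ω → ℝ} (hY : AEMeasurable Y μ) (ht : 0 ≤ t)
    (hY0 : ∀ ω, 0 ≤ Y ω) : Integrable (fun ω => exp (-(t * Y ω))) μ :=
  .of_bound (hY.const_mul t).neg.exp.aestronglyMeasurable 1
    (ae_of_all _ fun ω => norm_exp_neg_mul_le_one ht (hY0 ω))

lemma integral_exp_neg_mul_mul_sub_nonpos (hX : Supermartingale X ℱ μ)
    (hnonneg : ∀ n ω, 0 ≤ X n ω) (ht : 0 ≤ t) (n : ℕ) :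
    ∫ ω, exp (-(t * X n ω)) * (X (n + 1) ω - X n ω) ∂μ ≤ 0 :=
  hX.integral_mul_sub_nonpos n.le_succ (stronglyMeasurable_exp_neg_mul hX.stronglyAdapted n)
    (fun _ => (exp_pos _).le) (ae_of_all _ fun ω => norm_exp_neg_mul_le_one ht (hnonneg n ω))

lemma mul_setIntegral_exp_neg_mul_le (hX : Supermartingale X ℱ μ) (hnonneg : ∀ n ω, 0 ≤ X n ω)
    {δ : ℝ} (ht : 0 ≤ t) {n : ℕ}
    (hLBCAD : ∀ᵐ ω ∂μ, 0 < X n ω → δ ≤ (μ[fun ω' => |X (n + 1) ω' - X n ω'| | ℱ n]) ω) :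
    δ * ∫ ω in {ω | 0 < X n ω}, exp (-(t * X n ω)) ∂μ
      ≤ ∫ ω in {ω | 0 < X n ω}, exp (-(t * X n ω)) * |X (n + 1) ω - X n ω| ∂μ := by
  set S := {ω | 0 < X n ω}
  have hS : MeasurableSet[ℱ n] S :=
    measurableSet_lt measurable_const (hX.stronglyMeasurable n).measurable
  rw [← integral_indicator (ℱ.le n _ hS), ← integral_indicator (ℱ.le n _ hS)]
  simp only [Set.indicator_mul_left]
  refine mul_integral_le_integral_mul_of_le_condExp (f := fun ω => |X (n + 1) ω - X n ω|) (R := 1)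
    (ℱ.le n) ((stronglyMeasurable_exp_neg_mul hX.stronglyAdapted n).indicator hS)
    (Set.indicator_nonneg fun ω _ => (exp_pos _).le) (ae_of_all _ fun ω => ?_)
    ((hX.integrable (n + 1)).sub (hX.integrable n)).abs ?_
  · exact (norm_indicator_le_norm_self _ _).trans (norm_exp_neg_mul_le_one ht (hnonneg n ω))
  · filter_upwards [hLBCAD] with ω hω hpos
    exact hω (show ω ∈ S from Set.mem_of_indicator_ne_zero hpos.ne')

lemma integral_exp_neg_mul_add_le_succ (hX : Supermartingale X ℱ μ)
    (hnonneg : ∀ n ω, 0 ≤ X n ω) {n : ℕ} (habsorb : ∀ ω, X n ω = 0 → X (n + 1) ω = 0)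
    {δ : ℝ} (hδ : 0 ≤ δ) (ht : 0 ≤ t)
    (hLBCAD : ∀ᵐ ω ∂μ, 0 < X n ω → δ ≤ (μ[fun ω' => |X (n + 1) ω' - X n ω'| | ℱ n]) ω) :
    ∫ ω, exp (-(t * X n ω)) ∂μ
      + (exp (-(t * δ)) - 1 + t * δ) * ∫ ω in {ω | 0 < X n ω}, exp (-(t * X n ω)) ∂μ
      ≤ ∫ ω, exp (-(t * X (n + 1) ω)) ∂μ := by
  set G : ℕ → Ω → ℝ := fun k ω => exp (-(t * X k ω))
  set S := {ω | 0 < X n ω}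
  set D := fun ω => X (n + 1) ω - X n ω
  set ψ := exp (-(t * δ)) - 1 + t * δ
  set κ := (1 - exp (-(t * δ))) * t
  have hXm k : Measurable (X k) := ((hX.stronglyMeasurable k).mono (ℱ.le k)).measurable
  have hS : MeasurableSet S := measurableSet_lt measurable_const (hXm n)
  have hGint k : Integrable (G k) μ := integrable_exp_neg_mul (hXm k).aemeasurable ht (hnonneg k)
  have hGDint : Integrable (fun ω => G n ω * D ω) μ :=
    ((hX.integrable (n + 1)).sub (hX.integrable n)).bdd_mul (hGint n).1
      (ae_of_all _ fun ω => norm_exp_neg_mul_le_one ht (hnonneg n ω))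
  have hGabsDint : Integrable (fun ω => G n ω * |D ω|) μ :=
    ((hX.integrable (n + 1)).sub (hX.integrable n)).abs.bdd_mul (hGint n).1
      (ae_of_all _ fun ω => norm_exp_neg_mul_le_one ht (hnonneg n ω))
  have hpointwise ω : G n ω - t * (G n ω * D ω) + ψ * S.indicator (G n) ω
      + κ * (S.indicator (fun ω => G n ω * |D ω|) ω - δ * S.indicator (G n) ω)
      ≤ G (n + 1) ω := by
    by_cases hω : ω ∈ S
    · have h := one_sub_add_le_exp_neg (t * δ) (t * D ω)
      rw [abs_mul, abs_of_nonneg ht] at h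
      simp only [Set.indicator_of_mem hω]
      calc _ = G n ω * (1 - t * D ω + ψ + (1 - exp (-(t * δ))) * (t * |D ω| - t * δ)) := by ring
        _ ≤ G n ω * exp (-(t * D ω)) := mul_le_mul_of_nonneg_left h (exp_pos _).le
        _ = G (n + 1) ω := by simp only [G, D, ← exp_add]; ring_nf
    · have hX0 : X n ω = 0 := le_antisymm (not_lt.1 hω) (hnonneg n ω)
      simp [G, D, Set.indicator_of_notMem hω, hX0, habsorb ω hX0]
  have hint := integral_mono (by fun_prop) (hGint (n + 1)) hpointwise
  rw [integral_add (by fun_prop) (by fun_prop), integral_add (by fun_prop) (by fun_prop),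
    integral_sub (by fun_prop) (by fun_prop), integral_const_mul, integral_const_mul,
    integral_const_mul, integral_sub (by fun_prop) (by fun_prop), integral_const_mul,
    integral_indicator hS, integral_indicator hS] at hint
  have hκ : 0 ≤ κ := mul_nonneg (sub_nonneg.2 (exp_le_one_iff.2 (by nlinarith))) ht
  nlinarith [mul_nonneg hκ (sub_nonneg.2 (mul_setIntegral_exp_neg_mul_le hX hnonneg ht hLBCAD)),
    integral_exp_neg_mul_mul_sub_nonpos hX hnonneg ht n]

end

variable [IsProbabilityMeasure μ] {x₀ : ℝ}

lemma sum_setIntegral_exp_neg_mul_le (hX : Supermartingale X ℱ μ) (hnonneg : ∀ n ω, 0 ≤ X n ω)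
    (habsorb : ∀ n ω, X n ω = 0 → X (n + 1) ω = 0) {δ : ℝ} (hδ : 0 ≤ δ) (ht : 0 ≤ t)
    (hLBCAD : ∀ n : ℕ, ∀ᵐ ω ∂μ,
      0 < X n ω → δ ≤ (μ[fun ω' => |X (n + 1) ω' - X n ω'| | ℱ n]) ω)
    (hX0 : ∀ᵐ ω ∂μ, X 0 ω = x₀) (k : ℕ) :
    (exp (-(t * δ)) - 1 + t * δ)
      * ∑ n ∈ Finset.range k, ∫ ω in {ω | 0 < X n ω}, exp (-(t * X n ω)) ∂μ ≤ t * x₀ := by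
  have htelescope : ∀ k, exp (-(t * x₀)) + (exp (-(t * δ)) - 1 + t * δ)
      * ∑ n ∈ Finset.range k, ∫ ω in {ω | 0 < X n ω}, exp (-(t * X n ω)) ∂μ
      ≤ ∫ ω, exp (-(t * X k ω)) ∂μ := by
    intro k
    induction k with
    | zero =>
      have h0 : ∫ ω, exp (-(t * X 0 ω)) ∂μ = exp (-(t * x₀)) := by
        rw [integral_congr_ae (g := fun _ => exp (-(t * x₀))) (hX0.mono fun ω hω => by rw [hω])]
        simp
      simp [h0]
    | succ k ih =>
      rw [Finset.sum_range_succ, mul_add]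
      linarith [integral_exp_neg_mul_add_le_succ hX hnonneg (habsorb k) hδ ht (hLBCAD k)]
  have hle_one : ∫ ω, exp (-(t * X k ω)) ∂μ ≤ 1 := by
    refine (integral_mono_of_nonneg (ae_of_all _ fun ω => (exp_pos _).le) (integrable_const 1)
      (ae_of_all _ fun ω => ?_)).trans_eq (by simp)
    exact exp_le_one_iff.2 (neg_nonpos.2 (mul_nonneg ht (hnonneg k ω)))
  linarith [htelescope k, add_one_le_exp (-(t * x₀))]

/-- A path surviving up to time `k` either has `t * X n < 1`, where the integrand is at least
`exp (-1)`, or lies in `{1 ≤ t * X n}`, of probability at most `t * x₀` by Markov's inequality. -/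
lemma exp_neg_one_mul_sub_le_setIntegral (hX : Supermartingale X ℱ μ)
    (hnonneg : ∀ n ω, 0 ≤ X n ω) (hX0 : ∀ᵐ ω ∂μ, X 0 ω = x₀) (ht : 0 ≤ t) {n k : ℕ}
    (hn : n < k) :
    exp (-1) * (μ.real {ω | ∀ m < k, 0 < X m ω} - t * x₀)
      ≤ ∫ ω in {ω | 0 < X n ω}, exp (-(t * X n ω)) ∂μ := by
  have hXm : Measurable (X n) := ((hX.stronglyMeasurable n).mono (ℱ.le n)).measurable
  have hint : Integrable (fun ω => exp (-(t * X n ω))) μ :=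
    integrable_exp_neg_mul hXm.aemeasurable ht (hnonneg n)
  set U := {ω | 0 < X n ω ∧ t * X n ω < 1}
  have hU : MeasurableSet U := (measurableSet_lt measurable_const hXm).inter
    (measurableSet_lt (hXm.const_mul t) measurable_const)
  have hmarkov : μ.real {ω | 1 ≤ t * X n ω} ≤ t * x₀ := by
    have h := mul_meas_ge_le_integral_of_nonneg (ae_of_all _ fun ω => mul_nonneg ht (hnonneg n ω))
      ((hX.integrable n).const_mul t) 1
    rw [one_mul, integral_const_mul] at h
    refine h.trans (mul_le_mul_of_nonneg_left ((hX.integral_le (Nat.zero_le n)).trans_eq ?_) ht)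
    simp [integral_congr_ae hX0]
  have hsurvive : μ.real {ω | ∀ m < k, 0 < X m ω} ≤ μ.real U + μ.real {ω | 1 ≤ t * X n ω} := by
    refine (measureReal_mono fun ω hω => ?_).trans (measureReal_union_le _ _)
    by_cases h : 1 ≤ t * X n ω
    · exact Or.inr h
    · exact Or.inl ⟨hω n hn, not_le.1 h⟩
  have hUint : exp (-1) * μ.real U ≤ ∫ ω in U, exp (-(t * X n ω)) ∂μ := by
    rw [mul_comm, ← smul_eq_mul, ← setIntegral_const]
    exact setIntegral_mono_on (integrable_const _).integrableOn hint.integrableOn hU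
      fun ω hω => exp_le_exp.2 (by linarith [hω.2])
  have hUS : ∫ ω in U, exp (-(t * X n ω)) ∂μ ≤ ∫ ω in {ω | 0 < X n ω}, exp (-(t * X n ω)) ∂μ :=
    setIntegral_mono_set hint.integrableOn (ae_of_all _ fun ω => (exp_pos _).le)
      (ae_of_all _ fun ω hω => hω.1)
  nlinarith [exp_pos (-1)]

lemma mul_measureReal_forall_lt_pos_sub_le (hX : Supermartingale X ℱ μ)
    (hnonneg : ∀ n ω, 0 ≤ X n ω) (habsorb : ∀ n ω, X n ω = 0 → X (n + 1) ω = 0) {δ : ℝ}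
    (hδ : 0 ≤ δ) (ht : 0 ≤ t) (hLBCAD : ∀ n : ℕ, ∀ᵐ ω ∂μ,
      0 < X n ω → δ ≤ (μ[fun ω' => |X (n + 1) ω' - X n ω'| | ℱ n]) ω)
    (hX0 : ∀ᵐ ω ∂μ, X 0 ω = x₀) (k : ℕ) :
    k * (exp (-(t * δ)) - 1 + t * δ) * (exp (-1) * (μ.real {ω | ∀ n < k, 0 < X n ω} - t * x₀))
      ≤ t * x₀ := by
  have hlower : k * (exp (-1) * (μ.real {ω | ∀ n < k, 0 < X n ω} - t * x₀))
      ≤ ∑ n ∈ Finset.range k, ∫ ω in {ω | 0 < X n ω}, exp (-(t * X n ω)) ∂μ := by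
    simpa using Finset.card_nsmul_le_sum (Finset.range k) _ _ fun n hn =>
      exp_neg_one_mul_sub_le_setIntegral hX hnonneg hX0 ht (Finset.mem_range.1 hn)
  have hψ : 0 ≤ exp (-(t * δ)) - 1 + t * δ := by linarith [add_one_le_exp (-(t * δ))]
  calc _ = (exp (-(t * δ)) - 1 + t * δ)
        * (k * (exp (-1) * (μ.real {ω | ∀ n < k, 0 < X n ω} - t * x₀))) := by ring
    _ ≤ _ := mul_le_mul_of_nonneg_left hlower hψ
    _ ≤ t * x₀ := sum_setIntegral_exp_neg_mul_le hX hnonneg habsorb hδ ht hLBCAD hX0 k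

lemma measureReal_forall_lt_pos_le_div_sqrt (hX : Supermartingale X ℱ μ)
    (hnonneg : ∀ n ω, 0 ≤ X n ω) (habsorb : ∀ n ω, X n ω = 0 → X (n + 1) ω = 0) {δ : ℝ}
    (hδ : 0 < δ) (hLBCAD : ∀ n : ℕ, ∀ᵐ ω ∂μ,
      0 < X n ω → δ ≤ (μ[fun ω' => |X (n + 1) ω' - X n ω'| | ℱ n]) ω)
    (hX0 : ∀ᵐ ω ∂μ, X 0 ω = x₀) {k : ℕ} (hk : δ ^ 2 ≤ k) :
    μ.real {ω | ∀ n < k, 0 < X n ω} ≤ x₀ * (1 + 5 * exp 1 / δ ^ 2) / √k := by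
  set P := μ.real {ω | ∀ n < k, 0 < X n ω}
  have hx₀ : 0 ≤ x₀ := by
    obtain ⟨ω, hω⟩ := hX0.exists
    exact hω ▸ hnonneg 0 ω
  have hk0 : (0 : ℝ) < k := (pow_pos hδ 2).trans_le hk
  set t := (√k)⁻¹
  have ht : 0 < t := inv_pos.2 (sqrt_pos.2 hk0)
  have htδ : t * δ ≤ 1 := by
    rw [inv_mul_le_one₀ (sqrt_pos.2 hk0)]
    exact (le_sqrt hδ.le hk0.le).2 hk
  have hψ : δ ^ 2 / 5 ≤ k * (exp (-(t * δ)) - 1 + t * δ) := by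
    refine le_of_eq_of_le ?_ (mul_le_mul_of_nonneg_left
      (sq_div_five_le_exp_neg_sub_one_add (by positivity) htδ) hk0.le)
    rw [mul_pow, inv_pow, sq_sqrt hk0.le]
    field_simp
  have hbound : x₀ * (1 + 5 * exp 1 / δ ^ 2) / √k = t * x₀ + 5 * exp 1 / δ ^ 2 * (t * x₀) := by
    simp only [t]
    field_simp
  rw [hbound]
  rcases le_or_gt P (t * x₀) with hP | hP
  · have : 0 ≤ 5 * exp 1 / δ ^ 2 * (t * x₀) := by positivity
    linarith
  · have hmain : δ ^ 2 / 5 * (exp (-1) * (P - t * x₀)) ≤ t * x₀ :=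
      (mul_le_mul_of_nonneg_right hψ (mul_nonneg (exp_pos _).le (sub_nonneg.2 hP.le))).trans
        (mul_measureReal_forall_lt_pos_sub_le hX hnonneg habsorb hδ.le ht.le hLBCAD hX0 k)
    have : P - t * x₀ ≤ 5 * exp 1 / δ ^ 2 * (t * x₀) := by
      calc P - t * x₀ = 5 * exp 1 / δ ^ 2 * (δ ^ 2 / 5 * (exp (-1) * (P - t * x₀))) := by
            rw [exp_neg]; field_simp
        _ ≤ _ := by gcongr
    linarith

end ExponentialMoment

/-- `Z_Γ(ω) = min {n | X n ω ≤ 0}`, so `P(Z_Γ < ∞) = μ {ω | ∃ n, X n ω ≤ 0}` and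
`P(Z_Γ ≥ k) = μ {ω | ∀ n < k, 0 < X n ω}`. -/
theorem difference_bounded_supermartingale_as_termination_general
    {Ω : Type*} {m0 : MeasurableSpace Ω} {μ : Measure Ω} [IsProbabilityMeasure μ]
    (ℱ : Filtration ℕ m0) (X : ℕ → Ω → ℝ)
    (hsup : Supermartingale X ℱ μ)
    (x₀ : ℝ) (hX0 : ∀ᵐ ω ∂μ, X 0 ω = x₀)
    (hnonneg : ∀ n ω, 0 ≤ X n ω)
    (habsorb : ∀ n ω, X n ω = 0 → X (n + 1) ω = 0)
    (δ : ℝ) (hδ : 0 < δ)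
    (hLBCAD : ∀ n : ℕ, ∀ᵐ ω ∂μ,
      0 < X n ω → δ ≤ (μ[fun ω' => |X (n + 1) ω' - X n ω'| | ℱ n]) ω) :
    μ {ω | ∃ n : ℕ, X n ω ≤ 0} = 1 ∧
      ∃ C > (0 : ℝ), ∃ K : ℕ, ∀ k : ℕ, K ≤ k →
        (μ {ω | ∀ n < k, 0 < X n ω}).toReal ≤ C / Real.sqrt k := by
  set C := (|x₀| + 1) * (1 + 5 * exp 1 / δ ^ 2)
  have htail (k : ℕ) (hk : ⌈δ ^ 2⌉₊ ≤ k) : μ.real {ω | ∀ n < k, 0 < X n ω} ≤ C / √k :=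
    (measureReal_forall_lt_pos_le_div_sqrt hsup hnonneg habsorb hδ hLBCAD hX0
      ((Nat.ceil_le).1 hk)).trans (by simp only [C]; gcongr; linarith [le_abs_self x₀])
  refine ⟨?_, C, by positivity, _, htail⟩
  have hsurvive : μ {ω | ∀ n, 0 < X n ω} = 0 :=
    measure_eq_zero_of_forall_le_div_sqrt fun k hk =>
      (measureReal_mono (s₂ := {ω | ∀ n < k, 0 < X n ω})
        fun ω (hω : ∀ n, 0 < X n ω) n _ => hω n).trans (htail k hk)
  have hmeas : MeasurableSet {ω | ∃ n, X n ω ≤ 0} := by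
    simp only [Set.ofPred_exists]
    exact .iUnion fun n =>
      measurableSet_le ((hsup.stronglyMeasurable n).mono (ℱ.le n)).measurable measurable_const
  rw [← prob_compl_eq_zero_iff hmeas]
  simpa [Set.compl_ofPred] using hsurvive

/-- **Difference-bounded supermartingales terminate a.s. with `O(1/√k)` tail bound.**
`Z_Γ(ω) = min {n | X n ω ≤ 0}`; hence `P(Z_Γ < ∞) = μ {ω | ∃ n, X n ω ≤ 0}` and
`P(Z_Γ ≥ k) = μ {ω | ∀ n < k, 0 < X n ω}`. -/
theorem difference_bounded_supermartingale_as_termination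
    {Ω : Type*} {m0 : MeasurableSpace Ω} {μ : Measure Ω} [IsProbabilityMeasure μ]
    (ℱ : Filtration ℕ m0) (X : ℕ → Ω → ℝ)
    (hsup : Supermartingale X ℱ μ)
    (c : ℝ) (hc : 0 < c)
    (hdiff : ∀ n : ℕ, ∀ᵐ ω ∂μ, |X (n + 1) ω - X n ω| ≤ c)
    (x₀ : ℝ) (hX0 : ∀ᵐ ω ∂μ, X 0 ω = x₀)
    (hnonneg : ∀ n ω, 0 ≤ X n ω)
    (habsorb : ∀ n ω, X n ω = 0 → X (n + 1) ω = 0)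
    (δ : ℝ) (hδ : 0 < δ)
    (hLBCAD : ∀ n : ℕ, ∀ᵐ ω ∂μ,
      0 < X n ω → δ ≤ (μ[fun ω' => |X (n + 1) ω' - X n ω'| | ℱ n]) ω) :
    μ {ω | ∃ n : ℕ, X n ω ≤ 0} = 1 ∧
      ∃ C > (0 : ℝ), ∃ K : ℕ, ∀ k : ℕ, K ≤ k →
        (μ {ω | ∀ n < k, 0 < X n ω}).toReal ≤ C / Real.sqrt k :=
  difference_bounded_supermartingale_as_termination_general ℱ X hsup x₀ hX0 hnonneg habsorb δ hδ
    hLBCAD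
end

section
/- Let Γ = {X_n}_{n∈ℕ₀} be a difference-bounded supermartingale adapted to a filtration {F_n}_{n∈ℕ₀} such that (1) X_0 is an almost-surely constant random variable, (2) for all n and all ω one has X_n(ω) ≥ 0, and X_n(ω) = 0 implies X_{n+1}(ω) = 0, and (3) Γ satisfies the LBCAD condition with some parameter δ ∈ (0,∞). Then there exists K ∈ ℕ such that for all k ≥ K, P(Z_Γ ≥ k) ≤ (1 − e^{−E(X_0)/√k}) / (1 − (1 + δ²/(4k))^{−k}). -/
/-!
Fix `t ≥ 0` with `t·|X (n+1) - X n| ≤ 1/2`, put `a = 1 + (tδ)²/4`, and let `σ n` count the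
indices `m < n` with `X m > 0`. The process `M n = a^(-σ n) · exp(-t X n)` has nondecreasing
expectation: where `X n = 0` it does not move, and where `X n > 0` the bound
`exp(-y) ≥ 1 - y + y²/4` (for `|y| ≤ 1/2`) together with `y² ≥ 2tδ|y| - (tδ)²` gives
`exp(-tD) ≥ 1 - tD + t²δ|D|/2 - t²δ²/4` for the increment `D`. The supermartingale property kills
the linear term in expectation and LBCAD turns `|D|` into `δ`, leaving exactly the factor `a`.
Since `M ≤ 1` and `σ k = k` on `{Z ≥ k}`, this yields
`exp(-t X₀) ≤ E M k ≤ 1 - (1 - a^(-k)) P(Z ≥ k)`; take `t = 1/√k`, admissible once `k ≥ 4c²`.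
-/

open MeasureTheory ProbabilityTheory Finset

namespace Real

lemma one_add_add_sq_div_four_le_exp {y : ℝ} (hy : |y| ≤ 1 / 2) :
    1 + y + y ^ 2 / 4 ≤ exp y := by
  have h := (abs_le.1 (exp_bound (x := y) (by linarith) (n := 3) (by norm_num))).1
  norm_num [sum_range_succ, Nat.factorial] at h
  have hcube : |y| ^ 3 ≤ y ^ 2 / 2 := by
    rw [pow_succ, ← sq_abs y]
    nlinarith [sq_nonneg |y|]
  nlinarith

lemma one_sub_add_le_exp_neg {y : ℝ} (s : ℝ) (hy : |y| ≤ 1 / 2) :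
    1 - y + s * |y| / 2 - s ^ 2 / 4 ≤ exp (-y) := by
  have := one_add_add_sq_div_four_le_exp (y := -y) (by rwa [abs_neg])
  nlinarith [sq_nonneg (|y| - s), sq_abs y]

end Real

lemma MeasureTheory.Supermartingale.condExp_sub_nonpos {Ω ι : Type*} {m0 : MeasurableSpace Ω}
    {μ : Measure Ω} [Preorder ι] {ℱ : Filtration ι m0}
    {X : ι → Ω → ℝ} (hX : Supermartingale X ℱ μ) {i j : ι} (hij : i ≤ j) :
    μ[X j - X i | ℱ i] ≤ᵐ[μ] 0 := by
  have h := hX.neg.condExp_sub_nonneg hij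
  have hneg : (-X) j - (-X) i = -(X j - X i) := by simp only [Pi.neg_apply]; abel
  filter_upwards [h, condExp_neg (X j - X i) (ℱ i) (μ := μ)] with ω hω hω'
  rw [hneg, hω', Pi.neg_apply] at hω
  exact neg_nonneg.1 hω

section CondExp

variable {Ω : Type*} {m m0 : MeasurableSpace Ω} {μ : Measure Ω} [IsFiniteMeasure μ]
  {G Y : Ω → ℝ} {C : ℝ}

lemma integral_mul_condExp_s1 (hm : m ≤ m0) (hG : StronglyMeasurable[m] G)
    (hGC : ∀ ω, ‖G ω‖ ≤ C) (hY : Integrable Y μ) :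
    ∫ ω, G ω * (μ[Y|m]) ω ∂μ = ∫ ω, G ω * Y ω ∂μ := by
  have hGY : Integrable (G * Y) μ :=
    hY.bdd_mul (hG.mono hm).aestronglyMeasurable (ae_of_all _ hGC)
  exact (integral_congr_ae (condExp_mul_of_stronglyMeasurable_left hG hGY hY).symm).trans
    (integral_condExp hm)

lemma integral_mul_nonpos_of_condExp_nonpos (hm : m ≤ m0) (hG : StronglyMeasurable[m] G)
    (hG0 : 0 ≤ G) (hGC : ∀ ω, ‖G ω‖ ≤ C) (hY : Integrable Y μ) (hYm : μ[Y|m] ≤ᵐ[μ] 0) :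
    ∫ ω, G ω * Y ω ∂μ ≤ 0 := by
  rw [← integral_mul_condExp_s1 hm hG hGC hY]
  exact integral_nonpos_of_ae (hYm.mono fun ω h => mul_nonpos_of_nonneg_of_nonpos (hG0 ω) h)

lemma mul_integral_le_integral_mul_of_le_condExp_s1 (hm : m ≤ m0) (hG : StronglyMeasurable[m] G)
    (hG0 : 0 ≤ G) (hGC : ∀ ω, ‖G ω‖ ≤ C) (hY : Integrable Y μ) {δ : ℝ}
    (hYm : ∀ᵐ ω ∂μ, 0 < G ω → δ ≤ μ[Y|m] ω) :
    δ * ∫ ω, G ω ∂μ ≤ ∫ ω, G ω * Y ω ∂μ := by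
  have hGi : Integrable G μ :=
    .of_bound (hG.mono hm).aestronglyMeasurable C (ae_of_all _ hGC)
  rw [← integral_mul_condExp_s1 hm hG hGC hY, ← integral_const_mul]
  refine integral_mono_ae (hGi.const_mul δ)
    (integrable_condExp.bdd_mul (hG.mono hm).aestronglyMeasurable (ae_of_all _ hGC)) ?_
  filter_upwards [hYm] with ω h
  rcases (hG0 ω).eq_or_lt with h0 | hpos
  · simp [← h0]
  · rw [mul_comm]
    exact mul_le_mul_of_nonneg_left (h hpos) hpos.le

lemma mul_integral_le_integral_mul_abs_sub (hm : m ≤ m0) (hG : StronglyMeasurable[m] G)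
    (hG0 : 0 ≤ G) (hGC : ∀ ω, ‖G ω‖ ≤ C) (hY : Integrable Y μ) (hYm : μ[Y|m] ≤ᵐ[μ] 0) {δ : ℝ}
    (hYδ : ∀ᵐ ω ∂μ, 0 < G ω → δ ≤ μ[fun ω => |Y ω| | m] ω) {α : ℝ} (hα : 0 ≤ α) :
    α * δ * ∫ ω, G ω ∂μ ≤ ∫ ω, G ω * (α * |Y ω| - Y ω) ∂μ := by
  have hdrift := integral_mul_nonpos_of_condExp_nonpos hm hG hG0 hGC hY hYm
  have hspread := mul_integral_le_integral_mul_of_le_condExp_s1 hm hG hG0 hGC hY.abs hYδ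
  have hGm := (hG.mono hm).aestronglyMeasurable (μ := μ)
  have hsplit : ∫ ω, G ω * (α * |Y ω| - Y ω) ∂μ =
      α * ∫ ω, G ω * |Y ω| ∂μ - ∫ ω, G ω * Y ω ∂μ := by
    simp_rw [mul_sub, mul_left_comm (G _)]
    rw [integral_sub ((hY.abs.bdd_mul hGm (ae_of_all _ hGC)).const_mul α)
      (hY.bdd_mul hGm (ae_of_all _ hGC)), integral_const_mul]
  rw [hsplit, mul_assoc]
  nlinarith

end CondExp

section PenalizedExp

variable {Ω : Type*} {m0 : MeasurableSpace Ω} {X : ℕ → Ω → ℝ} {a t : ℝ} {n : ℕ} {ω : Ω}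

variable (X) in
noncomputable def positiveCount (n : ℕ) (ω : Ω) : ℕ := #{m ∈ range n | 0 < X m ω}

variable (X a t) in
noncomputable def penalizedExp (n : ℕ) (ω : Ω) : ℝ :=
  (a ^ positiveCount X n ω)⁻¹ * Real.exp (-(t * X n ω))

lemma positiveCount_zero : positiveCount X 0 ω = 0 := rfl

lemma positiveCount_succ :
    positiveCount X (n + 1) ω = positiveCount X n ω + if 0 < X n ω then 1 else 0 := by
  unfold positiveCount
  rw [range_add_one, filter_insert]
  split_ifs
  · rw [card_insert_of_notMem (by simp)]
  · rfl

lemma positiveCount_of_forall_pos (h : ∀ m < n, 0 < X m ω) : positiveCount X n ω = n := by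
  rw [positiveCount, filter_true_of_mem fun m hm => h m (mem_range.1 hm), card_range]

lemma measurable_positiveCount {ℱ : Filtration ℕ m0} (hX : StronglyAdapted ℱ X) (n : ℕ) :
    Measurable[ℱ n] (positiveCount X n) := by
  have hsum : positiveCount X n = fun ω => ∑ m ∈ range n, if 0 < X m ω then 1 else 0 := by
    funext ω; exact card_filter _ _
  rw [hsum]
  refine Finset.measurable_sum _ fun m hm => Measurable.ite ?_ measurable_const measurable_const
  exact ℱ.mono (mem_range.1 hm).le _ (measurableSet_lt measurable_const (hX m).measurable)

lemma stronglyMeasurable_penalizedExp {ℱ : Filtration ℕ m0} (hX : StronglyAdapted ℱ X)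
    (n : ℕ) : StronglyMeasurable[ℱ n] (penalizedExp X a t n) :=
  (((measurable_from_top (f := fun i : ℕ => (a ^ i)⁻¹)).comp (measurable_positiveCount hX n)).mul
    ((hX n).measurable.const_mul t).neg.exp).stronglyMeasurable

lemma penalizedExp_pos (ha : 0 < a) : 0 < penalizedExp X a t n ω :=
  mul_pos (inv_pos.2 (pow_pos ha _)) (Real.exp_pos _)

lemma penalizedExp_le_inv_pow (ha : 0 < a) (ht : 0 ≤ t) (hX : 0 ≤ X n ω) :
    penalizedExp X a t n ω ≤ (a ^ positiveCount X n ω)⁻¹ :=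
  mul_le_of_le_one_right (inv_nonneg.2 (pow_pos ha _).le)
    (Real.exp_le_one_iff.2 (neg_nonpos.2 (mul_nonneg ht hX)))

lemma norm_penalizedExp_le_one (ha : 1 ≤ a) (ht : 0 ≤ t) (hX : 0 ≤ X n ω) :
    ‖penalizedExp X a t n ω‖ ≤ 1 := by
  rw [Real.norm_of_nonneg (penalizedExp_pos (by linarith)).le]
  exact (penalizedExp_le_inv_pow (by linarith) ht hX).trans
    (inv_le_one_of_one_le₀ (one_le_pow₀ ha))

lemma penalizedExp_succ :
    penalizedExp X a t (n + 1) ω = (if 0 < X n ω then a⁻¹ else 1) * penalizedExp X a t n ω *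
      Real.exp (-(t * (X (n + 1) ω - X n ω))) := by
  unfold penalizedExp
  rw [positiveCount_succ, pow_add, mul_inv]
  have hexp : Real.exp (-(t * X (n + 1) ω)) =
      Real.exp (-(t * X n ω)) * Real.exp (-(t * (X (n + 1) ω - X n ω))) := by
    rw [← Real.exp_add]; ring_nf
  split_ifs <;> rw [hexp] <;> ring

end PenalizedExp

section OneStep

variable {Ω : Type*} {m0 : MeasurableSpace Ω} {μ : Measure Ω} [IsFiniteMeasure μ]
  {ℱ : Filtration ℕ m0} {X : ℕ → Ω → ℝ} {a t δ : ℝ} {n : ℕ}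

lemma integrable_penalizedExp (hX : StronglyAdapted ℱ X) (ha : 1 ≤ a) (ht : 0 ≤ t)
    (hnonneg : ∀ ω, 0 ≤ X n ω) : Integrable (penalizedExp X a t n) μ :=
  .of_bound ((stronglyMeasurable_penalizedExp hX n).mono (ℱ.le n)).aestronglyMeasurable 1
    (ae_of_all _ fun ω => norm_penalizedExp_le_one ha ht (hnonneg ω))

lemma le_penalizedExp_succ {ω : Ω} (ha : a = 1 + (t * δ) ^ 2 / 4) (ht : 0 ≤ t)
    (hX : 0 ≤ X n ω) (habsorb : X n ω = 0 → X (n + 1) ω = 0)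
    (hD : t * |X (n + 1) ω - X n ω| ≤ 1 / 2) :
    let G := {ω | 0 < X n ω}.indicator (penalizedExp X a t n)
    penalizedExp X a t n ω + t / a * (G ω * (t * δ / 2 * |X (n + 1) ω - X n ω|
      - (X (n + 1) ω - X n ω)) - t * δ / 2 * δ * G ω) ≤ penalizedExp X a t (n + 1) ω := by
  intro G
  have ha0 : 0 < a := by rw [ha]; positivity
  rw [penalizedExp_succ]
  by_cases hpos : 0 < X n ω
  · have hG : G ω = penalizedExp X a t n ω := Set.indicator_of_mem (s := {ω | 0 < X n ω}) hpos _
    have hy : |t * (X (n + 1) ω - X n ω)| ≤ 1 / 2 := by rwa [abs_mul, abs_of_nonneg ht]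
    have hexp := Real.one_sub_add_le_exp_neg (t * δ) hy
    rw [abs_mul, abs_of_nonneg ht] at hexp
    rw [hG, if_pos hpos]
    calc _ = a⁻¹ * penalizedExp X a t n ω * (1 - t * (X (n + 1) ω - X n ω)
          + t * δ * (t * |X (n + 1) ω - X n ω|) / 2 - (t * δ) ^ 2 / 4) := by
          field_simp
          rw [ha]
          ring
      _ ≤ _ := mul_le_mul_of_nonneg_left hexp
          (mul_nonneg (inv_nonneg.2 ha0.le) (penalizedExp_pos ha0).le)
  · have hX0 : X n ω = 0 := le_antisymm (not_lt.1 hpos) hX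
    have hG : G ω = 0 := Set.indicator_of_notMem (s := {ω | 0 < X n ω}) hpos _
    simp [hG, hX0, habsorb hX0]

lemma integral_penalizedExp_le_succ (hsup : Supermartingale X ℱ μ)
    (ha : a = 1 + (t * δ) ^ 2 / 4) (ht : 0 ≤ t) (hδ : 0 ≤ δ) (hnonneg : ∀ n ω, 0 ≤ X n ω)
    (habsorb : ∀ ω, X n ω = 0 → X (n + 1) ω = 0)
    (hD : ∀ᵐ ω ∂μ, t * |X (n + 1) ω - X n ω| ≤ 1 / 2)
    (hLBCAD : ∀ᵐ ω ∂μ, 0 < X n ω → δ ≤ (μ[fun ω' => |X (n + 1) ω' - X n ω'| | ℱ n]) ω) :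
    ∫ ω, penalizedExp X a t n ω ∂μ ≤ ∫ ω, penalizedExp X a t (n + 1) ω ∂μ := by
  have ha1 : 1 ≤ a := by rw [ha]; linarith [sq_nonneg (t * δ)]
  set G := {ω | 0 < X n ω}.indicator (penalizedExp X a t n)
  set D := X (n + 1) - X n
  have hB : MeasurableSet[ℱ n] {ω | 0 < X n ω} :=
    measurableSet_lt measurable_const (hsup.stronglyAdapted n).measurable
  have hG : StronglyMeasurable[ℱ n] G :=
    (stronglyMeasurable_penalizedExp hsup.stronglyAdapted n).indicator hB
  have hG0 : 0 ≤ G := Set.indicator_nonneg fun ω _ => (penalizedExp_pos (by linarith)).le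
  have hGC : ∀ ω, ‖G ω‖ ≤ 1 := fun ω =>
    (norm_indicator_le_norm_self _ _).trans (norm_penalizedExp_le_one ha1 ht (hnonneg n ω))
  have hM := integrable_penalizedExp hsup.stronglyAdapted ha1 ht (hnonneg n) (μ := μ)
  have hGi : Integrable G μ := hM.indicator (ℱ.le n _ hB)
  have hDi : Integrable D μ := (hsup.integrable _).sub (hsup.integrable _)
  have hgain : t * δ / 2 * δ * ∫ ω, G ω ∂μ ≤ ∫ ω, G ω * (t * δ / 2 * |D ω| - D ω) ∂μ := by
    refine mul_integral_le_integral_mul_abs_sub (ℱ.le n) hG hG0 hGC hDi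
      (hsup.condExp_sub_nonpos n.le_succ) ?_ (by positivity)
    filter_upwards [hLBCAD] with ω hω hGpos
    exact hω (Set.mem_of_indicator_ne_zero (s := {ω | 0 < X n ω}) hGpos.ne')
  have hGD : Integrable (fun ω => G ω * (t * δ / 2 * |D ω| - D ω)) μ :=
    ((hDi.abs.const_mul _).sub hDi).bdd_mul (hG.mono (ℱ.le n)).aestronglyMeasurable
      (ae_of_all _ hGC)
  have hL : Integrable (fun ω => t / a * (G ω * (t * δ / 2 * |D ω| - D ω)
      - t * δ / 2 * δ * G ω)) μ :=
    (hGD.sub (hGi.const_mul _)).const_mul (t / a)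
  calc ∫ ω, penalizedExp X a t n ω ∂μ
      ≤ ∫ ω, penalizedExp X a t n ω ∂μ + t / a * (∫ ω, G ω * (t * δ / 2 * |D ω| - D ω) ∂μ
          - t * δ / 2 * δ * ∫ ω, G ω ∂μ) :=
        le_add_of_nonneg_right (mul_nonneg (div_nonneg ht (by linarith)) (sub_nonneg.2 hgain))
    _ = ∫ ω, (penalizedExp X a t n ω + t / a * (G ω * (t * δ / 2 * |D ω| - D ω)
          - t * δ / 2 * δ * G ω)) ∂μ := by
        rw [integral_add hM hL, integral_const_mul, integral_sub hGD (hGi.const_mul _),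
          integral_const_mul]
    _ ≤ ∫ ω, penalizedExp X a t (n + 1) ω ∂μ := by
        refine integral_mono_ae (hM.add hL)
          (integrable_penalizedExp hsup.stronglyAdapted ha1 ht (hnonneg _)) ?_
        filter_upwards [hD] with ω hω
        exact le_penalizedExp_succ ha ht (hnonneg n ω) (habsorb ω) hω

end OneStep

section TailBound

variable {Ω : Type*} {m0 : MeasurableSpace Ω} {μ : Measure Ω} [IsProbabilityMeasure μ]
  {ℱ : Filtration ℕ m0} {X : ℕ → Ω → ℝ} {a t δ : ℝ}

lemma penalizedExp_le_one_sub_indicator (ha : 1 ≤ a) (ht : 0 ≤ t) (hnonneg : ∀ n ω, 0 ≤ X n ω)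
    (k : ℕ) (ω : Ω) :
    penalizedExp X a t k ω ≤ 1 - (1 - (a ^ k)⁻¹) * {ω | ∀ n < k, 0 < X n ω}.indicator 1 ω := by
  by_cases hS : ∀ n < k, 0 < X n ω
  · rw [Set.indicator_of_mem (s := {ω | ∀ n < k, 0 < X n ω}) hS, Pi.one_apply, mul_one,
      sub_sub_cancel]
    calc penalizedExp X a t k ω ≤ (a ^ positiveCount X k ω)⁻¹ :=
          penalizedExp_le_inv_pow (zero_lt_one.trans_le ha) ht (hnonneg k ω)
      _ = (a ^ k)⁻¹ := by rw [positiveCount_of_forall_pos hS]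
  · rw [Set.indicator_of_notMem (s := {ω | ∀ n < k, 0 < X n ω}) hS, mul_zero, sub_zero]
    exact (le_abs_self _).trans (norm_penalizedExp_le_one ha ht (hnonneg k ω))

lemma integral_penalizedExp_le (hX : StronglyAdapted ℱ X) (ha : 1 ≤ a) (ht : 0 ≤ t)
    (hnonneg : ∀ n ω, 0 ≤ X n ω) (k : ℕ) :
    ∫ ω, penalizedExp X a t k ω ∂μ ≤ 1 - (1 - (a ^ k)⁻¹) * μ.real {ω | ∀ n < k, 0 < X n ω} := by
  have hS : MeasurableSet {ω | ∀ n < k, 0 < X n ω} := by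
    simp only [Set.ofPred_forall]
    exact MeasurableSet.iInter fun n => MeasurableSet.iInter fun _ =>
      measurableSet_lt measurable_const ((hX n).measurable.mono (ℱ.le n) le_rfl)
  have hI : Integrable ({ω | ∀ n < k, 0 < X n ω}.indicator (1 : Ω → ℝ)) μ :=
    (integrable_const 1).indicator hS
  calc ∫ ω, penalizedExp X a t k ω ∂μ
      ≤ ∫ ω, (1 - (1 - (a ^ k)⁻¹) * {ω | ∀ n < k, 0 < X n ω}.indicator 1 ω) ∂μ :=
        integral_mono (integrable_penalizedExp hX ha ht (hnonneg k))
          ((integrable_const 1).sub (hI.const_mul _))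
          (penalizedExp_le_one_sub_indicator ha ht hnonneg k)
    _ = _ := by
        rw [integral_sub (integrable_const 1) (hI.const_mul _), integral_const_mul,
          integral_indicator_one hS, integral_const, probReal_univ, one_smul]

lemma exp_neg_mul_le_one_sub_mul_measureReal (hsup : Supermartingale X ℱ μ) (ht : 0 ≤ t)
    (hδ : 0 ≤ δ) (hnonneg : ∀ n ω, 0 ≤ X n ω) (habsorb : ∀ n ω, X n ω = 0 → X (n + 1) ω = 0)
    (hD : ∀ n, ∀ᵐ ω ∂μ, t * |X (n + 1) ω - X n ω| ≤ 1 / 2)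
    (hLBCAD : ∀ n : ℕ, ∀ᵐ ω ∂μ,
      0 < X n ω → δ ≤ (μ[fun ω' => |X (n + 1) ω' - X n ω'| | ℱ n]) ω)
    {x₀ : ℝ} (hX0 : ∀ᵐ ω ∂μ, X 0 ω = x₀) (k : ℕ) :
    Real.exp (-(t * x₀)) ≤
      1 - (1 - ((1 + (t * δ) ^ 2 / 4) ^ k)⁻¹) * μ.real {ω | ∀ n < k, 0 < X n ω} := by
  have ha1 : 1 ≤ 1 + (t * δ) ^ 2 / 4 := by linarith [sq_nonneg (t * δ)]
  have hmono : Monotone fun n => ∫ ω, penalizedExp X (1 + (t * δ) ^ 2 / 4) t n ω ∂μ :=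
    monotone_nat_of_le_succ fun n => integral_penalizedExp_le_succ hsup rfl ht hδ hnonneg
      (habsorb n) (hD n) (hLBCAD n)
  have hM0 : ∫ ω, penalizedExp X (1 + (t * δ) ^ 2 / 4) t 0 ω ∂μ = Real.exp (-(t * x₀)) := by
    have h0 : penalizedExp X (1 + (t * δ) ^ 2 / 4) t 0 =ᵐ[μ] fun _ => Real.exp (-(t * x₀)) :=
      hX0.mono fun ω hω => by simp [penalizedExp, positiveCount_zero, hω]
    rw [integral_congr_ae h0, integral_const, probReal_univ, one_smul]
  calc Real.exp (-(t * x₀)) = _ := hM0.symm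
    _ ≤ _ := hmono (Nat.zero_le k)
    _ ≤ _ := integral_penalizedExp_le hsup.stronglyAdapted ha1 ht hnonneg k

end TailBound

theorem difference_bounded_supermartingale_explicit_tail_bound_general
    {Ω : Type*} {m0 : MeasurableSpace Ω} {μ : Measure Ω} [IsProbabilityMeasure μ]
    (ℱ : Filtration ℕ m0) (X : ℕ → Ω → ℝ)
    (hsup : Supermartingale X ℱ μ)
    (c : ℝ)
    (hdiff : ∀ n : ℕ, ∀ᵐ ω ∂μ, |X (n + 1) ω - X n ω| ≤ c)
    (x₀ : ℝ) (hX0 : ∀ᵐ ω ∂μ, X 0 ω = x₀)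
    (hnonneg : ∀ n ω, 0 ≤ X n ω)
    (habsorb : ∀ n ω, X n ω = 0 → X (n + 1) ω = 0)
    (δ : ℝ) (hδ : 0 < δ)
    (hLBCAD : ∀ n : ℕ, ∀ᵐ ω ∂μ,
      0 < X n ω → δ ≤ (μ[fun ω' => |X (n + 1) ω' - X n ω'| | ℱ n]) ω) :
    ∃ K : ℕ, ∀ k : ℕ, K ≤ k →
      (μ {ω | ∀ n < k, 0 < X n ω}).toReal ≤
        (1 - Real.exp (-(∫ ω, X 0 ω ∂μ) / Real.sqrt k)) /
          (1 - ((1 + δ ^ 2 / (4 * (k : ℝ))) ^ k)⁻¹) := by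
  refine ⟨⌈4 * c ^ 2⌉₊ + 1, fun k hk => ?_⟩
  have hk0 : 0 < k := (Nat.succ_pos _).trans_le hk
  have hck : (2 * c) ^ 2 ≤ k := by
    have := Nat.le_ceil (4 * c ^ 2)
    have : (⌈4 * c ^ 2⌉₊ : ℝ) + 1 ≤ k := by exact_mod_cast hk
    linarith
  have hsqrt : 0 < √(k : ℝ) := Real.sqrt_pos.2 (by exact_mod_cast hk0)
  have hsmall : ∀ n, ∀ᵐ ω ∂μ, (√(k : ℝ))⁻¹ * |X (n + 1) ω - X n ω| ≤ 1 / 2 := fun n =>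
    (hdiff n).mono fun ω hω => by
      rw [inv_mul_le_iff₀ hsqrt]
      linarith [le_abs_self (2 * c), Real.abs_le_sqrt hck]
  have hbound := exp_neg_mul_le_one_sub_mul_measureReal hsup (inv_nonneg.2 hsqrt.le) hδ.le
    hnonneg habsorb hsmall hLBCAD hX0 k
  have ha : 1 + ((√(k : ℝ))⁻¹ * δ) ^ 2 / 4 = 1 + δ ^ 2 / (4 * k) := by
    rw [mul_pow, inv_pow, Real.sq_sqrt (Nat.cast_nonneg k)]
    ring
  have hden : 0 < 1 - ((1 + δ ^ 2 / (4 * (k : ℝ))) ^ k)⁻¹ :=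
    sub_pos.2 (inv_lt_one_of_one_lt₀ (one_lt_pow₀ (lt_add_of_pos_right 1 (by positivity)) hk0.ne'))
  rw [ha, measureReal_def, ← div_eq_inv_mul] at hbound
  rw [integral_congr_ae hX0, integral_const, probReal_univ, one_smul, le_div_iff₀ hden,
    neg_div, mul_comm]
  linarith

/-- **Explicit tail bound for difference-bounded supermartingales.**
For all sufficiently large `k`,
`P(Z_Γ ≥ k) ≤ (1 − e^{−E(X₀)/√k}) / (1 − (1 + δ²/(4k))^{−k})`, where
`P(Z_Γ ≥ k) = μ {ω | ∀ n < k, 0 < X n ω}`. -/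
theorem difference_bounded_supermartingale_explicit_tail_bound
    {Ω : Type*} {m0 : MeasurableSpace Ω} {μ : Measure Ω} [IsProbabilityMeasure μ]
    (ℱ : Filtration ℕ m0) (X : ℕ → Ω → ℝ)
    (hsup : Supermartingale X ℱ μ)
    (c : ℝ) (hc : 0 < c)
    (hdiff : ∀ n : ℕ, ∀ᵐ ω ∂μ, |X (n + 1) ω - X n ω| ≤ c)
    (x₀ : ℝ) (hX0 : ∀ᵐ ω ∂μ, X 0 ω = x₀)
    (hnonneg : ∀ n ω, 0 ≤ X n ω)
    (habsorb : ∀ n ω, X n ω = 0 → X (n + 1) ω = 0)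
    (δ : ℝ) (hδ : 0 < δ)
    (hLBCAD : ∀ n : ℕ, ∀ᵐ ω ∂μ,
      0 < X n ω → δ ≤ (μ[fun ω' => |X (n + 1) ω' - X n ω'| | ℱ n]) ω) :
    ∃ K : ℕ, ∀ k : ℕ, K ≤ k →
      (μ {ω | ∀ n < k, 0 < X n ω}).toReal ≤
        (1 - Real.exp (-(∫ ω, X 0 ω ∂μ) / Real.sqrt k)) /
          (1 - ((1 + δ ^ 2 / (4 * (k : ℝ))) ^ k)⁻¹) :=
  difference_bounded_supermartingale_explicit_tail_bound_general ℱ X hsup c hdiff x₀ hX0 hnonneg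
    habsorb δ hδ hLBCAD
end

section
/- Let Γ = {X_n}_{n∈ℕ₀} be a difference-bounded supermartingale (with a.s. difference bound c ∈ (0,∞)) adapted to a filtration {F_n}_{n∈ℕ₀} such that X_0 is a.s. constant with X_0 > 0, for all n and ω one has X_n(ω) ≥ 0 and X_n(ω) = 0 implies X_{n+1}(ω) = 0, and Γ satisfies the LBCAD condition with parameter δ ∈ (0,∞). Then for every t ∈ (0,∞) with e^{c·t} − (1 + c·t + (c·t)²/2) ≤ (δ²/4)·t² and every k ∈ ℕ, e^{−t·E(X_0)} ≤ 1 − (1 − (1 + (δ²/4)·t²)^{−k}) · P(Z_Γ ≥ k). -/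
/-!
Put `q = 1 + δ²t²/4` and `Yₙ = exp (-t Xₙ) ∈ (0, 1]`. For `|y| ≤ ct` one has
`exp y ≥ 1 + y + y²/2 - ε` with `ε = exp (ct) - (1 + ct + (ct)²/2)`; with `y = -t Dₙ`,
`Dₙ = Xₙ₊₁ - Xₙ`, and `Dₙ² ≥ 2δ|Dₙ| - δ²` this bound becomes linear in `Dₙ` and `|Dₙ|`, so the
supermartingale property `E[Dₙ | ℱₙ] ≤ 0` and LBCAD give `E[Yₙ₊₁ | ℱₙ] ≥ (1 + δ²t²/2 - ε) Yₙ ≥ q Yₙ`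
on `{Xₙ > 0}`. Integrating over `Aₙ₊₁ = {X₀, …, Xₙ > 0} ∈ ℱₙ`, and using `Y ≤ 1` on `Aₙ \ Aₙ₊₁`,
shows that `q⁻ⁿ ∫_{Aₙ} Yₙ + P(Aₙᶜ)` is nondecreasing in `n`. It starts at `E[Y₀] = exp (-t x₀)`
and at `n = k` it is at most `1 - (1 - q⁻ᵏ) P(A_k)`.
-/

open MeasureTheory ProbabilityTheory Filter Set

namespace Real

lemma one_add_sq_div_two_le_cosh (x : ℝ) : 1 + x ^ 2 / 2 ≤ cosh x := by
  have := sum_le_hasSum (Finset.range 2)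
    (fun n _ => by rw [pow_mul]; positivity) (hasSum_cosh x)
  simpa [Finset.sum_range_succ] using this

lemma monotone_exp_sub_quadratic : Monotone fun y : ℝ => exp y - (1 + y + y ^ 2 / 2) := by
  refine monotone_of_hasDerivAt_nonneg (f' := fun y => exp y - (1 + y)) (fun y => ?_)
    fun y => sub_nonneg.2 (by linarith [add_one_le_exp y])
  exact ((hasDerivAt_exp y).fun_sub (((hasDerivAt_id' y).const_add 1).fun_add
    ((hasDerivAt_pow 2 y).div_const 2))).congr_deriv (by norm_num)

/-- The remainder `exp y - (1 + y + y²/2)` is nondecreasing, and its values at `x` and `-x` add up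
to `2 (cosh x - 1 - x²/2) ≥ 0`. -/
lemma quadratic_sub_le_exp_of_abs_le {x b : ℝ} (hxb : |x| ≤ b) :
    1 + x + x ^ 2 / 2 - (exp b - (1 + b + b ^ 2 / 2)) ≤ exp x := by
  have hmono := monotone_exp_sub_quadratic hxb
  rcases le_or_gt 0 x with hx | hx
  · rw [abs_of_nonneg hx] at hmono
    linarith [quadratic_le_exp_of_nonneg hx]
  · rw [abs_of_neg hx] at hmono
    simp only [neg_sq] at hmono
    linarith [one_add_sq_div_two_le_cosh x, cosh_eq x]

end Real

namespace MeasureTheory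

variable {Ω : Type*} {m m0 : MeasurableSpace Ω} {μ : Measure Ω}

lemma integrable_exp_of_ae_le [IsFiniteMeasure μ] {f : Ω → ℝ} (hf : AEStronglyMeasurable f μ)
    {C : ℝ} (hC : ∀ᵐ ω ∂μ, f ω ≤ C) : Integrable (fun ω => Real.exp (f ω)) μ :=
  .of_bound (Real.continuous_exp.comp_aestronglyMeasurable hf) (Real.exp C) <| by
    filter_upwards [hC] with ω hω
    rw [Real.norm_eq_abs, Real.abs_exp]
    exact Real.exp_le_exp.2 hω

lemma integrable_exp_neg_mul_of_abs_le [IsFiniteMeasure μ] {D : Ω → ℝ}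
    (hD : AEStronglyMeasurable D μ) {c t : ℝ} (ht : 0 ≤ t) (hDc : ∀ᵐ ω ∂μ, |D ω| ≤ c) :
    Integrable (fun ω => Real.exp (-t * D ω)) μ :=
  integrable_exp_of_ae_le (hD.const_mul _) (C := c * t) <| by
    filter_upwards [hDc] with ω hω
    nlinarith [neg_abs_le (D ω)]

lemma setIntegral_le_measureReal_of_ae_le_one {f : Ω → ℝ} {s : Set Ω}
    (hμs : μ s ≠ ⊤) (hf : Integrable f μ) (hf1 : ∀ᵐ ω ∂μ, f ω ≤ 1) :
    ∫ ω in s, f ω ∂μ ≤ μ.real s := by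
  calc ∫ ω in s, f ω ∂μ ≤ ∫ _ in s, (1 : ℝ) ∂μ :=
        setIntegral_mono_ae_restrict hf.integrableOn (integrableOn_const hμs)
          (ae_restrict_of_ae hf1)
    _ = μ.real s := by simp

lemma setIntegral_le_setIntegral_add_measureReal_sdiff [IsFiniteMeasure μ] {f : Ω → ℝ}
    {s t : Set Ω} (ht : MeasurableSet t) (hts : t ⊆ s) (hf : Integrable f μ)
    (hf1 : ∀ᵐ ω ∂μ, f ω ≤ 1) :
    ∫ ω in s, f ω ∂μ ≤ ∫ ω in t, f ω ∂μ + (μ.real s - μ.real t) := by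
  rw [← integral_inter_add_sdiff ht hf.integrableOn, inter_eq_right.2 hts,
    ← measureReal_sdiff hts ht]
  gcongr
  exact setIntegral_le_measureReal_of_ae_le_one (measure_ne_top μ _) hf hf1

lemma setIntegral_le_setIntegral_of_ae_le_condExp (hm : m ≤ m0) [SigmaFinite (μ.trim hm)]
    {f g : Ω → ℝ} {s : Set Ω} (hs : MeasurableSet[m] s) (hf : Integrable f μ)
    (hg : Integrable g μ) (hfg : ∀ᵐ ω ∂μ, ω ∈ s → f ω ≤ μ[g | m] ω) :
    ∫ ω in s, f ω ∂μ ≤ ∫ ω in s, g ω ∂μ := by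
  rw [← setIntegral_condExp hm hg hs]
  exact setIntegral_mono_ae_restrict hf.integrableOn integrable_condExp.integrableOn
    ((ae_restrict_iff' (hm s hs)).2 hfg)

theorem integral_le_one_sub_mul_measureReal_of_setIntegral_growth [IsProbabilityMeasure μ]
    {Y : ℕ → Ω → ℝ} {A : ℕ → Set Ω} {q : ℝ} (hq : 1 ≤ q) (hY : ∀ j, Integrable (Y j) μ)
    (hY1 : ∀ j, ∀ᵐ ω ∂μ, Y j ω ≤ 1) (hA : ∀ j, MeasurableSet (A j)) (hA_anti : Antitone A)
    (hgrowth : ∀ j, q * ∫ ω in A (j + 1), Y j ω ∂μ ≤ ∫ ω in A (j + 1), Y (j + 1) ω ∂μ)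
    (k : ℕ) : ∫ ω, Y 0 ω ∂μ ≤ 1 - (1 - (q ^ k)⁻¹) * μ.real (A k) := by
  have hinv_nonneg : ∀ j, 0 ≤ (q ^ j)⁻¹ := fun j => by positivity
  have invariant : ∀ j,
      ∫ ω, Y 0 ω ∂μ ≤ (q ^ j)⁻¹ * ∫ ω in A j, Y j ω ∂μ + (1 - μ.real (A j)) := by
    intro j
    induction j with
    | zero =>
      simpa [setIntegral_univ] using
        setIntegral_le_setIntegral_add_measureReal_sdiff (hA 0) (subset_univ _) (hY 0) (hY1 0)
    | succ j ih =>
      have hsplit := setIntegral_le_setIntegral_add_measureReal_sdiff (hA (j + 1))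
        (hA_anti j.le_succ) (hY j) (hY1 j)
      have hmono : μ.real (A (j + 1)) ≤ μ.real (A j) := measureReal_mono (hA_anti j.le_succ)
      have hinv_le : (q ^ j)⁻¹ ≤ 1 := inv_le_one_of_one_le₀ (one_le_pow₀ hq)
      have hstep : (q ^ j)⁻¹ * ∫ ω in A (j + 1), Y j ω ∂μ
          ≤ (q ^ (j + 1))⁻¹ * ∫ ω in A (j + 1), Y (j + 1) ω ∂μ := by
        calc (q ^ j)⁻¹ * ∫ ω in A (j + 1), Y j ω ∂μ
            = (q ^ (j + 1))⁻¹ * (q * ∫ ω in A (j + 1), Y j ω ∂μ) := by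
              field_simp; ring
          _ ≤ _ := mul_le_mul_of_nonneg_left (hgrowth j) (hinv_nonneg _)
      nlinarith [mul_le_mul_of_nonneg_left hsplit (hinv_nonneg j)]
  have hfinal : ∫ ω in A k, Y k ω ∂μ ≤ μ.real (A k) :=
    setIntegral_le_measureReal_of_ae_le_one (measure_ne_top μ _) (hY k) (hY1 k)
  nlinarith [invariant k, mul_le_mul_of_nonneg_left hfinal (hinv_nonneg k)]

theorem Supermartingale.condExp_sub_nonpos_s4 {ι E : Type*} [Preorder ι] [NormedAddCommGroup E]
    [NormedSpace ℝ E] [CompleteSpace E] [PartialOrder E] [IsOrderedAddMonoid E]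
    {ℱ : Filtration ι m0} {f : ι → Ω → E} (hf : Supermartingale f ℱ μ) {i j : ι} (hij : i ≤ j) :
    μ[f j - f i | ℱ i] ≤ᵐ[μ] 0 := by
  by_cases h : SigmaFinite (μ.trim (ℱ.le i))
  swap; · rw [condExp_of_not_sigmaFinite (ℱ.le i) h]
  have hfi : μ[f i | ℱ i] = f i :=
    condExp_of_stronglyMeasurable (ℱ.le i) (hf.stronglyAdapted i) (hf.integrable i)
  filter_upwards [condExp_sub (hf.integrable j) (hf.integrable i) (ℱ i), hf.2.1 i j hij]
    with ω hsub hle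
  rw [hsub, Pi.sub_apply, hfi, Pi.zero_apply]
  exact sub_nonpos.2 hle

theorem ae_le_condExp_exp_neg_mul [IsFiniteMeasure μ] (hm : m ≤ m0) {D : Ω → ℝ} {c t δ : ℝ}
    (hD : Integrable D μ) (hDc : ∀ᵐ ω ∂μ, |D ω| ≤ c) (hdrift : μ[D | m] ≤ᵐ[μ] 0)
    (ht : 0 ≤ t) (hδ : 0 ≤ δ) :
    ∀ᵐ ω ∂μ, δ ≤ μ[fun ω => |D ω| | m] ω →
      1 + δ ^ 2 * t ^ 2 / 2 - (Real.exp (c * t) - (1 + c * t + (c * t) ^ 2 / 2)) ≤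
        μ[fun ω => Real.exp (-t * D ω) | m] ω := by
  set ε := Real.exp (c * t) - (1 + c * t + (c * t) ^ 2 / 2) with hε
  set G : Ω → ℝ :=
    (fun _ => 1 - δ ^ 2 * t ^ 2 / 2 - ε) + ((-t) • D + (δ * t ^ 2) • fun ω => |D ω|)
  have hG_le : G ≤ᵐ[μ] fun ω => Real.exp (-t * D ω) := by
    filter_upwards [hDc] with ω hω
    have hx : |-t * D ω| ≤ c * t := by
      rw [abs_mul, abs_neg, abs_of_nonneg ht]; nlinarith [abs_nonneg (D ω)]
    have hsq : (-t * D ω) ^ 2 = t ^ 2 * |D ω| ^ 2 := by rw [sq_abs]; ring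
    have := Real.quadratic_sub_le_exp_of_abs_le hx
    simp only [G, Pi.add_apply, Pi.smul_apply, smul_eq_mul]
    nlinarith [mul_nonneg (sq_nonneg t) (sq_nonneg (|D ω| - δ))]
  have hG_int : Integrable G μ := (integrable_const _).add ((hD.smul _).add (hD.abs.smul _))
  have hexp_int : Integrable (fun ω => Real.exp (-t * D ω)) μ :=
    integrable_exp_neg_mul_of_abs_le hD.aestronglyMeasurable ht hDc
  have hG_cond : μ[G | m] =ᵐ[μ]
      (fun _ => 1 - δ ^ 2 * t ^ 2 / 2 - ε) +
        ((-t) • μ[D | m] + (δ * t ^ 2) • μ[fun ω => |D ω| | m]) := by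
    refine (condExp_add (integrable_const _) ((hD.smul _).add (hD.abs.smul _)) m).trans ?_
    rw [condExp_const hm]
    refine EventuallyEq.add EventuallyEq.rfl ?_
    refine (condExp_add (hD.smul _) (hD.abs.smul _) m).trans ?_
    exact (condExp_smul _ _ m).add (condExp_smul _ _ m)
  filter_upwards [condExp_mono (m := m) hG_int hexp_int hG_le, hG_cond, hdrift]
    with ω hle hcond hdriftω hδω
  simp only [hcond, Pi.add_apply, Pi.smul_apply, smul_eq_mul, Pi.zero_apply] at hle hdriftω
  nlinarith [mul_le_mul_of_nonneg_left hδω (by positivity : 0 ≤ δ * t ^ 2),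
    mul_nonpos_of_nonneg_of_nonpos ht hdriftω]

variable {ℱ : Filtration ℕ m0} {X : ℕ → Ω → ℝ}

theorem StronglyAdapted.measurableSet_forall_lt_pos (hX : StronglyAdapted ℱ X) {k i : ℕ}
    (hki : k ≤ i + 1) : MeasurableSet[ℱ i] {ω | ∀ n < k, 0 < X n ω} := by
  simp only [ofPred_forall]
  exact .iInter fun n => .iInter fun hn =>
    measurableSet_lt measurable_const ((hX n).mono (ℱ.mono (by omega))).measurable

theorem Supermartingale.ae_mul_exp_neg_mul_le_condExp [IsFiniteMeasure μ]
    (hX : Supermartingale X ℱ μ) {n : ℕ} {c t δ : ℝ} (hXn : ∀ᵐ ω ∂μ, 0 ≤ X n ω)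
    (hdiff : ∀ᵐ ω ∂μ, |X (n + 1) ω - X n ω| ≤ c)
    (hLBCAD : ∀ᵐ ω ∂μ, 0 < X n ω → δ ≤ μ[fun ω' => |X (n + 1) ω' - X n ω'| | ℱ n] ω)
    (ht : 0 ≤ t) (hδ : 0 ≤ δ)
    (hε : Real.exp (c * t) - (1 + c * t + (c * t) ^ 2 / 2) ≤ δ ^ 2 / 4 * t ^ 2) :
    ∀ᵐ ω ∂μ, 0 < X n ω →
      (1 + δ ^ 2 / 4 * t ^ 2) * Real.exp (-t * X n ω) ≤
        μ[fun ω => Real.exp (-t * X (n + 1) ω) | ℱ n] ω := by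
  set D : Ω → ℝ := fun ω => X (n + 1) ω - X n ω
  have hD : Integrable D μ := (hX.integrable _).sub (hX.integrable _)
  have hexp_split : (fun ω => Real.exp (-t * X (n + 1) ω)) =
      (fun ω => Real.exp (-t * X n ω)) * fun ω => Real.exp (-t * D ω) := by
    ext ω; simp only [D, Pi.mul_apply, ← Real.exp_add]; ring_nf
  have hpull := condExp_stronglyMeasurable_mul_of_bound (ℱ.le n)
    (Real.continuous_exp.comp_stronglyMeasurable ((hX.stronglyAdapted n).const_mul (-t)))
    (integrable_exp_neg_mul_of_abs_le hD.aestronglyMeasurable ht hdiff) 1 <| by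
      filter_upwards [hXn] with ω hω
      rw [Real.norm_eq_abs, Real.abs_exp, Real.exp_le_one_iff]
      nlinarith
  filter_upwards [hpull, ae_le_condExp_exp_neg_mul (ℱ.le n) hD hdiff
    (hX.condExp_sub_nonpos_s4 n.le_succ) ht hδ, hLBCAD] with ω hpullω hincr hLBCADω hpos
  rw [hexp_split, hpullω, Pi.mul_apply]
  have hincrω := hincr (hLBCADω hpos)
  have hexp_pos := Real.exp_pos (-t * X n ω)
  nlinarith

end MeasureTheory

theorem exponential_moment_tail_inequality_general
    {Ω : Type*} {m0 : MeasurableSpace Ω} {μ : Measure Ω} [IsProbabilityMeasure μ]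
    (ℱ : Filtration ℕ m0) (X : ℕ → Ω → ℝ)
    (hsup : Supermartingale X ℱ μ)
    (c : ℝ)
    (hdiff : ∀ n : ℕ, ∀ᵐ ω ∂μ, |X (n + 1) ω - X n ω| ≤ c)
    (x₀ : ℝ) (hX0 : ∀ᵐ ω ∂μ, X 0 ω = x₀)
    (hnonneg : ∀ n ω, 0 ≤ X n ω)
    (δ : ℝ) (hδ : 0 < δ)
    (hLBCAD : ∀ n : ℕ, ∀ᵐ ω ∂μ,
      0 < X n ω → δ ≤ (μ[fun ω' => |X (n + 1) ω' - X n ω'| | ℱ n]) ω) :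
    ∀ t : ℝ, 0 < t →
      Real.exp (c * t) - (1 + c * t + (c * t) ^ 2 / 2) ≤ δ ^ 2 / 4 * t ^ 2 →
      ∀ k : ℕ,
        Real.exp (-t * ∫ ω, X 0 ω ∂μ) ≤
          1 - (1 - ((1 + δ ^ 2 / 4 * t ^ 2) ^ k)⁻¹) *
            (μ {ω | ∀ n < k, 0 < X n ω}).toReal := by
  intro t ht hε k
  have hY1 : ∀ j ω, Real.exp (-t * X j ω) ≤ 1 := fun j ω =>
    Real.exp_le_one_iff.2 (by nlinarith [hnonneg j ω])
  have hY : ∀ j, Integrable (fun ω => Real.exp (-t * X j ω)) μ := fun j =>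
    integrable_exp_of_ae_le
      (((hsup.stronglyMeasurable j).mono (ℱ.le j)).aestronglyMeasurable.const_mul _)
      (ae_of_all _ fun ω => Real.exp_le_one_iff.1 (hY1 j ω))
  have hA : ∀ j i, j ≤ i + 1 → MeasurableSet[ℱ i] {ω | ∀ n < j, 0 < X n ω} := fun j i =>
    hsup.stronglyAdapted.measurableSet_forall_lt_pos
  have hY0 : ∫ ω, Real.exp (-t * X 0 ω) ∂μ = Real.exp (-t * ∫ ω, X 0 ω ∂μ) := by
    have hX0' : X 0 =ᵐ[μ] fun _ => x₀ := hX0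
    rw [integral_congr_ae hX0', integral_congr_ae (g := fun _ => Real.exp (-t * x₀))
      (hX0.mono fun ω hω => by rw [hω])]
    simp
  rw [← hY0]
  refine integral_le_one_sub_mul_measureReal_of_setIntegral_growth (by nlinarith) hY
    (fun j => ae_of_all _ (hY1 j)) (fun j => ℱ.le j _ (hA j j (by omega)))
    (fun i j hij ω hω n hn => hω n (by omega)) (fun j => ?_) k
  rw [← integral_const_mul]
  refine setIntegral_le_setIntegral_of_ae_le_condExp (ℱ.le j) (hA _ _ le_rfl) ((hY j).const_mul _)
    (hY (j + 1)) ?_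
  filter_upwards [hsup.ae_mul_exp_neg_mul_le_condExp (ae_of_all _ (hnonneg j)) (hdiff j) (hLBCAD j)
    ht.le hδ.le hε] with ω hstep hω using hstep (hω j j.lt_succ_self)

/-- **Key inequality relating the exponential moment and the non-termination tail.**
`e^{−t·E(X₀)} ≤ 1 − (1 − (1 + (δ²/4)·t²)^{−k}) · P(Z_Γ ≥ k)`, where
`P(Z_Γ ≥ k) = μ {ω | ∀ n < k, 0 < X n ω}`. -/
theorem exponential_moment_tail_inequality
    {Ω : Type*} {m0 : MeasurableSpace Ω} {μ : Measure Ω} [IsProbabilityMeasure μ]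
    (ℱ : Filtration ℕ m0) (X : ℕ → Ω → ℝ)
    (hsup : Supermartingale X ℱ μ)
    (c : ℝ) (hc : 0 < c)
    (hdiff : ∀ n : ℕ, ∀ᵐ ω ∂μ, |X (n + 1) ω - X n ω| ≤ c)
    (x₀ : ℝ) (hx₀pos : 0 < x₀) (hX0 : ∀ᵐ ω ∂μ, X 0 ω = x₀)
    (hnonneg : ∀ n ω, 0 ≤ X n ω)
    (habsorb : ∀ n ω, X n ω = 0 → X (n + 1) ω = 0)
    (δ : ℝ) (hδ : 0 < δ)
    (hLBCAD : ∀ n : ℕ, ∀ᵐ ω ∂μ,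
      0 < X n ω → δ ≤ (μ[fun ω' => |X (n + 1) ω' - X n ω'| | ℱ n]) ω) :
    ∀ t : ℝ, 0 < t →
      Real.exp (c * t) - (1 + c * t + (c * t) ^ 2 / 2) ≤ δ ^ 2 / 4 * t ^ 2 →
      ∀ k : ℕ,
        Real.exp (-t * ∫ ω, X 0 ω ∂μ) ≤
          1 - (1 - ((1 + δ ^ 2 / 4 * t ^ 2) ^ k)⁻¹) *
            (μ {ω | ∀ n < k, 0 < X n ω}).toReal :=
  exponential_moment_tail_inequality_general ℱ X hsup c hdiff x₀ hX0 hnonneg δ hδ hLBCAD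
end

section
/- Let Γ = {X_n}_{n∈ℕ₀} be a supermartingale (not necessarily difference-bounded) adapted to a filtration {F_n}_{n∈ℕ₀} such that (1) X_0 is an almost-surely constant random variable, (2) for all n and all ω one has X_n(ω) ≥ 0, and X_n(ω) = 0 implies X_{n+1}(ω) = 0, and (3) Γ satisfies the LBCAD condition with some parameter δ ∈ (0,∞). Then P(Z_Γ < ∞) = 1 and P(Z_Γ ≥ k) ∈ O(k^{−1/6}), i.e., there exist C > 0 and K ∈ ℕ such that P(Z_Γ ≥ k) ≤ C·k^{−1/6} for all k ≥ K. -/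
/-!
Cap the process at a level `b`: `Y = min X b` is a supermartingale with values in `[0, b]`, and
since `y ↦ y (2b - y)` is concave, `∑ⱼ E[(Yⱼ₊₁ - Yⱼ)²] ≤ 2b E[X₀]`. While `0 < Xⱼ < b`, the LBCAD
condition gives `E|Xⱼ₊₁ - Xⱼ| ≥ δ`, and `Xⱼ₊₁ - Xⱼ` differs from `Yⱼ₊₁ - Yⱼ` only by the overshoot
`(Xⱼ₊₁ - b)⁺`, whose total expectation over such steps is at most `E[X₀]`. With
`|t| ≤ t² / (2δ) + δ / 2`, the expected number of steps with `0 < Xⱼ < b` is `O(b)`, while each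
step with `Xⱼ ≥ b` has probability at most `E[X₀] / b` by Markov's inequality. Hence
`P(Z ≥ k) = O(b / k + 1 / b)`, which is `O(k^{-1/2})` for `b = √k`; letting `k → ∞` gives
termination almost surely.
-/

open MeasureTheory ProbabilityTheory Filter Finset

theorem abs_le_sq_div_add_half {δ : ℝ} (hδ : 0 < δ) (t : ℝ) : |t| ≤ t ^ 2 / (2 * δ) + δ / 2 := by
  have := two_mul_le_add_sq |t| δ
  rw [sq_abs] at this
  rw [div_add_div _ _ (by positivity) two_ne_zero, le_div_iff₀ (by positivity)]
  nlinarith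

theorem abs_sub_le_sq_min_sub_min_div_add_half {x y b δ : ℝ} (hδ : 0 < δ) (hx : x < b) :
    |y - x| ≤ (min y b - min x b) ^ 2 / (2 * δ) + δ / 2 + (y - min y b) := by
  rw [min_eq_left hx.le]
  calc |y - x| ≤ |y - min y b| + |min y b - x| := abs_sub_le _ _ _
    _ ≤ _ := by
      rw [abs_of_nonneg (sub_nonneg.2 (min_le_left y b))]
      linarith [abs_le_sq_div_add_half hδ (min y b - x)]

namespace MeasureTheory

theorem mul_measureReal_le_setIntegral_of_le_condExp {Ω : Type*}
    {m m0 : MeasurableSpace Ω} {μ : Measure Ω} [IsFiniteMeasure μ] (hm : m ≤ m0) {f : Ω → ℝ}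
    (hf : Integrable f μ) {s : Set Ω} (hs : MeasurableSet[m] s) {δ : ℝ}
    (hδ : ∀ᵐ ω ∂μ, ω ∈ s → δ ≤ μ[f | m] ω) :
    δ * μ.real s ≤ ∫ ω in s, f ω ∂μ := by
  rw [← setIntegral_condExp hm hf hs, mul_comm, ← smul_eq_mul, ← setIntegral_const]
  exact setIntegral_mono_on_ae (integrable_const δ).integrableOn integrable_condExp.integrableOn
    (hm s hs) hδ

def LBCAD {Ω : Type*} {m0 : MeasurableSpace Ω} (X : ℕ → Ω → ℝ) (ℱ : Filtration ℕ m0)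
    (μ : Measure Ω) (δ : ℝ) : Prop :=
  ∀ n, ∀ᵐ ω ∂μ, 0 < X n ω → δ ≤ (μ[fun ω' => |X (n + 1) ω' - X n ω'| | ℱ n]) ω

namespace Supermartingale

variable {Ω : Type*} {m0 : MeasurableSpace Ω} {μ : Measure Ω} [IsFiniteMeasure μ]
  {ℱ : Filtration ℕ m0} {X : ℕ → Ω → ℝ}

theorem min_const (hX : Supermartingale X ℱ μ) (b : ℝ) :
    Supermartingale (fun n ω => min (X n ω) b) ℱ μ := by
  have hmin : (fun n ω => min (X n ω) b) = -(-X ⊔ fun _ _ => -b) := by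
    funext n ω
    simp [max_neg_neg]
  rw [hmin]
  exact (hX.neg.sup (martingale_const ℱ μ (-b)).submartingale).neg

theorem integral_le_integral_zero (hX : Supermartingale X ℱ μ) (n : ℕ) :
    ∫ ω, X n ω ∂μ ≤ ∫ ω, X 0 ω ∂μ := by
  simpa using hX.setIntegral_le (Nat.zero_le n) MeasurableSet.univ

theorem integrable_sq_sub {b : ℝ} (hX : Supermartingale X ℱ μ) (h0 : ∀ n ω, 0 ≤ X n ω)
    (hb : ∀ n ω, X n ω ≤ b) (n : ℕ) : Integrable (fun ω => (X (n + 1) ω - X n ω) ^ 2) μ := by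
  refine .of_bound (((hX.integrable _).sub (hX.integrable _)).aestronglyMeasurable.pow 2) (b ^ 2)
    (ae_of_all _ fun ω => ?_)
  rw [Real.norm_eq_abs, abs_pow]
  exact pow_le_pow_left₀ (abs_nonneg _) (abs_sub_le_iff.2
    ⟨by linarith [h0 n ω, hb (n + 1) ω], by linarith [h0 (n + 1) ω, hb n ω]⟩) 2

theorem integral_sum_sq_sub_le {b : ℝ} (hX : Supermartingale X ℱ μ) (h0 : ∀ n ω, 0 ≤ X n ω)
    (hb : ∀ n ω, X n ω ≤ b) (k : ℕ) :
    ∑ j ∈ range k, ∫ ω, (X (j + 1) ω - X j ω) ^ 2 ∂μ ≤ 2 * b * ∫ ω, X 0 ω ∂μ := by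
  -- `(ΔX)² = ψ(Xⱼ) - ψ(Xⱼ₊₁) - 2 (b - Xⱼ)(Xⱼ - Xⱼ₊₁)` for `ψ y = y (2b - y)`, and the last terms
  -- add up to a submartingale transform `M` of `-X` started at `0`
  set M : ℕ → Ω → ℝ := fun n => ∑ j ∈ range n, (fun ω => b - X j ω) * ((-X) (j + 1) - (-X) j)
  have hM : Submartingale M ℱ μ :=
    hX.neg.sum_mul_sub (fun n => stronglyMeasurable_const.sub (hX.stronglyMeasurable n))
      (fun n ω => sub_le_self b (h0 n ω)) (fun n ω => sub_nonneg.2 (hb n ω))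
  have hM0 : 0 ≤ ∫ ω, M k ω ∂μ := by
    simpa [M] using hM.setIntegral_le (Nat.zero_le k) MeasurableSet.univ
  have hψ : ∀ n ω, ∑ j ∈ range n, (X (j + 1) ω - X j ω) ^ 2 + X n ω * (2 * b - X n ω)
      + 2 * M n ω = X 0 ω * (2 * b - X 0 ω) := by
    intro n ω
    induction n with
    | zero => simp [M]
    | succ n ih =>
      simp only [M, sum_range_succ, Finset.sum_apply, Pi.mul_apply, Pi.sub_apply,
        Pi.neg_apply] at ih ⊢
      linear_combination ih
  have hpt : ∀ ω, ∑ j ∈ range k, (X (j + 1) ω - X j ω) ^ 2 ≤ 2 * b * X 0 ω - 2 * M k ω := by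
    intro ω
    nlinarith [hψ k ω, h0 k ω, hb k ω, h0 0 ω]
  rw [← integral_finsetSum _ fun j _ => integrable_sq_sub hX h0 hb j]
  calc _ ≤ ∫ ω, (2 * b * X 0 ω - 2 * M k ω) ∂μ :=
        integral_mono (integrable_finsetSum _ fun j _ => integrable_sq_sub hX h0 hb j)
          (((hX.integrable 0).const_mul _).sub ((hM.integrable k).const_mul 2)) hpt
    _ ≤ 2 * b * ∫ ω, X 0 ω ∂μ := by
        rw [integral_sub ((hX.integrable 0).const_mul _) ((hM.integrable k).const_mul 2),
          integral_const_mul, integral_const_mul]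
        linarith

theorem setIntegral_sub_min_le (hX : Supermartingale X ℱ μ) (b : ℝ) (j : ℕ) :
    ∫ ω in {ω | X j ω < b}, (X (j + 1) ω - min (X (j + 1) ω) b) ∂μ ≤
      ∫ ω, min (X j ω) b ∂μ - ∫ ω, min (X (j + 1) ω) b ∂μ := by
  set L := {ω | X j ω < b}
  have hLj : MeasurableSet[ℱ j] L :=
    measurableSet_lt (hX.stronglyMeasurable j).measurable measurable_const
  have hL : MeasurableSet L := ℱ.le j _ hLj
  have hY := hX.min_const b
  have hΔX : Integrable (fun ω => X (j + 1) ω - X j ω) μ :=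
    (hX.integrable _).sub (hX.integrable _)
  have hΔY : Integrable (fun ω => min (X j ω) b - min (X (j + 1) ω) b) μ :=
    (hY.integrable _).sub (hY.integrable _)
  -- on `L` the overshoot is `ΔX - ΔY`; off `L` the capped process can only decrease
  have hpt : ∀ ω, L.indicator (fun ω => X (j + 1) ω - min (X (j + 1) ω) b) ω ≤
      L.indicator (fun ω => X (j + 1) ω - X j ω) ω + (min (X j ω) b - min (X (j + 1) ω) b) := by
    intro ω
    by_cases hω : ω ∈ L
    · have : X j ω < b := hω
      simp only [Set.indicator_of_mem hω, min_eq_left this.le]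
      linarith
    · have : b ≤ X j ω := not_lt.1 hω
      simp only [Set.indicator_of_notMem hω, min_eq_right this]
      linarith [min_le_right (X (j + 1) ω) b]
  have hΔXL : ∫ ω in L, (X (j + 1) ω - X j ω) ∂μ ≤ 0 := by
    rw [integral_sub (hX.integrable _).integrableOn (hX.integrable _).integrableOn]
    linarith [hX.setIntegral_le (Nat.le_succ j) hLj]
  rw [← integral_indicator hL]
  calc _ ≤ ∫ ω, (L.indicator (fun ω => X (j + 1) ω - X j ω) ω
          + (min (X j ω) b - min (X (j + 1) ω) b)) ∂μ :=
        integral_mono (((hX.integrable _).sub (hY.integrable _)).indicator hL)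
          ((hΔX.indicator hL).add hΔY) hpt
    _ ≤ _ := by
        rw [integral_add (hΔX.indicator hL) hΔY, integral_indicator hL,
          integral_sub (hY.integrable _) (hY.integrable _)]
        linarith

theorem half_mul_measureReal_pos_lt_le (hX : Supermartingale X ℱ μ) (hnonneg : ∀ n ω, 0 ≤ X n ω)
    {δ : ℝ} (hδ : 0 < δ) {b : ℝ} (hb : 0 ≤ b) (j : ℕ) (hLBCAD : LBCAD X ℱ μ δ) :
    δ / 2 * μ.real {ω | 0 < X j ω ∧ X j ω < b} ≤
      (∫ ω, (min (X (j + 1) ω) b - min (X j ω) b) ^ 2 ∂μ) / (2 * δ) +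
        ∫ ω in {ω | X j ω < b}, (X (j + 1) ω - min (X (j + 1) ω) b) ∂μ := by
  set S := {ω | 0 < X j ω ∧ X j ω < b}
  set L := {ω | X j ω < b}
  have hXj := (hX.stronglyMeasurable j).measurable
  have hSj : MeasurableSet[ℱ j] S :=
    (measurableSet_lt measurable_const hXj).inter (measurableSet_lt hXj measurable_const)
  have hS : MeasurableSet S := ℱ.le j _ hSj
  have hL : MeasurableSet L := ℱ.le j _ (measurableSet_lt hXj measurable_const)
  have hY := hX.min_const b
  have hΔY : Integrable (fun ω => (min (X (j + 1) ω) b - min (X j ω) b) ^ 2 / (2 * δ)) μ :=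
    (hY.integrable_sq_sub (fun n ω => le_min (hnonneg n ω) hb) (fun n ω => min_le_right _ _)
      j).div_const _
  have hV : Integrable (fun ω => X (j + 1) ω - min (X (j + 1) ω) b) μ :=
    (hX.integrable _).sub (hY.integrable _)
  have hδS : Integrable (S.indicator fun _ => δ / 2) μ := (integrable_const _).indicator hS
  have hΔYδS : Integrable (fun ω => (min (X (j + 1) ω) b - min (X j ω) b) ^ 2 / (2 * δ) +
      S.indicator (fun _ => δ / 2) ω) μ := hΔY.add hδS
  have hpt : ∀ ω, S.indicator (fun ω => |X (j + 1) ω - X j ω|) ω ≤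
      (min (X (j + 1) ω) b - min (X j ω) b) ^ 2 / (2 * δ) + S.indicator (fun _ => δ / 2) ω +
        L.indicator (fun ω => X (j + 1) ω - min (X (j + 1) ω) b) ω := by
    intro ω
    by_cases hω : ω ∈ S
    · simp only [Set.indicator_of_mem hω, Set.indicator_of_mem (show ω ∈ L from hω.2)]
      exact abs_sub_le_sq_min_sub_min_div_add_half hδ hω.2
    · simp only [Set.indicator_of_notMem hω, add_zero]
      exact add_nonneg (by positivity)
        (Set.indicator_nonneg (fun ω _ => sub_nonneg.2 (min_le_left _ _)) ω)
  have key : δ * μ.real S ≤ (∫ ω, (min (X (j + 1) ω) b - min (X j ω) b) ^ 2 ∂μ) / (2 * δ)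
      + δ / 2 * μ.real S + ∫ ω in L, (X (j + 1) ω - min (X (j + 1) ω) b) ∂μ :=
    calc δ * μ.real S ≤ ∫ ω in S, |X (j + 1) ω - X j ω| ∂μ :=
          mul_measureReal_le_setIntegral_of_le_condExp (ℱ.le j)
            ((hX.integrable _).sub (hX.integrable _)).abs hSj
            (by filter_upwards [hLBCAD j] with ω h hω using h hω.1)
      _ = ∫ ω, S.indicator (fun ω => |X (j + 1) ω - X j ω|) ω ∂μ := (integral_indicator hS).symm
      _ ≤ ∫ ω, ((min (X (j + 1) ω) b - min (X j ω) b) ^ 2 / (2 * δ) +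
            S.indicator (fun _ => δ / 2) ω +
            L.indicator (fun ω => X (j + 1) ω - min (X (j + 1) ω) b) ω) ∂μ :=
          integral_mono (((hX.integrable _).sub (hX.integrable _)).abs.indicator hS)
            (hΔYδS.add (hV.indicator hL)) hpt
      _ = _ := by
          rw [integral_add hΔYδS (hV.indicator hL), integral_add hΔY hδS,
            integral_indicator hS, integral_indicator hL, setIntegral_const, integral_div,
            smul_eq_mul, mul_comm (μ.real S)]
  linarith

theorem sum_measureReal_pos_lt_le (hX : Supermartingale X ℱ μ) (hnonneg : ∀ n ω, 0 ≤ X n ω)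
    {δ : ℝ} (hδ : 0 < δ) {b : ℝ} (hb : 0 ≤ b) (hLBCAD : LBCAD X ℱ μ δ) (k : ℕ) :
    ∑ j ∈ range k, μ.real {ω | 0 < X j ω ∧ X j ω < b} ≤
      2 * (b / δ + 1) / δ * ∫ ω, X 0 ω ∂μ := by
  have hY := hX.min_const b
  have hY0 : ∫ ω, min (X 0 ω) b ∂μ ≤ ∫ ω, X 0 ω ∂μ :=
    integral_mono (hY.integrable 0) (hX.integrable 0) fun ω => min_le_left _ _
  have hYk : 0 ≤ ∫ ω, min (X k ω) b ∂μ := integral_nonneg fun ω => le_min (hnonneg k ω) hb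
  have hQV := hY.integral_sum_sq_sub_le (fun n ω => le_min (hnonneg n ω) hb)
    (fun n ω => min_le_right _ _) k
  have hover : ∑ j ∈ range k, ∫ ω in {ω | X j ω < b}, (X (j + 1) ω - min (X (j + 1) ω) b) ∂μ ≤
      ∫ ω, min (X 0 ω) b ∂μ - ∫ ω, min (X k ω) b ∂μ :=
    (sum_le_sum fun j _ => hX.setIntegral_sub_min_le b j).trans_eq
      (sum_range_sub' (fun j => ∫ ω, min (X j ω) b ∂μ) k)
  have hstep := sum_le_sum fun j (_ : j ∈ range k) =>
    hX.half_mul_measureReal_pos_lt_le hnonneg hδ hb j hLBCAD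
  rw [← mul_sum, sum_add_distrib, ← sum_div] at hstep
  have hQV' : (∑ j ∈ range k, ∫ ω, (min (X (j + 1) ω) b - min (X j ω) b) ^ 2 ∂μ) / (2 * δ) ≤
      b * (∫ ω, X 0 ω ∂μ) / δ := by
    rw [div_le_div_iff₀ (by positivity) hδ]
    nlinarith [mul_le_mul_of_nonneg_left hY0 hb]
  calc ∑ j ∈ range k, μ.real {ω | 0 < X j ω ∧ X j ω < b}
      = (δ / 2 * ∑ j ∈ range k, μ.real {ω | 0 < X j ω ∧ X j ω < b}) * (2 / δ) := by
        field_simp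
    _ ≤ (b * (∫ ω, X 0 ω ∂μ) / δ + ∫ ω, X 0 ω ∂μ) * (2 / δ) := by
        gcongr
        linarith
    _ = 2 * (b / δ + 1) / δ * ∫ ω, X 0 ω ∂μ := by ring

theorem mul_measureReal_forall_pos_le (hX : Supermartingale X ℱ μ)
    (hnonneg : ∀ n ω, 0 ≤ X n ω) {δ : ℝ} (hδ : 0 < δ) {b : ℝ} (hb : 0 < b)
    (hLBCAD : LBCAD X ℱ μ δ) (k : ℕ) :
    k * μ.real {ω | ∀ n < k, 0 < X n ω} ≤
      2 * (b / δ + 1) / δ * (∫ ω, X 0 ω ∂μ) + k * ((∫ ω, X 0 ω ∂μ) / b) := by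
  have hT : ∀ j, μ.real {ω | b ≤ X j ω} ≤ (∫ ω, X 0 ω ∂μ) / b := fun j => by
    rw [le_div_iff₀ hb, mul_comm]
    exact (mul_meas_ge_le_integral_of_nonneg (ae_of_all _ (hnonneg j)) (hX.integrable j) b).trans
      (hX.integral_le_integral_zero j)
  have hA : ∀ j ∈ range k, μ.real {ω | ∀ n < k, 0 < X n ω} ≤
      μ.real {ω | 0 < X j ω ∧ X j ω < b} + μ.real {ω | b ≤ X j ω} := fun j hj => by
    refine (measureReal_mono fun ω hω => ?_).trans (measureReal_union_le _ _)
    have hpos := hω j (mem_range.1 hj)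
    by_cases hωb : X j ω < b
    · exact Or.inl ⟨hpos, hωb⟩
    · exact Or.inr (not_lt.1 hωb)
  calc k * μ.real {ω | ∀ n < k, 0 < X n ω}
      = ∑ j ∈ range k, μ.real {ω | ∀ n < k, 0 < X n ω} := by simp
    _ ≤ ∑ j ∈ range k, μ.real {ω | 0 < X j ω ∧ X j ω < b} +
          ∑ j ∈ range k, μ.real {ω | b ≤ X j ω} := (sum_le_sum hA).trans_eq sum_add_distrib
    _ ≤ _ := by
        gcongr
        · exact hX.sum_measureReal_pos_lt_le hnonneg hδ hb.le hLBCAD k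
        · exact (sum_le_sum fun j _ => hT j).trans_eq (by simp)

theorem measureReal_forall_pos_le_div_sqrt (hX : Supermartingale X ℱ μ)
    (hnonneg : ∀ n ω, 0 ≤ X n ω) {δ : ℝ} (hδ : 0 < δ)
    (hLBCAD : LBCAD X ℱ μ δ) {k : ℕ} (hk : 1 ≤ k) :
    μ.real {ω | ∀ n < k, 0 < X n ω} ≤ (1 + 2 / δ + 2 / δ ^ 2) * (∫ ω, X 0 ω ∂μ) / √k := by
  have h := hX.mul_measureReal_forall_pos_le hnonneg hδ (b := √(k : ℝ)) (by positivity) hLBCAD k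
  set m := ∫ ω, X 0 ω ∂μ
  set p := μ.real {ω | ∀ n < k, 0 < X n ω}
  set s := √(k : ℝ)
  have hm : 0 ≤ m := integral_nonneg (hnonneg 0)
  have hs : 1 ≤ s := Real.one_le_sqrt.2 (by exact_mod_cast hk)
  have hsk : s ^ 2 = k := Real.sq_sqrt (Nat.cast_nonneg k)
  rw [← hsk] at h
  rw [le_div_iff₀ (by positivity)]
  refine le_of_mul_le_mul_left ?_ (by positivity : 0 < s)
  calc s * (p * s) = s ^ 2 * p := by ring
    _ ≤ _ := h
    _ = s * (2 / δ ^ 2 * m + m) + 2 / δ * m := by field_simp; ring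
    _ ≤ s * (2 / δ ^ 2 * m + m) + s * (2 / δ * m) :=
        (add_le_add_iff_left _).2 (le_mul_of_one_le_left (by positivity) hs)
    _ = s * ((1 + 2 / δ + 2 / δ ^ 2) * m) := by ring

theorem measure_forall_pos_eq_zero (hX : Supermartingale X ℱ μ) (hnonneg : ∀ n ω, 0 ≤ X n ω)
    {δ : ℝ} (hδ : 0 < δ) (hLBCAD : LBCAD X ℱ μ δ) :
    μ {ω | ∀ n, 0 < X n ω} = 0 := by
  set C := (1 + 2 / δ + 2 / δ ^ 2) * ∫ ω, X 0 ω ∂μ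
  have hlim : Tendsto (fun k : ℕ => C / √(k : ℝ)) atTop (nhds 0) :=
    tendsto_const_nhds.div_atTop (Real.tendsto_sqrt_atTop.comp tendsto_natCast_atTop_atTop)
  have hle : μ.real {ω | ∀ n, 0 < X n ω} ≤ 0 :=
    ge_of_tendsto hlim (eventually_atTop.2 ⟨1, fun k hk =>
      (measureReal_mono (s₁ := {ω | ∀ n, 0 < X n ω}) (s₂ := {ω | ∀ n < k, 0 < X n ω})
        fun ω hω n _ => hω n).trans
          (hX.measureReal_forall_pos_le_div_sqrt hnonneg hδ hLBCAD hk)⟩)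
  exact (measureReal_eq_zero_iff).1 (le_antisymm hle measureReal_nonneg)

end Supermartingale

end MeasureTheory

theorem general_supermartingale_as_termination_general
    {Ω : Type*} {m0 : MeasurableSpace Ω} {μ : Measure Ω} [IsProbabilityMeasure μ]
    (ℱ : Filtration ℕ m0) (X : ℕ → Ω → ℝ)
    (hsup : Supermartingale X ℱ μ)
    (hnonneg : ∀ n ω, 0 ≤ X n ω)
    (δ : ℝ) (hδ : 0 < δ)
    (hLBCAD : ∀ n : ℕ, ∀ᵐ ω ∂μ,
      0 < X n ω → δ ≤ (μ[fun ω' => |X (n + 1) ω' - X n ω'| | ℱ n]) ω) :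
    μ {ω | ∃ n : ℕ, X n ω ≤ 0} = 1 ∧
      ∃ C > (0 : ℝ), ∃ K : ℕ, ∀ k : ℕ, K ≤ k →
        (μ {ω | ∀ n < k, 0 < X n ω}).toReal ≤ C * (k : ℝ) ^ (-(1 / 6) : ℝ) := by
  set C₀ := (1 + 2 / δ + 2 / δ ^ 2) * ∫ ω, X 0 ω ∂μ
  have hC₀ : 0 ≤ C₀ := mul_nonneg (by positivity) (integral_nonneg (hnonneg 0))
  refine ⟨?_, C₀ + 1, by positivity, 1, fun k hk => ?_⟩
  · have hmeas : MeasurableSet {ω | ∃ n : ℕ, X n ω ≤ 0} := by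
      simp only [Set.ofPred_exists]
      exact .iUnion fun n =>
        measurableSet_le ((hsup.stronglyMeasurable n).mono (ℱ.le n)).measurable measurable_const
    rw [← prob_compl_eq_zero_iff hmeas]
    simpa [Set.compl_ofPred] using hsup.measure_forall_pos_eq_zero hnonneg hδ hLBCAD
  · have hk' : (1 : ℝ) ≤ k := by exact_mod_cast hk
    have hsqrt : (√(k : ℝ))⁻¹ ≤ (k : ℝ) ^ (-(1 / 6) : ℝ) := by
      rw [Real.sqrt_eq_rpow, ← Real.rpow_neg (Nat.cast_nonneg k)]
      exact Real.rpow_le_rpow_of_exponent_le hk' (by norm_num)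
    calc (μ {ω | ∀ n < k, 0 < X n ω}).toReal ≤ C₀ / √(k : ℝ) :=
          hsup.measureReal_forall_pos_le_div_sqrt hnonneg hδ hLBCAD hk
      _ ≤ (C₀ + 1) * (k : ℝ) ^ (-(1 / 6) : ℝ) := by
          rw [div_eq_mul_inv]
          gcongr
          linarith

/-- **General (not necessarily difference-bounded) supermartingales terminate a.s.
with `O(k^{−1/6})` tail bound.**
`P(Z_Γ < ∞) = μ {ω | ∃ n, X n ω ≤ 0}` and `P(Z_Γ ≥ k) = μ {ω | ∀ n < k, 0 < X n ω}`. -/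
theorem general_supermartingale_as_termination
    {Ω : Type*} {m0 : MeasurableSpace Ω} {μ : Measure Ω} [IsProbabilityMeasure μ]
    (ℱ : Filtration ℕ m0) (X : ℕ → Ω → ℝ)
    (hsup : Supermartingale X ℱ μ)
    (x₀ : ℝ) (hX0 : ∀ᵐ ω ∂μ, X 0 ω = x₀)
    (hnonneg : ∀ n ω, 0 ≤ X n ω)
    (habsorb : ∀ n ω, X n ω = 0 → X (n + 1) ω = 0)
    (δ : ℝ) (hδ : 0 < δ)
    (hLBCAD : ∀ n : ℕ, ∀ᵐ ω ∂μ,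
      0 < X n ω → δ ≤ (μ[fun ω' => |X (n + 1) ω' - X n ω'| | ℱ n]) ω) :
    μ {ω | ∃ n : ℕ, X n ω ≤ 0} = 1 ∧
      ∃ C > (0 : ℝ), ∃ K : ℕ, ∀ k : ℕ, K ≤ k →
        (μ {ω | ∀ n < k, 0 < X n ω}).toReal ≤ C * (k : ℝ) ^ (-(1 / 6) : ℝ) :=
  general_supermartingale_as_termination_general ℱ X hsup hnonneg δ hδ hLBCAD
end

section
/- Let Γ = {X_n}_{n∈ℕ₀} be a supermartingale adapted to a filtration {F_n}_{n∈ℕ₀} such that X_0 is a.s. constant with X_0 > 0, for all n and ω one has X_n(ω) ≥ 0 and X_n(ω) = 0 implies X_{n+1}(ω) = 0, and Γ satisfies the LBCAD condition with parameter δ ∈ (0,∞). Fix c ∈ (0,1) with Σ_{j=3}^∞ c^{j−2}/j! ≤ δ²/16. Then there exists a constant C > 0 (depending only on E(X_0) and δ) such that for every sufficiently large M > E(X_0), the stopping time R_M defined by R_M(ω) := min{n : X_n(ω) ≤ 0 or X_n(ω) ≥ M} (min ∅ := ∞) satisfies P(R_M < ∞) = 1 and P(R_M ≥ k) ≤ C/√k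 for all natural numbers k ≥ M⁶/c². -/
/-!
Cap the process at `M`: `Y n = min (X n) M` is again a supermartingale, with values in `[0, M]`.
Since `M - Y n ≥ 0` is `ℱ n`-measurable, `E[(M - Y n)(Y (n+1) - Y n)] ≤ 0`, so the energy
`E[Y n ^ 2] - 2 M E[Y n]` grows at least by `E[(Y (n+1) - Y n) ^ 2]` per step.
Where `0 < X n`, LBCAD together with `E[X (n+1) - X n | ℱ n] ≤ 0` gives
`E[(X (n+1) - X n)⁻ | ℱ n] ≥ δ / 2`, and while `X n ≤ M` the cap does not shrink the downward
part of an increment. With `t ^ 2 ≥ δ t - δ ^ 2 / 4`, each step therefore adds at least `δ² / 4`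
times the probability that `X` has stayed in `(0, M)` so far. As the energy lives in
`[-2M², M²]`, this gives `k · P(R_M ≥ k) ≤ 12 M² / δ²`, hence both `R_M < ∞` a.s. and, once
`M² ≤ √k`, the `C / √k` tail.
-/

open MeasureTheory ProbabilityTheory

theorem negPart_sub_le_abs_min_sub_min {a b M : ℝ} (ha : a ≤ M) :
    (b - a)⁻ ≤ |min b M - min a M| := by
  rcases le_total b a with hba | hab
  · rw [min_eq_left (hba.trans ha), min_eq_left ha, negPart_eq_neg.mpr (sub_nonpos.mpr hba)]
    exact neg_le_abs _
  · rw [negPart_eq_zero.mpr (sub_nonneg.mpr hab)]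
    exact abs_nonneg _

theorem natCast_mul_le_sub_of_add_le_succ {F p : ℕ → ℝ} (hp : Antitone p)
    (hF : ∀ n, F n + p (n + 1) ≤ F (n + 1)) (k : ℕ) : k * p k ≤ F k - F 0 := by
  induction k with
  | zero => simp
  | succ k ih =>
    have hmono : (k : ℝ) * p (k + 1) ≤ k * p k :=
      mul_le_mul_of_nonneg_left (hp k.le_succ) k.cast_nonneg
    push_cast
    linarith [hF k]

theorem sq_le_sqrt_of_pow_six_div_sq_le {M c x : ℝ} (hM : 1 ≤ M) (hc0 : 0 < c) (hc1 : c ≤ 1)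
    (hx : M ^ 6 / c ^ 2 ≤ x) : M ^ 2 ≤ √x := by
  refine Real.le_sqrt_of_sq_le ?_
  calc (M ^ 2) ^ 2 ≤ M ^ 6 := by
        rw [← pow_mul]; exact pow_le_pow_right₀ hM (by norm_num)
    _ ≤ M ^ 6 / c ^ 2 := le_div_self (by positivity) (by positivity) (pow_le_one₀ hc0.le hc1)
    _ ≤ x := hx

namespace MeasureTheory

section

variable {Ω : Type*} {m0 : MeasurableSpace Ω} {μ : Measure Ω} [IsFiniteMeasure μ]

theorem integrable_sq_of_abs_le {f : Ω → ℝ} (hf : AEStronglyMeasurable f μ) {C : ℝ}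
    (hfC : ∀ ω, |f ω| ≤ C) : Integrable (fun ω => f ω ^ 2) μ :=
  ((MemLp.of_bound hf C (ae_of_all _ hfC)).mono_exponent le_top).integrable_sq

theorem sq_mul_measureReal_le_integral_sq {f h : Ω → ℝ} {A : Set Ω} {a : ℝ} (ha : 0 ≤ a)
    (hA : MeasurableSet A) (hh : Integrable h μ) (hf : Integrable (fun ω => f ω ^ 2) μ)
    (hhf : ∀ ω ∈ A, h ω ≤ |f ω|) (hmean : a * μ.real A ≤ ∫ ω in A, h ω ∂μ) :
    a ^ 2 * μ.real A ≤ ∫ ω, f ω ^ 2 ∂μ := by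
  have hconst : IntegrableOn (fun _ => a ^ 2) A μ := integrableOn_const (measure_ne_top μ A)
  calc a ^ 2 * μ.real A ≤ 2 * a * ∫ ω in A, h ω ∂μ - a ^ 2 * μ.real A := by nlinarith
    _ = ∫ ω in A, (2 * a * h ω - a ^ 2) ∂μ := by
        rw [integral_sub (hh.integrableOn.const_mul _) hconst, integral_const_mul,
          setIntegral_const, smul_eq_mul, mul_comm (μ.real A)]
    _ ≤ ∫ ω in A, f ω ^ 2 ∂μ := by
        refine setIntegral_mono_on ((hh.integrableOn.const_mul _).sub hconst) hf.integrableOn hA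
          fun ω hω => ?_
        -- tangent line of `t ↦ t ^ 2` at `t = a`
        nlinarith [sq_nonneg (|f ω| - a), sq_abs (f ω), mul_le_mul_of_nonneg_left (hhf ω hω) ha]
    _ ≤ ∫ ω, f ω ^ 2 ∂μ := setIntegral_le_integral hf (ae_of_all _ fun ω => sq_nonneg _)

variable {ι : Type*} [Preorder ι] {ℱ : Filtration ι m0}

theorem Supermartingale.min_const_s8 {X : ι → Ω → ℝ} (hX : Supermartingale X ℱ μ) (M : ℝ) :
    Supermartingale (fun i ω => min (X i ω) M) ℱ μ := by
  have hint : ∀ i, Integrable (fun ω => min (X i ω) M) μ :=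
    fun i => (hX.integrable i).inf (integrable_const M)
  refine ⟨fun i => (continuous_id.min continuous_const).comp_stronglyMeasurable
    (hX.stronglyAdapted i), fun i j hij => ?_, hint⟩
  have hle_X : μ[fun ω => min (X j ω) M | ℱ i] ≤ᵐ[μ] μ[X j | ℱ i] :=
    condExp_mono (hint j) (hX.integrable j) (ae_of_all _ fun ω => min_le_left _ _)
  have hle_M : μ[fun ω => min (X j ω) M | ℱ i] ≤ᵐ[μ] fun _ => M := by
    simpa only [condExp_const (ℱ.le i)] using
      condExp_mono (m := ℱ i) (hint j) (integrable_const M) (ae_of_all _ fun ω => min_le_right _ _)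
  filter_upwards [hle_X, hle_M, hX.condExp_ae_le hij] with ω h₁ h₂ h₃ using le_min (h₁.trans h₃) h₂

theorem Supermartingale.integral_mul_sub_nonpos_s8 {Y : ι → Ω → ℝ} (hY : Supermartingale Y ℱ μ)
    {i j : ι} (hij : i ≤ j) {H : Ω → ℝ} (hH : StronglyMeasurable[ℱ i] H) {C : ℝ}
    (hH0 : ∀ ω, 0 ≤ H ω) (hHC : ∀ ω, H ω ≤ C) :
    ∫ ω, H ω * (Y j ω - Y i ω) ∂μ ≤ 0 := by
  have hHm : AEStronglyMeasurable H μ := (hH.mono (ℱ.le i)).aestronglyMeasurable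
  have hHb : ∀ᵐ ω ∂μ, ‖H ω‖ ≤ C := ae_of_all _ fun ω => by
    rw [Real.norm_of_nonneg (hH0 ω)]; exact hHC ω
  have hHY : ∀ k, Integrable (fun ω => H ω * Y k ω) μ :=
    fun k => (hY.integrable k).bdd_mul hHm hHb
  have hHcond : Integrable (fun ω => H ω * (μ[Y j | ℱ i]) ω) μ :=
    integrable_condExp.bdd_mul hHm hHb
  have hpull : ∫ ω, H ω * Y j ω ∂μ = ∫ ω, H ω * (μ[Y j | ℱ i]) ω ∂μ := by
    rw [← integral_condExp (ℱ.le i)]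
    exact integral_congr_ae (condExp_mul_of_stronglyMeasurable_left hH (hHY j) (hY.integrable j))
  calc ∫ ω, H ω * (Y j ω - Y i ω) ∂μ
      = ∫ ω, H ω * ((μ[Y j | ℱ i]) ω - Y i ω) ∂μ := by
        simp only [mul_sub]
        rw [integral_sub (hHY j) (hHY i), integral_sub hHcond (hHY i), hpull]
    _ ≤ 0 := integral_nonpos_of_ae <| by
        filter_upwards [hY.condExp_ae_le hij] with ω hω
        exact mul_nonpos_of_nonneg_of_nonpos (hH0 ω) (sub_nonpos.mpr hω)

theorem Supermartingale.integral_sq_add_le {Y : ι → Ω → ℝ} (hY : Supermartingale Y ℱ μ) {M : ℝ}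
    (hY0 : ∀ i ω, 0 ≤ Y i ω) (hYM : ∀ i ω, Y i ω ≤ M) {i j : ι} (hij : i ≤ j) :
    ∫ ω, Y i ω ^ 2 ∂μ + 2 * M * (∫ ω, Y j ω ∂μ - ∫ ω, Y i ω ∂μ) + ∫ ω, (Y j ω - Y i ω) ^ 2 ∂μ
      ≤ ∫ ω, Y j ω ^ 2 ∂μ := by
  have hD : Integrable (fun ω => Y j ω - Y i ω) μ := (hY.integrable j).sub (hY.integrable i)
  have hD_sq : Integrable (fun ω => (Y j ω - Y i ω) ^ 2) μ :=
    integrable_sq_of_abs_le hD.aestronglyMeasurable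
      fun ω => abs_sub_le_of_nonneg_of_le (hY0 j ω) (hYM j ω) (hY0 i ω) (hYM i ω)
  have hY_sq : Integrable (fun ω => Y i ω ^ 2) μ :=
    integrable_sq_of_abs_le (hY.integrable i).aestronglyMeasurable
      fun ω => abs_le.mpr ⟨by linarith [hY0 i ω, hYM i ω], hYM i ω⟩
  have hHD : Integrable (fun ω => (M - Y i ω) * (Y j ω - Y i ω)) μ :=
    hD.bdd_mul ((integrable_const M).sub (hY.integrable i)).aestronglyMeasurable
      (ae_of_all _ fun ω => abs_le.mpr ⟨by linarith [hY0 i ω, hYM i ω], by linarith [hY0 i ω]⟩)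
  have hcross : ∫ ω, (M - Y i ω) * (Y j ω - Y i ω) ∂μ ≤ 0 :=
    hY.integral_mul_sub_nonpos_s8 hij (stronglyMeasurable_const.sub (hY.stronglyAdapted i))
      (fun ω => sub_nonneg.mpr (hYM i ω)) (fun ω => sub_le_self M (hY0 i ω))
  have hexpand : ∫ ω, Y j ω ^ 2 ∂μ = ∫ ω, Y i ω ^ 2 ∂μ + 2 * M * ∫ ω, (Y j ω - Y i ω) ∂μ
      + ∫ ω, (Y j ω - Y i ω) ^ 2 ∂μ - 2 * ∫ ω, (M - Y i ω) * (Y j ω - Y i ω) ∂μ := by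
    calc ∫ ω, Y j ω ^ 2 ∂μ
        = ∫ ω, Y i ω ^ 2 + 2 * M * (Y j ω - Y i ω) + (Y j ω - Y i ω) ^ 2
            - 2 * ((M - Y i ω) * (Y j ω - Y i ω)) ∂μ :=
          integral_congr_ae (ae_of_all _ fun ω => by ring)
      _ = _ := by
        rw [integral_sub ?_ (hHD.const_mul 2), integral_add ?_ hD_sq,
          integral_add hY_sq (hD.const_mul _), integral_const_mul, integral_const_mul]
        · exact hY_sq.add (hD.const_mul _)
        · exact (hY_sq.add (hD.const_mul _)).add hD_sq
  rw [hexpand, integral_sub (hY.integrable j) (hY.integrable i)]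
  linarith

theorem Supermartingale.mul_measureReal_le_setIntegral_negPart {X : ι → Ω → ℝ}
    (hX : Supermartingale X ℱ μ) {i j : ι} (hij : i ≤ j) {A : Set Ω} (hA : MeasurableSet[ℱ i] A)
    {δ : ℝ} (hδ : ∀ᵐ ω ∂μ, ω ∈ A → δ ≤ (μ[fun ω' => |X j ω' - X i ω'| | ℱ i]) ω) :
    δ * μ.real A ≤ 2 * ∫ ω in A, (X j ω - X i ω)⁻ ∂μ := by
  have hΔ : Integrable (fun ω => X j ω - X i ω) μ := (hX.integrable j).sub (hX.integrable i)
  have hA' : MeasurableSet A := ℱ.le i A hA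
  have hdrift : ∫ ω in A, (X j ω - X i ω) ∂μ ≤ 0 := by
    rw [integral_sub (hX.integrable j).integrableOn (hX.integrable i).integrableOn]
    exact sub_nonpos.mpr (hX.setIntegral_le hij hA)
  calc δ * μ.real A = ∫ ω in A, δ ∂μ := by rw [setIntegral_const, smul_eq_mul, mul_comm]
    _ ≤ ∫ ω in A, (μ[fun ω' => |X j ω' - X i ω'| | ℱ i]) ω ∂μ :=
        setIntegral_mono_on_ae (integrableOn_const (measure_ne_top μ A))
          integrable_condExp.integrableOn hA' hδ
    _ = ∫ ω in A, |X j ω - X i ω| ∂μ := setIntegral_condExp (ℱ.le i) hΔ.abs hA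
    _ ≤ ∫ ω in A, |X j ω - X i ω| ∂μ - ∫ ω in A, (X j ω - X i ω) ∂μ := by linarith
    _ = ∫ ω in A, 2 * (X j ω - X i ω)⁻ ∂μ := by
        rw [← integral_sub hΔ.abs.integrableOn hΔ.integrableOn]
        refine integral_congr_ae (ae_of_all _ fun ω => ?_)
        linarith [negPart_add_posPart (X j ω - X i ω), posPart_sub_negPart (X j ω - X i ω)]
    _ = 2 * ∫ ω in A, (X j ω - X i ω)⁻ ∂μ := integral_const_mul _ _

end

variable {Ω : Type*} {m0 : MeasurableSpace Ω} {ℱ : Filtration ℕ m0}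

theorem StronglyAdapted.measurableSet_forall_lt_succ_mem {X : ℕ → Ω → ℝ}
    (hX : StronglyAdapted ℱ X) {S : Set ℝ} (hS : MeasurableSet S) (n : ℕ) :
    MeasurableSet[ℱ n] {ω | ∀ m < n + 1, X m ω ∈ S} := by
  simp_rw [Set.ofPred_forall]
  exact .iInter fun m => .iInter fun hm =>
    ((hX m).mono (ℱ.mono (Nat.lt_succ_iff.mp hm))).measurable hS

theorem Supermartingale.sq_mul_measureReal_le_integral_sq_min_sub_min {μ : Measure Ω}
    [IsFiniteMeasure μ] {X : ℕ → Ω → ℝ} (hX : Supermartingale X ℱ μ) (hX0 : ∀ n ω, 0 ≤ X n ω)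
    {δ M : ℝ} (hδ : 0 ≤ δ) (hM : 0 ≤ M) {n : ℕ}
    (hLBCAD : ∀ᵐ ω ∂μ, 0 < X n ω → δ ≤ (μ[fun ω' => |X (n + 1) ω' - X n ω'| | ℱ n]) ω)
    {A : Set Ω} (hA : MeasurableSet[ℱ n] A) (hAX : ∀ ω ∈ A, 0 < X n ω ∧ X n ω ≤ M) :
    (δ / 2) ^ 2 * μ.real A ≤ ∫ ω, (min (X (n + 1) ω) M - min (X n ω) M) ^ 2 ∂μ := by
  have hmean := hX.mul_measureReal_le_setIntegral_negPart n.le_succ hA (δ := δ) <| by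
    filter_upwards [hLBCAD] with ω h hω using h (hAX ω hω).1
  have hdown : Integrable (fun ω => (X (n + 1) ω - X n ω)⁻) μ :=
    ((hX.integrable (n + 1)).sub (hX.integrable n)).neg_part
  have hY := hX.min_const_s8 M
  have hD_sq : Integrable (fun ω => (min (X (n + 1) ω) M - min (X n ω) M) ^ 2) μ :=
    integrable_sq_of_abs_le ((hY.integrable _).sub (hY.integrable n)).aestronglyMeasurable
      fun ω => abs_sub_le_of_nonneg_of_le (le_min (hX0 _ ω) hM) (min_le_right _ _)
        (le_min (hX0 n ω) hM) (min_le_right _ _)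
  exact sq_mul_measureReal_le_integral_sq (by positivity) (ℱ.le n _ hA) hdown hD_sq
    (fun ω hω => negPart_sub_le_abs_min_sub_min (hAX ω hω).2) (by linarith)

theorem Supermartingale.natCast_mul_measureReal_survival_le {μ : Measure Ω}
    [IsProbabilityMeasure μ] {X : ℕ → Ω → ℝ} (hX : Supermartingale X ℱ μ)
    (hX0 : ∀ n ω, 0 ≤ X n ω) {δ : ℝ} (hδ : 0 ≤ δ)
    (hLBCAD : ∀ n : ℕ, ∀ᵐ ω ∂μ,
      0 < X n ω → δ ≤ (μ[fun ω' => |X (n + 1) ω' - X n ω'| | ℱ n]) ω)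
    {M : ℝ} (hM : 0 ≤ M) (k : ℕ) :
    (δ / 2) ^ 2 * (k * μ.real {ω | ∀ n < k, 0 < X n ω ∧ X n ω < M}) ≤ 3 * M ^ 2 := by
  set E : ℕ → Set Ω := fun k => {ω | ∀ n < k, 0 < X n ω ∧ X n ω < M}
  set Y : ℕ → Ω → ℝ := fun n ω => min (X n ω) M
  have hY : Supermartingale Y ℱ μ := hX.min_const_s8 M
  have hY0 : ∀ n ω, 0 ≤ Y n ω := fun n ω => le_min (hX0 n ω) hM
  have hYM : ∀ n ω, Y n ω ≤ M := fun n ω => min_le_right _ _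
  have hincr : ∀ n, (δ / 2) ^ 2 * μ.real (E (n + 1)) ≤ ∫ ω, (Y (n + 1) ω - Y n ω) ^ 2 ∂μ :=
    fun n => hX.sq_mul_measureReal_le_integral_sq_min_sub_min hX0 hδ hM (hLBCAD n)
      (hX.stronglyAdapted.measurableSet_forall_lt_succ_mem measurableSet_Ioo n)
      fun ω hω => ⟨(hω n n.lt_succ_self).1, (hω n n.lt_succ_self).2.le⟩
  have henergy : ∀ n, (∫ ω, Y n ω ^ 2 ∂μ - 2 * M * ∫ ω, Y n ω ∂μ) + (δ / 2) ^ 2 * μ.real (E (n + 1))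
      ≤ ∫ ω, Y (n + 1) ω ^ 2 ∂μ - 2 * M * ∫ ω, Y (n + 1) ω ∂μ := fun n => by
    linarith [hY.integral_sq_add_le hY0 hYM n.le_succ, hincr n]
  have hsurvival_anti : Antitone fun n => (δ / 2) ^ 2 * μ.real (E n) := fun i j hij =>
    mul_le_mul_of_nonneg_left (measureReal_mono fun ω hω n hn => hω n (hn.trans_le hij))
      (by positivity)
  have htele := natCast_mul_le_sub_of_add_le_succ hsurvival_anti henergy k
  have hsq_le : ∫ ω, Y k ω ^ 2 ∂μ ≤ M ^ 2 := by
    simpa using integral_mono (integrable_sq_of_abs_le (hY.integrable k).aestronglyMeasurable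
      fun ω => abs_le.mpr ⟨by linarith [hY0 k ω, hYM k ω], hYM k ω⟩) (integrable_const (M ^ 2))
      fun ω => pow_le_pow_left₀ (hY0 k ω) (hYM k ω) 2
  have hsq_nonneg : 0 ≤ ∫ ω, Y 0 ω ^ 2 ∂μ := integral_nonneg fun ω => sq_nonneg _
  have hint_nonneg : 0 ≤ ∫ ω, Y k ω ∂μ := integral_nonneg (hY0 k)
  have hint_le : ∫ ω, Y 0 ω ∂μ ≤ M := by
    simpa using integral_mono (hY.integrable 0) (integrable_const M) (hYM 0)
  nlinarith

theorem measure_eq_one_of_natCast_mul_measureReal_le {μ : Measure Ω} [IsProbabilityMeasure μ]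
    {s : Set Ω} {E : ℕ → Set Ω} {K : ℝ} (hsE : ∀ k, sᶜ ⊆ E k) (hE : ∀ k : ℕ, k * μ.real (E k) ≤ K) :
    μ s = 1 := by
  have hle : ∀ k : ℕ, 1 ≤ k → μ.real sᶜ ≤ K / k := fun k hk => by
    rw [le_div_iff₀ (by exact_mod_cast hk), mul_comm]
    exact (mul_le_mul_of_nonneg_left (measureReal_mono (hsE k)) k.cast_nonneg).trans (hE k)
  have hnull : μ.real sᶜ = 0 := le_antisymm
    (ge_of_tendsto (tendsto_const_div_atTop_nhds_zero_nat K) (Filter.eventually_atTop.mpr ⟨1, hle⟩))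
    measureReal_nonneg
  rw [measure_congr (ae_eq_univ.mpr ((measureReal_eq_zero_iff).mp hnull)), measure_univ]

end MeasureTheory

theorem exit_time_tail_bound_general
    {Ω : Type*} {m0 : MeasurableSpace Ω} {μ : Measure Ω} [IsProbabilityMeasure μ]
    (ℱ : Filtration ℕ m0) (X : ℕ → Ω → ℝ)
    (hsup : Supermartingale X ℱ μ)
    (hnonneg : ∀ n ω, 0 ≤ X n ω)
    (δ : ℝ) (hδ : 0 < δ)
    (hLBCAD : ∀ n : ℕ, ∀ᵐ ω ∂μ,
      0 < X n ω → δ ≤ (μ[fun ω' => |X (n + 1) ω' - X n ω'| | ℱ n]) ω)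
    (c : ℝ) (hc : c ∈ Set.Ioo (0 : ℝ) 1) :
    ∃ C > (0 : ℝ), ∃ M₀ : ℝ, ∀ M : ℝ, M₀ ≤ M → (∫ ω, X 0 ω ∂μ) < M →
      μ {ω | ∃ n : ℕ, X n ω ≤ 0 ∨ M ≤ X n ω} = 1 ∧
        ∀ k : ℕ, M ^ 6 / c ^ 2 ≤ (k : ℝ) →
          (μ {ω | ∀ n < k, 0 < X n ω ∧ X n ω < M}).toReal ≤ C / Real.sqrt k := by
  refine ⟨12 / δ ^ 2, by positivity, 1, fun M hM _ => ?_⟩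
  have hsurvival : ∀ k : ℕ,
      k * μ.real {ω | ∀ n < k, 0 < X n ω ∧ X n ω < M} ≤ 12 / δ ^ 2 * M ^ 2 := fun k => by
    rw [div_mul_eq_mul_div, le_div_iff₀ (by positivity : (0 : ℝ) < δ ^ 2)]
    linarith [hsup.natCast_mul_measureReal_survival_le hnonneg hδ.le hLBCAD
      (zero_le_one.trans hM) k]
  have hexit : ∀ k : ℕ, {ω | ∃ n : ℕ, X n ω ≤ 0 ∨ M ≤ X n ω}ᶜ
      ⊆ {ω | ∀ n < k, 0 < X n ω ∧ X n ω < M} := fun k ω hω n _ => by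
    have hstay := not_exists.mp hω n
    push Not at hstay
    exact hstay
  refine ⟨measure_eq_one_of_natCast_mul_measureReal_le hexit hsurvival, fun k hk => ?_⟩
  have hMk : M ^ 2 ≤ √k := sq_le_sqrt_of_pow_six_div_sq_le hM hc.1 hc.2.le hk
  have hsqrt : 0 < √(k : ℝ) := (pow_pos (by linarith) 2).trans_le hMk
  rw [le_div_iff₀ hsqrt]
  refine le_of_mul_le_mul_right ?_ hsqrt
  calc (μ {ω | ∀ n < k, 0 < X n ω ∧ X n ω < M}).toReal * √k * √k
      = k * μ.real {ω | ∀ n < k, 0 < X n ω ∧ X n ω < M} := by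
        rw [mul_assoc, Real.mul_self_sqrt k.cast_nonneg, measureReal_def, mul_comm]
    _ ≤ 12 / δ ^ 2 * M ^ 2 := hsurvival k
    _ ≤ 12 / δ ^ 2 * √k := by gcongr

/-- **The two-sided exit time `R_M` of a LBCAD supermartingale is a.s. finite,
with a `C/√k` tail bound for `k ≥ M⁶/c²`.**
`R_M(ω) = min {n | X n ω ≤ 0 ∨ X n ω ≥ M}`; hence
`P(R_M < ∞) = μ {ω | ∃ n, X n ω ≤ 0 ∨ M ≤ X n ω}` and
`P(R_M ≥ k) = μ {ω | ∀ n < k, 0 < X n ω ∧ X n ω < M}`.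
The sum `Σ_{j=3}^∞ c^{j−2}/j!` is written as `Σ'_{i:ℕ} c^{i+1}/(i+3)!`. -/
theorem exit_time_tail_bound
    {Ω : Type*} {m0 : MeasurableSpace Ω} {μ : Measure Ω} [IsProbabilityMeasure μ]
    (ℱ : Filtration ℕ m0) (X : ℕ → Ω → ℝ)
    (hsup : Supermartingale X ℱ μ)
    (x₀ : ℝ) (hx₀pos : 0 < x₀) (hX0 : ∀ᵐ ω ∂μ, X 0 ω = x₀)
    (hnonneg : ∀ n ω, 0 ≤ X n ω)
    (habsorb : ∀ n ω, X n ω = 0 → X (n + 1) ω = 0)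
    (δ : ℝ) (hδ : 0 < δ)
    (hLBCAD : ∀ n : ℕ, ∀ᵐ ω ∂μ,
      0 < X n ω → δ ≤ (μ[fun ω' => |X (n + 1) ω' - X n ω'| | ℱ n]) ω)
    (c : ℝ) (hc : c ∈ Set.Ioo (0 : ℝ) 1)
    (hcsum : ∑' i : ℕ, c ^ (i + 1) / (Nat.factorial (i + 3) : ℝ) ≤ δ ^ 2 / 16) :
    ∃ C > (0 : ℝ), ∃ M₀ : ℝ, ∀ M : ℝ, M₀ ≤ M → (∫ ω, X 0 ω ∂μ) < M →
      μ {ω | ∃ n : ℕ, X n ω ≤ 0 ∨ M ≤ X n ω} = 1 ∧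
        ∀ k : ℕ, M ^ 6 / c ^ 2 ≤ (k : ℝ) →
          (μ {ω | ∀ n < k, 0 < X n ω ∧ X n ω < M}).toReal ≤ C / Real.sqrt k :=
  exit_time_tail_bound_general ℱ X hsup hnonneg δ hδ hLBCAD c hc
end

section
/- Let Γ = {X_n}_{n∈ℕ₀} be a supermartingale adapted to a filtration {F_n}_{n∈ℕ₀} such that X_0 is a.s. constant with X_0 > 0, for all n and ω one has X_n(ω) ≥ 0 and X_n(ω) = 0 implies X_{n+1}(ω) = 0, and Γ satisfies the LBCAD condition with parameter δ ∈ (0,∞). Then there exist constants C > 0, c ∈ (0,1) and K ∈ ℕ such that for all natural numbers k ≥ K, P(Z_Γ ≥ k) ≤ C/√k + E(X_0)/(c²·k)^{1/6}. -/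
/-!
Truncate at a level `a > 0`: `Z = min X a` is a supermartingale with values in `[0, a]`, so
`E (a - Z n)²` grows at each step by at least `E (Z (n+1) - Z n)²`. A supermartingale moves down
by at least half its expected absolute increment, the truncation does not shorten downward moves
started in `(0, a]`, and so on `{0 < X n ≤ a}` the LBCAD condition makes that growth at least
`(δ/2)²`. As `E (a - Z k)² ≤ a²`, the expected number of steps spent in `(0, a]` is at most
`a² / (δ/2)²`. Surviving `k` steps thus requires either reaching level `a`, which has probability
at most `E X₀ / a` by optional stopping, or `k` steps in `(0, a]`, which has probability at most
`a² / ((δ/2)² k)`. The choice `a ≍ k^{1/6}` gives the bound.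
-/

open MeasureTheory ProbabilityTheory

section

variable {Ω : Type*} {m0 : MeasurableSpace Ω} {μ : Measure Ω}

namespace MeasureTheory

section

variable {ι : Type*} [Preorder ι] {ℱ : Filtration ι m0}

theorem Supermartingale.inf {f g : ι → Ω → ℝ} (hf : Supermartingale f ℱ μ)
    (hg : Supermartingale g ℱ μ) : Supermartingale (f ⊓ g) ℱ μ := by
  simpa [neg_sup] using (hf.neg.sup hg.neg).neg

theorem Supermartingale.integral_mul_sub_nonneg [IsFiniteMeasure μ] {f : ι → Ω → ℝ}
    (hf : Supermartingale f ℱ μ) {i j : ι} (hij : i ≤ j)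
    {g : Ω → ℝ} (hg : StronglyMeasurable[ℱ i] g) (hg0 : 0 ≤ g)
    (hint : Integrable (g * (f i - f j)) μ) :
    0 ≤ ∫ ω, (g * (f i - f j)) ω ∂μ := by
  have hsub : 0 ≤ᵐ[μ] μ[f i - f j | ℱ i] := by
    simpa [neg_add_eq_sub] using hf.neg.condExp_sub_nonneg hij
  rw [← integral_condExp (ℱ.le i),
    integral_congr_ae (condExp_mul_of_stronglyMeasurable_left hg hint
      ((hf.integrable i).sub (hf.integrable j)))]
  exact integral_nonneg_of_ae <| hsub.mono fun ω hω => mul_nonneg (hg0 ω) hω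

theorem Supermartingale.integral_sq_add_integral_sq_le [IsFiniteMeasure μ] {Z : ι → Ω → ℝ}
    (hZ : Supermartingale Z ℱ μ) {a : ℝ} (hZ0 : ∀ n ω, 0 ≤ Z n ω) (hZa : ∀ n ω, Z n ω ≤ a)
    {i j : ι} (hij : i ≤ j) :
    ∫ ω, (a - Z i ω) ^ 2 ∂μ + ∫ ω, (Z j ω - Z i ω) ^ 2 ∂μ ≤ ∫ ω, (a - Z j ω) ^ 2 ∂μ := by
  have hm : ∀ n, Measurable (Z n) := fun n =>
    (hZ.stronglyMeasurable n).measurable.mono (ℱ.le n) le_rfl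
  have hbdd : ∀ {F : Ω → ℝ}, Measurable F → (∀ ω, |F ω| ≤ a ^ 2) → Integrable F μ :=
    fun hF hb => .of_bound hF.aestronglyMeasurable _ (ae_of_all _ hb)
  have hint_cross : Integrable (fun ω => (a - Z i ω) * (Z i ω - Z j ω)) μ :=
    hbdd (by fun_prop) fun ω => by
      have := hZ0 i ω; have := hZ0 j ω; have := hZa i ω; have := hZa j ω
      rw [abs_le]; constructor <;> nlinarith
  have hint_sq : ∀ {F : Ω → ℝ}, Measurable F → (∀ ω, F ω ∈ Set.Icc (-a) a) →
      Integrable (fun ω => F ω ^ 2) μ := fun hF hb =>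
    hbdd (by fun_prop) fun ω => by
      rw [abs_of_nonneg (sq_nonneg _)]; exact sq_le_sq' (hb ω).1 (hb ω).2
  have hcross : 0 ≤ ∫ ω, (a - Z i ω) * (Z i ω - Z j ω) ∂μ :=
    hZ.integral_mul_sub_nonneg hij
      ((measurable_const.sub (hZ.stronglyMeasurable i).measurable).stronglyMeasurable)
      (fun ω => sub_nonneg.2 (hZa i ω)) hint_cross
  calc ∫ ω, (a - Z i ω) ^ 2 ∂μ + ∫ ω, (Z j ω - Z i ω) ^ 2 ∂μ
      ≤ ∫ ω, (a - Z i ω) ^ 2 ∂μ + ∫ ω, (Z j ω - Z i ω) ^ 2 ∂μ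
          + 2 * ∫ ω, (a - Z i ω) * (Z i ω - Z j ω) ∂μ := by linarith
    _ = ∫ ω, ((a - Z i ω) ^ 2 + (Z j ω - Z i ω) ^ 2
          + 2 * ((a - Z i ω) * (Z i ω - Z j ω))) ∂μ := by
        have hsq_i : Integrable (fun ω => (a - Z i ω) ^ 2) μ := hint_sq (by fun_prop) fun ω =>
          ⟨by linarith [hZ0 i ω, hZa i ω], by linarith [hZ0 i ω, hZa i ω]⟩
        have hsq_ji : Integrable (fun ω => (Z j ω - Z i ω) ^ 2) μ := hint_sq (by fun_prop) fun ω =>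
          ⟨by linarith [hZa i ω, hZ0 j ω], by linarith [hZ0 i ω, hZa j ω]⟩
        rw [← integral_const_mul, ← integral_add hsq_i hsq_ji]
        exact (integral_add (hsq_i.add hsq_ji) (hint_cross.const_mul 2)).symm
    _ = ∫ ω, (a - Z j ω) ^ 2 ∂μ := integral_congr_ae (ae_of_all _ fun ω => by ring)

theorem Supermartingale.ae_condExp_abs_sub_le_two_mul_condExp_posPart {X : ι → Ω → ℝ}
    (hX : Supermartingale X ℱ μ) {i j : ι} (hij : i ≤ j) :
    ∀ᵐ ω ∂μ, μ[fun ω => |X j ω - X i ω| | ℱ i] ω ≤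
      2 * μ[fun ω => (X i ω - X j ω)⁺ | ℱ i] ω := by
  have hint : Integrable (fun ω => X i ω - X j ω) μ := (hX.integrable i).sub (hX.integrable j)
  have hdrift : 0 ≤ᵐ[μ] μ[fun ω => X i ω - X j ω | ℱ i] := by
    have h := hX.neg.condExp_sub_nonneg hij
    rwa [show (-X) j - (-X) i = fun ω => X i ω - X j ω by
      funext ω; simp [neg_add_eq_sub]] at h
  have hpos : Integrable (fun ω => (X i ω - X j ω)⁺) μ := hint.pos_part
  have hsplit : (fun ω => |X j ω - X i ω|) + (fun ω => X i ω - X j ω) =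
      (fun ω => (X i ω - X j ω)⁺) + (fun ω => (X i ω - X j ω)⁺) := by
    ext ω
    simp only [Pi.add_apply, abs_sub_comm (X j ω), abs_add_eq_two_nsmul_posPart, two_nsmul]
  filter_upwards [condExp_add (hint.abs.congr (ae_of_all _ fun ω => abs_sub_comm _ _)) hint (ℱ i),
    condExp_add hpos hpos (ℱ i), hdrift] with ω h₁ h₂ h₃
  rw [hsplit] at h₁
  simp only [Pi.add_apply, Pi.zero_apply] at h₁ h₂ h₃
  linarith

end

theorem Supermartingale.maximal_ineq [IsFiniteMeasure μ] {ℱ : Filtration ℕ m0}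
    {X : ℕ → Ω → ℝ} (hX : Supermartingale X ℱ μ) (hnonneg : ∀ n ω, 0 ≤ X n ω) (a : ℝ) (k : ℕ) :
    a * μ.real {ω | ∃ n ≤ k, a ≤ X n ω} ≤ ∫ ω, X 0 ω ∂μ := by
  set τ : Ω → ℕ∞ := fun ω => (hittingBtwn X (Set.Ici a) 0 k ω : ℕ)
  have hτ : IsStoppingTime ℱ τ :=
    hX.stronglyAdapted.adapted.isStoppingTime_hittingBtwn measurableSet_Ici
  have hτk : ∀ ω, τ ω ≤ k := fun ω => WithTop.coe_le_coe.2 (hittingBtwn_le ω)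
  have hint : Integrable (stoppedValue X τ) μ := integrable_stoppedValue ℕ hτ hX.integrable hτk
  have hmeas : MeasurableSet {ω | ∃ n ≤ k, a ≤ X n ω} := by
    simp only [Set.ofPred_exists]
    exact .iUnion fun n => (MeasurableSet.const (n ≤ k)).inter <|
      measurableSet_le measurable_const ((hX.stronglyMeasurable n).measurable.mono (ℱ.le n) le_rfl)
  have hstop : ∫ ω, stoppedValue X τ ω ∂μ ≤ ∫ ω, X 0 ω ∂μ := by
    have := hX.neg.expected_stoppedValue_mono (isStoppingTime_const ℱ 0) hτ
      (fun ω => bot_le) hτk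
    simpa [stoppedValue, integral_neg] using this
  calc a * μ.real {ω | ∃ n ≤ k, a ≤ X n ω}
      ≤ ∫ ω in {ω | ∃ n ≤ k, a ≤ X n ω}, stoppedValue X τ ω ∂μ :=
        setIntegral_ge_of_const_le_real hmeas (measure_ne_top _ _)
          (fun ω ⟨n, hn, h⟩ => stoppedValue_hittingBtwn_mem ⟨n, ⟨Nat.zero_le _, hn⟩, h⟩)
          hint.integrableOn
    _ ≤ ∫ ω, stoppedValue X τ ω ∂μ :=
        setIntegral_le_integral hint (ae_of_all _ fun ω => hnonneg _ _)
    _ ≤ ∫ ω, X 0 ω ∂μ := hstop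

theorem mul_measureReal_le_setIntegral_of_ae_le_condExp {m : MeasurableSpace Ω} (hm : m ≤ m0)
    [IsFiniteMeasure μ] {f : Ω → ℝ} (hf : Integrable f μ) {s : Set Ω} (hs : MeasurableSet[m] s)
    {c : ℝ} (hc : ∀ᵐ ω ∂μ, ω ∈ s → c ≤ μ[f | m] ω) :
    c * μ.real s ≤ ∫ ω in s, f ω ∂μ := by
  rw [← setIntegral_condExp hm hf hs, mul_comm, ← smul_eq_mul, ← setIntegral_const]
  exact setIntegral_mono_on_ae (integrableOn_const) integrable_condExp.integrableOn (hm s hs) hc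

end MeasureTheory

theorem posPart_sub_le_abs_min_sub {α : Type*} [AddCommGroup α] [LinearOrder α]
    [IsOrderedAddMonoid α] {x y a : α} (hx : x ≤ a) : (x - y)⁺ ≤ |min y a - min x a| := by
  rw [min_eq_left hx]
  rcases le_total x y with h | h
  · rw [posPart_eq_zero.2 (sub_nonpos.2 h)]
    exact abs_nonneg _
  · rw [min_eq_left (h.trans hx), posPart_eq_self.2 (sub_nonneg.2 h), abs_sub_comm,
      abs_of_nonneg (sub_nonneg.2 h)]

def LBCAD (ℱ : Filtration ℕ m0) (X : ℕ → Ω → ℝ) (μ : Measure Ω) (δ : ℝ) : Prop :=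
  ∀ n, ∀ᵐ ω ∂μ, 0 < X n ω → δ ≤ (μ[fun ω' => |X (n + 1) ω' - X n ω'| | ℱ n]) ω

namespace LBCAD

variable {ℱ : Filtration ℕ m0} {X : ℕ → Ω → ℝ} {δ : ℝ}

theorem half_mul_measureReal_le_setIntegral_posPart [IsFiniteMeasure μ] (hL : LBCAD ℱ X μ δ)
    (hX : Supermartingale X ℱ μ) (n : ℕ) {s : Set Ω} (hs : MeasurableSet[ℱ n] s)
    (hpos : ∀ ω ∈ s, 0 < X n ω) :
    δ / 2 * μ.real s ≤ ∫ ω in s, (X n ω - X (n + 1) ω)⁺ ∂μ := by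
  refine mul_measureReal_le_setIntegral_of_ae_le_condExp (ℱ.le n)
    (f := fun ω => (X n ω - X (n + 1) ω)⁺)
    ((hX.integrable n).sub (hX.integrable (n + 1))).pos_part hs ?_
  filter_upwards [hL n, hX.ae_condExp_abs_sub_le_two_mul_condExp_posPart (n.le_add_right 1)]
    with ω hlb hub hω
  linarith [hlb (hpos ω hω)]

theorem sq_mul_measureReal_le_integral_sq_sub_min [IsFiniteMeasure μ] (hL : LBCAD ℱ X μ δ)
    (hX : Supermartingale X ℱ μ) (hnonneg : ∀ n ω, 0 ≤ X n ω) (hδ : 0 ≤ δ) {a : ℝ} (ha : 0 ≤ a)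
    (n : ℕ) :
    (δ / 2) ^ 2 * μ.real {ω | 0 < X n ω ∧ X n ω ≤ a} ≤
      ∫ ω, (min (X (n + 1) ω) a - min (X n ω) a) ^ 2 ∂μ := by
  set B := {ω | 0 < X n ω ∧ X n ω ≤ a}
  set D : Ω → ℝ := fun ω => min (X (n + 1) ω) a - min (X n ω) a
  have hmF : Measurable[ℱ n] (X n) := (hX.stronglyMeasurable n).measurable
  have hB : MeasurableSet[ℱ n] B :=
    (measurableSet_lt measurable_const hmF).inter (measurableSet_le hmF measurable_const)
  have hm : ∀ k, Measurable (X k) := fun k =>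
    (hX.stronglyMeasurable k).measurable.mono (ℱ.le k) le_rfl
  have hDm : Measurable D := by fun_prop
  have hD : ∀ ω, |D ω| ≤ a := fun ω => abs_le.2
    ⟨by linarith [le_min (hnonneg (n + 1) ω) ha, min_le_right (X n ω) a],
      by linarith [le_min (hnonneg n ω) ha, min_le_right (X (n + 1) ω) a]⟩
  have hD_int : Integrable (fun ω => |D ω|) μ :=
    .of_bound (by fun_prop) a (ae_of_all _ fun ω => by simpa using hD ω)
  have hD2_int : Integrable (fun ω => D ω ^ 2) μ :=
    .of_bound (by fun_prop) (a ^ 2) (ae_of_all _ fun ω => by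
      rw [Real.norm_eq_abs, abs_pow]; exact pow_le_pow_left₀ (abs_nonneg _) (hD ω) 2)
  have hdown : δ / 2 * μ.real B ≤ ∫ ω in B, |D ω| ∂μ :=
    (hL.half_mul_measureReal_le_setIntegral_posPart hX n hB fun ω h => h.1).trans <|
      setIntegral_mono_on ((hX.integrable n).sub (hX.integrable (n + 1))).pos_part.integrableOn
        hD_int.integrableOn (ℱ.le n _ hB) fun ω h => posPart_sub_le_abs_min_sub h.2
  -- `2 c |y| - c² ≤ y²` transfers the first-moment bound `hdown` to the second moment.
  have hlin : ∫ ω in B, (2 * (δ / 2) * |D ω| - (δ / 2) ^ 2) ∂μ ≤ ∫ ω in B, D ω ^ 2 ∂μ :=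
    setIntegral_mono ((hD_int.const_mul _).sub (integrable_const _)).integrableOn
      hD2_int.integrableOn fun ω => by
        nlinarith [two_mul_le_add_sq (δ / 2) |D ω|, sq_abs (D ω)]
  rw [integral_sub (hD_int.const_mul _).integrableOn (integrable_const _).integrableOn,
    integral_const_mul, setIntegral_const, smul_eq_mul] at hlin
  calc (δ / 2) ^ 2 * μ.real B
      = 2 * (δ / 2) * (δ / 2 * μ.real B) - μ.real B * (δ / 2) ^ 2 := by ring
    _ ≤ 2 * (δ / 2) * ∫ ω in B, |D ω| ∂μ - μ.real B * (δ / 2) ^ 2 := by gcongr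
    _ ≤ ∫ ω in B, D ω ^ 2 ∂μ := hlin
    _ ≤ ∫ ω, D ω ^ 2 ∂μ := setIntegral_le_integral hD2_int (ae_of_all _ fun _ => sq_nonneg _)

theorem sq_mul_sum_measureReal_le [IsProbabilityMeasure μ] (hL : LBCAD ℱ X μ δ)
    (hX : Supermartingale X ℱ μ) (hnonneg : ∀ n ω, 0 ≤ X n ω) (hδ : 0 ≤ δ) {a : ℝ} (ha : 0 ≤ a)
    (k : ℕ) :
    (δ / 2) ^ 2 * ∑ n ∈ Finset.range k, μ.real {ω | 0 < X n ω ∧ X n ω ≤ a} ≤ a ^ 2 := by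
  have hZ : Supermartingale (fun n ω => min (X n ω) a) ℱ μ :=
    hX.inf (martingale_const ℱ μ a).supermartingale
  have hZ0 : ∀ n ω, 0 ≤ min (X n ω) a := fun n ω => le_min (hnonneg n ω) ha
  have hZa : ∀ n ω, min (X n ω) a ≤ a := fun n ω => min_le_right _ _
  have htelescope : ∀ m, (δ / 2) ^ 2 * ∑ n ∈ Finset.range m, μ.real {ω | 0 < X n ω ∧ X n ω ≤ a} ≤
      ∫ ω, (a - min (X m ω) a) ^ 2 ∂μ - ∫ ω, (a - min (X 0 ω) a) ^ 2 ∂μ := by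
    intro m
    induction m with
    | zero => simp
    | succ m ih =>
      have henergy := hZ.integral_sq_add_integral_sq_le hZ0 hZa (m.le_add_right 1)
      beta_reduce at henergy
      rw [Finset.sum_range_succ, mul_add]
      linarith [hL.sq_mul_measureReal_le_integral_sq_sub_min hX hnonneg hδ ha m]
  have hk : ∫ ω, (a - min (X k ω) a) ^ 2 ∂μ ≤ a ^ 2 := by
    refine (integral_mono_of_nonneg (ae_of_all _ fun ω => sq_nonneg _) (integrable_const (a ^ 2))
      (ae_of_all _ fun ω => ?_)).trans_eq (by simp)
    nlinarith [hZ0 k ω, hZa k ω]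
  have h0 : 0 ≤ ∫ ω, (a - min (X 0 ω) a) ^ 2 ∂μ := integral_nonneg fun ω => sq_nonneg _
  linarith [htelescope k]

theorem measureReal_forall_lt_pos_le [IsProbabilityMeasure μ] (hL : LBCAD ℱ X μ δ)
    (hX : Supermartingale X ℱ μ) (hnonneg : ∀ n ω, 0 ≤ X n ω) (hδ : 0 < δ) {a : ℝ} (ha : 0 < a)
    {k : ℕ} (hk : 0 < k) :
    μ.real {ω | ∀ n < k, 0 < X n ω} ≤ (∫ ω, X 0 ω ∂μ) / a + a ^ 2 / ((δ / 2) ^ 2 * k) := by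
  set A := {ω | ∀ n < k, 0 < X n ω}
  set D := {ω | ∃ n ≤ k, a ≤ X n ω}
  have hD : μ.real D ≤ (∫ ω, X 0 ω ∂μ) / a := by
    rw [le_div_iff₀' ha]
    exact hX.maximal_ineq hnonneg a k
  have hband : ∀ n ∈ Finset.range k, μ.real (A \ D) ≤ μ.real {ω | 0 < X n ω ∧ X n ω ≤ a} :=
    fun n hn => measureReal_mono fun ω ⟨hA, hD⟩ =>
      ⟨hA n (Finset.mem_range.1 hn), not_lt.1 fun h => hD ⟨n, (Finset.mem_range.1 hn).le, h.le⟩⟩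
  have hAD : μ.real (A \ D) ≤ a ^ 2 / ((δ / 2) ^ 2 * k) := by
    have hcount := Finset.card_nsmul_le_sum _ _ _ hband
    rw [Finset.card_range, nsmul_eq_mul] at hcount
    rw [le_div_iff₀' (by positivity), mul_assoc]
    exact (mul_le_mul_of_nonneg_left hcount (by positivity)).trans
      (hL.sq_mul_sum_measureReal_le hX hnonneg hδ.le ha.le k)
  calc μ.real A ≤ μ.real (A \ D ∪ D) := measureReal_mono (Set.subset_sdiff_union A D)
    _ ≤ μ.real (A \ D) + μ.real D := measureReal_union_le _ _
    _ ≤ (∫ ω, X 0 ω ∂μ) / a + a ^ 2 / ((δ / 2) ^ 2 * k) := by linarith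

end LBCAD

end

/-- `P(Z_Γ ≥ k)` is `μ {ω | ∀ n < k, 0 < X n ω}`. -/
theorem general_supermartingale_tail_bound_general
    {Ω : Type*} {m0 : MeasurableSpace Ω} {μ : Measure Ω} [IsProbabilityMeasure μ]
    (ℱ : Filtration ℕ m0) (X : ℕ → Ω → ℝ)
    (hsup : Supermartingale X ℱ μ)
    (hnonneg : ∀ n ω, 0 ≤ X n ω)
    (δ : ℝ) (hδ : 0 < δ)
    (hLBCAD : ∀ n : ℕ, ∀ᵐ ω ∂μ,
      0 < X n ω → δ ≤ (μ[fun ω' => |X (n + 1) ω' - X n ω'| | ℱ n]) ω) :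
    ∃ C > (0 : ℝ), ∃ c ∈ Set.Ioo (0 : ℝ) 1, ∃ K : ℕ, ∀ k : ℕ, K ≤ k →
      (μ {ω | ∀ n < k, 0 < X n ω}).toReal ≤
        C / Real.sqrt k + (∫ ω, X 0 ω ∂μ) / (c ^ 2 * k) ^ ((1 : ℝ) / 6) := by
  refine ⟨1 / (δ / 2) ^ 2, by positivity, 1 / 2, ⟨by norm_num, by norm_num⟩, 1, fun k hk => ?_⟩
  have hk₁ : (1 : ℝ) ≤ k := by exact_mod_cast hk
  set a := ((1 / 2 : ℝ) ^ 2 * k) ^ ((1 : ℝ) / 6)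
  have ha : 0 < a := by positivity
  have ha_sq : a ^ 2 ≤ Real.sqrt k := by
    calc a ^ 2 = ((1 / 2 : ℝ) ^ 2 * k) ^ ((1 : ℝ) / 3) := by
          rw [← Real.rpow_natCast, ← Real.rpow_mul (by positivity)]; norm_num
      _ ≤ (k : ℝ) ^ ((1 : ℝ) / 3) := by gcongr; nlinarith
      _ ≤ (k : ℝ) ^ ((1 : ℝ) / 2) := Real.rpow_le_rpow_of_exponent_le hk₁ (by norm_num)
      _ = Real.sqrt k := (Real.sqrt_eq_rpow _).symm
  have hsecond : a ^ 2 / ((δ / 2) ^ 2 * k) ≤ 1 / (δ / 2) ^ 2 / Real.sqrt k :=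
    calc a ^ 2 / ((δ / 2) ^ 2 * k) ≤ Real.sqrt k / ((δ / 2) ^ 2 * k) := by gcongr
      _ = 1 / (δ / 2) ^ 2 / Real.sqrt k := by
        field_simp
        rw [Real.sq_sqrt (Nat.cast_nonneg k)]
  calc (μ {ω | ∀ n < k, 0 < X n ω}).toReal
      ≤ (∫ ω, X 0 ω ∂μ) / a + a ^ 2 / ((δ / 2) ^ 2 * k) :=
        LBCAD.measureReal_forall_lt_pos_le hLBCAD hsup hnonneg hδ ha (by omega)
    _ ≤ _ := by linarith

/-- **Tail bound for general LBCAD supermartingales:**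
`P(Z_Γ ≥ k) ≤ C/√k + E(X₀)/(c²·k)^{1/6}` for all large `k`, where
`P(Z_Γ ≥ k) = μ {ω | ∀ n < k, 0 < X n ω}`. -/
theorem general_supermartingale_tail_bound
    {Ω : Type*} {m0 : MeasurableSpace Ω} {μ : Measure Ω} [IsProbabilityMeasure μ]
    (ℱ : Filtration ℕ m0) (X : ℕ → Ω → ℝ)
    (hsup : Supermartingale X ℱ μ)
    (x₀ : ℝ) (hx₀pos : 0 < x₀) (hX0 : ∀ᵐ ω ∂μ, X 0 ω = x₀)
    (hnonneg : ∀ n ω, 0 ≤ X n ω)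
    (habsorb : ∀ n ω, X n ω = 0 → X (n + 1) ω = 0)
    (δ : ℝ) (hδ : 0 < δ)
    (hLBCAD : ∀ n : ℕ, ∀ᵐ ω ∂μ,
      0 < X n ω → δ ≤ (μ[fun ω' => |X (n + 1) ω' - X n ω'| | ℱ n]) ω) :
    ∃ C > (0 : ℝ), ∃ c ∈ Set.Ioo (0 : ℝ) 1, ∃ K : ℕ, ∀ k : ℕ, K ≤ k →
      (μ {ω | ∀ n < k, 0 < X n ω}).toReal ≤
        C / Real.sqrt k + (∫ ω, X 0 ω ∂μ) / (c ^ 2 * k) ^ ((1 : ℝ) / 6) :=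
  general_supermartingale_tail_bound_general ℱ X hsup hnonneg δ hδ hLBCAD
end

section
/- Let {X_n}_{n∈ℕ₀} be a martingale (respectively, supermartingale) adapted to a filtration {F_n}_{n∈ℕ₀}, and let R be a stopping time with respect to {F_n} such that E(R) < ∞. Suppose there exists c ∈ (0,∞) such that for all n ∈ ℕ₀, E[|X_{n+1} − X_n| | F_n] ≤ c almost surely. Then X_R is integrable (E(|X_R|) < ∞) and E(X_R) = E(X_0) (respectively, E(X_R) ≤ E(X_0)). -/
/-!
Stop at the bounded stopping times `R ∧ n`, for which optional stopping gives
`E X_{R∧n} = E X_0` (resp. `≤`), and let `n → ∞` by dominated convergence, using that `R < ∞` a.s.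
Every `X_{R∧n}` is dominated by `|X_0| + ∑_{k<R} |X_{k+1} - X_k|`. Since `{k < R} ∈ F_k`, the
increment `|X_{k+1} - X_k|` may be replaced on that event by its conditional expectation, so the
dominating function has expectation at most `E |X_0| + c ∑_k P(k < R) = E |X_0| + c E R < ∞`.
-/

open MeasureTheory ProbabilityTheory Filter Topology
open scoped ENNReal

theorem ENat.tsum_ite_natCast_lt (r : ℕ∞) :
    ∑' k : ℕ, (if (k : ℕ∞) < r then 1 else 0 : ℝ≥0∞) = r := by
  induction r using ENat.recTopCoe with
  | top => simp
  | coe m =>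
    rw [tsum_eq_sum (s := Finset.range m) (fun k hk => by simpa using hk)]
    simp [Finset.filter_true_of_mem fun k hk => Finset.mem_range.mp hk]

theorem ENat.untopA_eq_toNat {r : ℕ∞} (h : r ≠ ⊤) : r.untopA = r.toNat := by
  lift r to ℕ using h
  simp

section

variable {Ω : Type*} {m0 : MeasurableSpace Ω} {μ : Measure Ω}

theorem lintegral_toENNReal_eq_tsum_measure_lt {R : Ω → ℕ∞} (hR : Measurable R) :
    ∫⁻ ω, (R ω : ℝ≥0∞) ∂μ = ∑' k : ℕ, μ {ω | (k : ℕ∞) < R ω} := by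
  have hmeas (k : ℕ) : MeasurableSet {ω | (k : ℕ∞) < R ω} :=
    hR (.of_discrete : MeasurableSet (Set.Ioi (k : ℕ∞)))
  calc ∫⁻ ω, (R ω : ℝ≥0∞) ∂μ
      = ∫⁻ ω, ∑' k : ℕ, {ω | (k : ℕ∞) < R ω}.indicator 1 ω ∂μ := by
        simp_rw [← ENat.tsum_ite_natCast_lt, Set.indicator_apply]; rfl
    _ = ∑' k : ℕ, μ {ω | (k : ℕ∞) < R ω} := by
        rw [lintegral_tsum fun k => (measurable_one.indicator (hmeas k)).aemeasurable]
        simp [lintegral_indicator_one (hmeas _)]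

theorem MeasureTheory.IsStoppingTime.measurable_enat {ℱ : Filtration ℕ m0} {R : Ω → ℕ∞}
    (hR : IsStoppingTime ℱ R) : Measurable R :=
  measurable_to_countable' fun x => hR.measurable' (measurableSet_singleton (α := WithTop ℕ) x)

theorem ae_ne_top_of_lintegral_toENNReal_lt_top {R : Ω → ℕ∞} (hR : Measurable R)
    (hRfin : ∫⁻ ω, (R ω : ℝ≥0∞) ∂μ < ⊤) : ∀ᵐ ω ∂μ, R ω ≠ ⊤ := by
  filter_upwards [ae_lt_top (Measurable.of_discrete.comp hR) hRfin.ne] with ω hω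
  exact ENat.toENNReal_eq_top.not.mp hω.ne

theorem setLIntegral_enorm_le_of_condExp_norm_le [IsFiniteMeasure μ] {E : Type*}
    [NormedAddCommGroup E] {m : MeasurableSpace Ω} (hm : m ≤ m0) {f : Ω → E}
    (hf : Integrable f μ) {s : Set Ω} (hs : MeasurableSet[m] s) {c : ℝ}
    (hc : ∀ᵐ ω ∂μ, μ[fun ω => ‖f ω‖ | m] ω ≤ c) :
    ∫⁻ ω in s, ‖f ω‖ₑ ∂μ ≤ ENNReal.ofReal c * μ s := by
  have hbound : ∫ ω in s, ‖f ω‖ ∂μ ≤ c * μ.real s :=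
    calc ∫ ω in s, ‖f ω‖ ∂μ = ∫ ω in s, μ[fun ω => ‖f ω‖ | m] ω ∂μ :=
          (setIntegral_condExp hm hf.norm hs).symm
      _ ≤ ∫ _ in s, c ∂μ :=
          setIntegral_mono_ae integrable_condExp.integrableOn (integrable_const c).integrableOn hc
      _ = c * μ.real s := by rw [setIntegral_const, smul_eq_mul, mul_comm]
  calc ∫⁻ ω in s, ‖f ω‖ₑ ∂μ = ENNReal.ofReal (∫ ω in s, ‖f ω‖ ∂μ) := by
        rw [ofReal_integral_norm_eq_lintegral_enorm hf.integrableOn]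
    _ ≤ ENNReal.ofReal (c * μ.real s) := ENNReal.ofReal_le_ofReal hbound
    _ = ENNReal.ofReal c * μ s := by
        rw [measureReal_def, ENNReal.ofReal_mul' ENNReal.toReal_nonneg,
          ENNReal.ofReal_toReal (measure_ne_top μ s)]

theorem tendsto_stoppedProcess_of_ne_top {β : Type*} [TopologicalSpace β] {u : ℕ → Ω → β}
    {τ : Ω → ℕ∞} {ω : Ω} (hω : τ ω ≠ ⊤) :
    Tendsto (fun n => stoppedProcess u τ n ω) atTop (𝓝 (stoppedValue u τ ω)) := by
  lift τ ω to ℕ using hω with N hN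
  refine tendsto_const_nhds.congr' ?_
  filter_upwards [eventually_ge_atTop N] with n hn
  exact (stoppedProcess_eq_of_ge (by rw [← hN]; exact WithTop.coe_le_coe.mpr hn)).symm

variable {E : Type*}

noncomputable def variationUntil [PseudoEMetricSpace E] (X : ℕ → Ω → E)
    (R : Ω → ℕ∞) (ω : Ω) : ℝ≥0∞ :=
  ∑' k : ℕ, {ω | (k : ℕ∞) < R ω}.indicator (fun ω => edist (X k ω) (X (k + 1) ω)) ω

theorem edist_le_variationUntil [PseudoEMetricSpace E] {X : ℕ → Ω → E}
    {R : Ω → ℕ∞} {ω : Ω} {m : ℕ} (hm : (m : ℕ∞) ≤ R ω) :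
    edist (X 0 ω) (X m ω) ≤ variationUntil X R ω :=
  calc edist (X 0 ω) (X m ω) ≤ ∑ k ∈ Finset.range m, edist (X k ω) (X (k + 1) ω) :=
        edist_le_range_sum_edist (fun k => X k ω) m
    _ = ∑ k ∈ Finset.range m,
          {ω | (k : ℕ∞) < R ω}.indicator (fun ω => edist (X k ω) (X (k + 1) ω)) ω := by
        refine Finset.sum_congr rfl fun k hk => ?_
        rw [Set.indicator_of_mem]
        exact (Nat.cast_lt.mpr (Finset.mem_range.mp hk)).trans_le hm
    _ ≤ variationUntil X R ω := ENNReal.sum_le_tsum _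

variable [NormedAddCommGroup E] {X : ℕ → Ω → E} {R : Ω → ℕ∞} {ℱ : Filtration ℕ m0} {c : ℝ}

theorem enorm_stoppedValue_le {σ : Ω → ℕ∞} {ω : Ω} (hσ : σ ω ≤ R ω) :
    ‖stoppedValue X σ ω‖ₑ ≤ ‖X 0 ω‖ₑ + variationUntil X R ω :=
  calc ‖stoppedValue X σ ω‖ₑ
      = ‖X 0 ω + (stoppedValue X σ ω - X 0 ω)‖ₑ := by rw [add_sub_cancel]
    _ ≤ ‖X 0 ω‖ₑ + edist (X 0 ω) (stoppedValue X σ ω) := by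
        rw [edist_comm, edist_eq_enorm_sub]; exact enorm_add_le _ _
    _ ≤ ‖X 0 ω‖ₑ + variationUntil X R ω :=
        add_le_add_right (edist_le_variationUntil ((WithTop.coe_untopD_le _ _).trans hσ)) _

theorem aemeasurable_variationUntil (hX : ∀ n, AEStronglyMeasurable (X n) μ)
    (hR : IsStoppingTime ℱ R) :
    AEMeasurable (variationUntil X R) μ :=
  AEMeasurable.tsum fun k =>
    ((hX k).edist (hX (k + 1))).indicator (ℱ.le k _ (hR.measurableSet_gt k))

variable [IsFiniteMeasure μ]

theorem lintegral_variationUntil_le (hint : ∀ n, Integrable (X n) μ) (hR : IsStoppingTime ℱ R)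
    (hdiff : ∀ n, ∀ᵐ ω ∂μ, μ[fun ω => ‖X (n + 1) ω - X n ω‖ | ℱ n] ω ≤ c) :
    ∫⁻ ω, variationUntil X R ω ∂μ ≤ ENNReal.ofReal c * ∫⁻ ω, (R ω : ℝ≥0∞) ∂μ := by
  have hmeas (k : ℕ) : MeasurableSet {ω | (k : ℕ∞) < R ω} :=
    ℱ.le k _ (hR.measurableSet_gt k)
  have hstep (k : ℕ) : Integrable (fun ω => X (k + 1) ω - X k ω) μ :=
    (hint (k + 1)).sub (hint k)
  have hterm (k : ℕ) : ∫⁻ ω, {ω | (k : ℕ∞) < R ω}.indicator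
      (fun ω => edist (X k ω) (X (k + 1) ω)) ω ∂μ =
      ∫⁻ ω in {ω | (k : ℕ∞) < R ω}, ‖X (k + 1) ω - X k ω‖ₑ ∂μ := by
    simp_rw [lintegral_indicator (hmeas k), edist_comm (X k _), edist_eq_enorm_sub]
  calc ∫⁻ ω, variationUntil X R ω ∂μ
      = ∑' k : ℕ, ∫⁻ ω in {ω | (k : ℕ∞) < R ω}, ‖X (k + 1) ω - X k ω‖ₑ ∂μ := by
        unfold variationUntil
        rw [lintegral_tsum fun k => ((hint k).1.edist (hint (k + 1)).1).indicator (hmeas k)]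
        exact tsum_congr hterm
    _ ≤ ∑' k : ℕ, ENNReal.ofReal c * μ {ω | (k : ℕ∞) < R ω} :=
        ENNReal.tsum_le_tsum fun k => setLIntegral_enorm_le_of_condExp_norm_le (ℱ.le k)
          (hstep k) (hR.measurableSet_gt k) (hdiff k)
    _ = ENNReal.ofReal c * ∫⁻ ω, (R ω : ℝ≥0∞) ∂μ := by
        rw [ENNReal.tsum_mul_left, lintegral_toENNReal_eq_tsum_measure_lt hR.measurable_enat]

theorem lintegral_enorm_add_variationUntil_lt_top (hint : ∀ n, Integrable (X n) μ)
    (hR : IsStoppingTime ℱ R) (hRfin : ∫⁻ ω, (R ω : ℝ≥0∞) ∂μ < ⊤)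
    (hdiff : ∀ n, ∀ᵐ ω ∂μ, μ[fun ω => ‖X (n + 1) ω - X n ω‖ | ℱ n] ω ≤ c) :
    ∫⁻ ω, ‖X 0 ω‖ₑ + variationUntil X R ω ∂μ < ⊤ := by
  rw [lintegral_add_left' (hint 0).1.enorm]
  exact ENNReal.add_lt_top.mpr ⟨(hint 0).2, (lintegral_variationUntil_le hint hR hdiff).trans_lt
    (ENNReal.mul_lt_top ENNReal.ofReal_lt_top hRfin)⟩

theorem integrable_stoppedValue_of_condExp_norm_sub_le (hint : ∀ n, Integrable (X n) μ)
    (hR : IsStoppingTime ℱ R) (hRfin : ∫⁻ ω, (R ω : ℝ≥0∞) ∂μ < ⊤)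
    (hdiff : ∀ n, ∀ᵐ ω ∂μ, μ[fun ω => ‖X (n + 1) ω - X n ω‖ | ℱ n] ω ≤ c) :
    Integrable (stoppedValue X R) μ := by
  have hfin := ae_ne_top_of_lintegral_toENNReal_lt_top hR.measurable_enat hRfin
  refine ⟨aestronglyMeasurable_of_tendsto_ae atTop
    (fun n => (integrable_stoppedProcess hR hint n).1) ?_, ?_⟩
  · filter_upwards [hfin] with ω hω using tendsto_stoppedProcess_of_ne_top hω
  · exact (lintegral_mono fun ω => enorm_stoppedValue_le le_rfl).trans_lt
      (lintegral_enorm_add_variationUntil_lt_top hint hR hRfin hdiff)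

theorem tendsto_integral_stoppedProcess [NormedSpace ℝ E] (hint : ∀ n, Integrable (X n) μ)
    (hR : IsStoppingTime ℱ R) (hRfin : ∫⁻ ω, (R ω : ℝ≥0∞) ∂μ < ⊤)
    (hdiff : ∀ n, ∀ᵐ ω ∂μ, μ[fun ω => ‖X (n + 1) ω - X n ω‖ | ℱ n] ω ≤ c) :
    Tendsto (fun n => μ[stoppedProcess X R n]) atTop (𝓝 μ[stoppedValue X R]) := by
  set g := fun ω => ‖X 0 ω‖ₑ + variationUntil X R ω
  have hg : ∫⁻ ω, g ω ∂μ < ⊤ := lintegral_enorm_add_variationUntil_lt_top hint hR hRfin hdiff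
  have hgmeas : AEMeasurable g μ :=
    (hint 0).1.enorm.add (aemeasurable_variationUntil (fun n => (hint n).1) hR)
  have hfin := ae_ne_top_of_lintegral_toENNReal_lt_top hR.measurable_enat hRfin
  refine tendsto_integral_of_dominated_convergence (fun ω => (g ω).toReal)
    (fun n => (integrable_stoppedProcess hR hint n).1)
    (integrable_toReal_of_lintegral_ne_top hgmeas hg.ne) (fun n => ?_) ?_
  · filter_upwards [ae_lt_top' hgmeas hg.ne] with ω hω
    rw [← toReal_enorm]
    exact ENNReal.toReal_mono hω.ne
      (enorm_stoppedValue_le (σ := fun ω => min (n : ℕ∞) (R ω)) (min_le_right _ _))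
  · filter_upwards [hfin] with ω hω using tendsto_stoppedProcess_of_ne_top hω

end

section

variable {Ω : Type*} {m0 : MeasurableSpace Ω} {μ : Measure Ω} {ℱ : Filtration ℕ m0}
  [SigmaFiniteFiltration μ ℱ] {f : ℕ → Ω → ℝ} {τ : Ω → WithTop ℕ} {N : ℕ}

theorem MeasureTheory.Supermartingale.integral_stoppedValue_le_integral_zero
    (hf : Supermartingale f ℱ μ) (hτ : IsStoppingTime ℱ τ) (hbdd : ∀ ω, τ ω ≤ N) :
    μ[stoppedValue f τ] ≤ μ[f 0] := by
  have h := hf.neg.expected_stoppedValue_mono (isStoppingTime_const ℱ 0) hτ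
    (fun _ => bot_le) hbdd
  have hneg : stoppedValue (-f) τ = -stoppedValue f τ := rfl
  simpa only [stoppedValue_const, hneg, Pi.neg_apply, integral_neg, neg_le_neg_iff] using h

theorem MeasureTheory.Martingale.integral_stoppedValue_eq_integral_zero
    (hf : Martingale f ℱ μ) (hτ : IsStoppingTime ℱ τ) (hbdd : ∀ ω, τ ω ≤ N) :
    μ[stoppedValue f τ] = μ[f 0] :=
  le_antisymm (hf.supermartingale.integral_stoppedValue_le_integral_zero hτ hbdd)
    (hf.submartingale.expected_stoppedValue_mono (isStoppingTime_const ℱ 0) hτ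
      (fun _ => bot_le) hbdd)

end

theorem optional_stopping_conditional_difference_bound_general
    {Ω : Type*} {m0 : MeasurableSpace Ω} {μ : Measure Ω} [IsProbabilityMeasure μ]
    (ℱ : Filtration ℕ m0) (X : ℕ → Ω → ℝ)
    (R : Ω → ℕ∞)
    (hstop : ∀ n : ℕ, MeasurableSet[ℱ n] {ω | R ω ≤ (n : ℕ∞)})
    (hRfin : ∫⁻ ω, (R ω : ℝ≥0∞) ∂μ < ⊤)
    (c : ℝ)
    (hdiff : ∀ n : ℕ, ∀ᵐ ω ∂μ,
      (μ[fun ω' => |X (n + 1) ω' - X n ω'| | ℱ n]) ω ≤ c) :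
    (Martingale X ℱ μ →
      Integrable (fun ω => X (R ω).toNat ω) μ ∧
        ∫ ω, X (R ω).toNat ω ∂μ = ∫ ω, X 0 ω ∂μ) ∧
    (Supermartingale X ℱ μ →
      Integrable (fun ω => X (R ω).toNat ω) μ ∧
        ∫ ω, X (R ω).toNat ω ∂μ ≤ ∫ ω, X 0 ω ∂μ) := by
  have hR : IsStoppingTime ℱ R := hstop
  have hdiff' : ∀ n, ∀ᵐ ω ∂μ, μ[fun ω => ‖X (n + 1) ω - X n ω‖ | ℱ n] ω ≤ c := hdiff
  -- `stoppedValue` reads `X` at an arbitrary index on `{R = ⊤}`, not at `(⊤).toNat = 0`.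
  have hXR : stoppedValue X R =ᵐ[μ] fun ω => X (R ω).toNat ω := by
    filter_upwards [ae_ne_top_of_lintegral_toENNReal_lt_top hR.measurable_enat hRfin] with ω hω
    show X (R ω).untopA ω = X (R ω).toNat ω
    rw [ENat.untopA_eq_toNat hω]
  have hstopped (n : ℕ) : IsStoppingTime ℱ fun ω => min (n : WithTop ℕ) (R ω) :=
    (isStoppingTime_const ℱ n).min hR
  have hbdd (n : ℕ) (ω : Ω) : min (n : WithTop ℕ) (R ω) ≤ n := min_le_left _ _
  rw [← integral_congr_ae hXR]
  refine ⟨fun hX => ⟨?_, ?_⟩, fun hX => ⟨?_, ?_⟩⟩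
  · exact (integrable_stoppedValue_of_condExp_norm_sub_le hX.integrable hR hRfin hdiff').congr hXR
  · refine tendsto_nhds_unique (tendsto_integral_stoppedProcess hX.integrable hR hRfin hdiff') ?_
    exact tendsto_const_nhds.congr fun n =>
      (hX.integral_stoppedValue_eq_integral_zero (hstopped n) (hbdd n)).symm
  · exact (integrable_stoppedValue_of_condExp_norm_sub_le hX.integrable hR hRfin hdiff').congr hXR
  · exact le_of_tendsto' (tendsto_integral_stoppedProcess hX.integrable hR hRfin hdiff')
      fun n => hX.integral_stoppedValue_le_integral_zero (hstopped n) (hbdd n)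

/-- **Optional Stopping Theorem (second variant).**
For a stopping time `R : Ω → ℕ∞` with `E(R) < ∞` and a process whose conditional
absolute differences are uniformly bounded by `c`, the stopped value `X_R`
(defined as `ω ↦ X (R ω).toNat ω`, which agrees with `X_R` on the a.s. event
`{R < ∞}`) is integrable, and `E(X_R) = E(X₀)` for a martingale, respectively
`E(X_R) ≤ E(X₀)` for a supermartingale. -/
theorem optional_stopping_conditional_difference_bound
    {Ω : Type*} {m0 : MeasurableSpace Ω} {μ : Measure Ω} [IsProbabilityMeasure μ]
    (ℱ : Filtration ℕ m0) (X : ℕ → Ω → ℝ)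
    (R : Ω → ℕ∞)
    (hstop : ∀ n : ℕ, MeasurableSet[ℱ n] {ω | R ω ≤ (n : ℕ∞)})
    (hRfin : ∫⁻ ω, (R ω : ℝ≥0∞) ∂μ < ⊤)
    (c : ℝ) (hc : 0 < c)
    (hdiff : ∀ n : ℕ, ∀ᵐ ω ∂μ,
      (μ[fun ω' => |X (n + 1) ω' - X n ω'| | ℱ n]) ω ≤ c) :
    (Martingale X ℱ μ →
      Integrable (fun ω => X (R ω).toNat ω) μ ∧
        ∫ ω, X (R ω).toNat ω ∂μ = ∫ ω, X 0 ω ∂μ) ∧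
    (Supermartingale X ℱ μ →
      Integrable (fun ω => X (R ω).toNat ω) μ ∧
        ∫ ω, X (R ω).toNat ω ∂μ ≤ ∫ ω, X 0 ω ∂μ) :=
  optional_stopping_conditional_difference_bound_general ℱ X R hstop hRfin c hdiff
end

section
/- Let {R_n}_{n∈ℕ} be a sequence of independent and identically distributed integer-valued random variables with E(R_1) ≤ 0 and finite positive variance 0 < Var(R_1) < ∞. For any x ∈ ℤ define X_0 = x and X_n = x + Σ_{k=1}^n R_k. Then P(∃ n ∈ ℕ₀ such that X_n ≤ 0) = 1. -/
/-!
Write `S n` for the partial sums. By the central limit theorem `(S n - n E R) / √n` is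
asymptotically a nondegenerate Gaussian, so, the drift being nonpositive, `S n < -√n` has
probability bounded away from zero for large `n`; by the reverse Fatou lemma the walk is then
unbounded below with positive probability. Being unbounded below is a tail event, so Kolmogorov's
zero-one law upgrades this to probability one.
-/

open MeasureTheory ProbabilityTheory Filter Set

theorem limsup_measure_le_measure_limsup {α : Type*} [MeasurableSpace α] (μ : Measure α)
    [IsFiniteMeasure μ] {s : ℕ → Set α} (hs : ∀ n, MeasurableSet (s n)) :
    limsup (fun n => μ (s n)) atTop ≤ μ (limsup s atTop) := by
  have hanti : Antitone fun n => ⋃ i ≥ n, s i :=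
    fun m n hmn => biUnion_mono (fun i (hi : n ≤ i) => hmn.trans hi) fun _ _ => subset_rfl
  rw [limsup_eq_iInf_iSup_of_nat, limsup_eq_iInf_iSup_of_nat]
  simp only [iSup_eq_iUnion, iInf_eq_iInter]
  rw [hanti.measure_iInter (fun n => (MeasurableSet.biUnion (to_countable _)
    fun i _ => hs i).nullMeasurableSet) ⟨0, measure_ne_top μ _⟩]
  exact iInf_mono fun n => iSup₂_le fun i hi => measure_mono (subset_biUnion_of_mem hi)

theorem bddBelow_range_iff_of_shift {f g : ℕ → ℝ} (m : ℕ) (c : ℝ)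
    (h : ∀ n, f (m + n) = c + g n) : BddBelow (range f) ↔ BddBelow (range g) := by
  constructor
  · rintro ⟨b, hb⟩
    refine ⟨b - c, forall_mem_range.2 fun n => ?_⟩
    have := hb (mem_range_self (m + n))
    rw [h] at this
    linarith
  · rintro ⟨b, hb⟩
    obtain ⟨b', hb'⟩ := ((finite_Iio m).image f).bddBelow
    refine ⟨min b' (c + b), forall_mem_range.2 fun n => ?_⟩
    rcases lt_or_ge n m with hn | hn
    · exact (min_le_left _ _).trans (hb' (mem_image_of_mem f hn))
    · obtain ⟨k, rfl⟩ := Nat.exists_eq_add_of_le hn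
      rw [h]
      exact (min_le_right _ _).trans (by linarith [hb (mem_range_self k)])

theorem gaussianReal_Iio_pos {v : NNReal} (hv : v ≠ 0) (a : ℝ) :
    0 < gaussianReal 0 v (Iio a) := by
  refine pos_iff_ne_zero.2 fun h => ?_
  simpa using gaussianReal_absolutelyContinuous' 0 hv h

theorem lt_neg_sqrt_of_inv_sqrt_mul_sub_lt {n : ℕ} {s m : ℝ} (hm : m ≤ 0)
    (h : (√(n : ℝ))⁻¹ * (s - n * m) < -1) : s < -√(n : ℝ) := by
  rcases (Real.sqrt_nonneg (n : ℝ)).eq_or_lt with h0 | hpos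
  · rw [← h0, inv_zero, zero_mul] at h
    norm_num at h
  · rw [inv_mul_lt_iff₀ hpos] at h
    nlinarith [Nat.cast_nonneg (α := ℝ) n]

section PartialSums

variable {Ω : Type*} {m0 : MeasurableSpace Ω} (μ : Measure Ω) {X : ℕ → Ω → ℝ}

theorem measurableSet_limsup_comap_not_bddBelow_partialSums (X : ℕ → Ω → ℝ) :
    MeasurableSet[limsup (fun n => MeasurableSpace.comap (X n) inferInstance) atTop]
      {ω | ¬BddBelow (range fun n => ∑ k ∈ Finset.range n, X k ω)} := by
  rw [limsup_eq_iInf_iSup_of_nat, MeasurableSpace.measurableSet_iInf]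
  intro m
  have hshift : ∀ ω, BddBelow (range fun n => ∑ k ∈ Finset.range n, X k ω) ↔
      BddBelow (range fun n => ∑ k ∈ Finset.range n, X (m + k) ω) :=
    fun ω => bddBelow_range_iff_of_shift m (∑ k ∈ Finset.range m, X k ω)
      fun n => Finset.sum_range_add _ m n
  simp_rw [hshift]
  have hX : ∀ k, Measurable[⨆ i ≥ m, MeasurableSpace.comap (X i) inferInstance] (X (m + k)) :=
    fun k => Measurable.of_comap_le (le_iSup₂_of_le (m + k) (Nat.le_add_right m k) le_rfl)
  exact (measurableSet_bddBelow_range fun n => Finset.measurable_sum _ fun k _ => hX k).compl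

theorem measure_not_bddBelow_partialSums_eq_zero_or_one (hX : ∀ n, Measurable (X n))
    (hindep : iIndepFun X μ) :
    μ {ω | ¬BddBelow (range fun n => ∑ k ∈ Finset.range n, X k ω)} = 0 ∨
      μ {ω | ¬BddBelow (range fun n => ∑ k ∈ Finset.range n, X k ω)} = 1 :=
  measure_zero_or_one_of_measurableSet_limsup_atTop (fun n => (hX n).comap_le)
    ((iIndepFun_iff_iIndep _ _ _).1 hindep) (measurableSet_limsup_comap_not_bddBelow_partialSums X)

variable [IsProbabilityMeasure μ]

theorem gaussianReal_Iio_le_liminf_measure_partialSum_lt_neg_sqrt (hindep : iIndepFun X μ)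
    (hident : ∀ n, IdentDistrib (X n) (X 0) μ μ) (h2 : MemLp (X 0) 2 μ) (hmean : μ[X 0] ≤ 0) :
    gaussianReal 0 Var[X 0; μ].toNNReal (Iio (-1)) ≤
      liminf (fun n : ℕ => μ {ω | ∑ k ∈ Finset.range n, X k ω < -√n}) atTop := by
  have hclt := tendstoInDistribution_inv_sqrt_mul_sum_sub
    (P' := gaussianReal 0 Var[X 0; μ].toNNReal) HasLaw.id h2 hindep hident
  have hopen := ProbabilityMeasure.le_liminf_measure_open_of_tendsto hclt.tendsto
    (isOpen_Iio (a := (-1 : ℝ)))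
  simp only [ProbabilityMeasure.coe_mk, Measure.map_id] at hopen
  refine hopen.trans (liminf_le_liminf (Eventually.of_forall fun n => ?_))
  rw [Measure.map_apply_of_aemeasurable (hclt.forall_aemeasurable n) measurableSet_Iio]
  exact measure_mono fun ω hω => lt_neg_sqrt_of_inv_sqrt_mul_sub_lt hmean hω

theorem limsup_partialSum_lt_neg_sqrt_subset_not_bddBelow (X : ℕ → Ω → ℝ) :
    limsup (fun n : ℕ => {ω | ∑ k ∈ Finset.range n, X k ω < -√n}) atTop ⊆
      {ω | ¬BddBelow (range fun n => ∑ k ∈ Finset.range n, X k ω)} := by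
  rintro ω hω ⟨b, hb⟩
  have hsqrt : ∀ᶠ n : ℕ in atTop, -b < √(n : ℝ) :=
    (Real.tendsto_sqrt_atTop.comp tendsto_natCast_atTop_atTop).eventually_gt_atTop (-b)
  obtain ⟨n, hn, hbn⟩ := ((mem_limsup_iff_frequently_mem.1 hω).and_eventually hsqrt).exists
  exact (hb (mem_range_self n)).not_gt (lt_trans hn (by linarith))

theorem measure_not_bddBelow_partialSums_pos (hX : ∀ n, Measurable (X n))
    (hindep : iIndepFun X μ) (hident : ∀ n, IdentDistrib (X n) (X 0) μ μ)
    (h2 : MemLp (X 0) 2 μ) (hmean : μ[X 0] ≤ 0) (hvar : 0 < Var[X 0; μ]) :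
    0 < μ {ω | ¬BddBelow (range fun n => ∑ k ∈ Finset.range n, X k ω)} := by
  have hA : ∀ n : ℕ, MeasurableSet {ω | ∑ k ∈ Finset.range n, X k ω < -√n} := fun n =>
    measurableSet_lt (Finset.measurable_sum _ fun k _ => hX k) measurable_const
  calc 0 < gaussianReal 0 Var[X 0; μ].toNNReal (Iio (-1)) :=
        gaussianReal_Iio_pos (Real.toNNReal_pos.2 hvar).ne' _
    _ ≤ liminf (fun n : ℕ => μ {ω | ∑ k ∈ Finset.range n, X k ω < -√n}) atTop :=
        gaussianReal_Iio_le_liminf_measure_partialSum_lt_neg_sqrt μ hindep hident h2 hmean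
    _ ≤ limsup (fun n : ℕ => μ {ω | ∑ k ∈ Finset.range n, X k ω < -√n}) atTop :=
        liminf_le_limsup
    _ ≤ μ (limsup (fun n : ℕ => {ω | ∑ k ∈ Finset.range n, X k ω < -√n}) atTop) :=
        limsup_measure_le_measure_limsup μ hA
    _ ≤ _ := measure_mono (limsup_partialSum_lt_neg_sqrt_subset_not_bddBelow X)

theorem measure_not_bddBelow_partialSums_eq_one (hX : ∀ n, Measurable (X n))
    (hindep : iIndepFun X μ) (hident : ∀ n, IdentDistrib (X n) (X 0) μ μ)
    (h2 : MemLp (X 0) 2 μ) (hmean : μ[X 0] ≤ 0) (hvar : 0 < Var[X 0; μ]) :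
    μ {ω | ¬BddBelow (range fun n => ∑ k ∈ Finset.range n, X k ω)} = 1 :=
  (measure_not_bddBelow_partialSums_eq_zero_or_one μ hX hindep).resolve_left
    (measure_not_bddBelow_partialSums_pos μ hX hindep hident h2 hmean hvar).ne'

end PartialSums

/-- **Almost-sure hitting for integer random walks with nonpositive drift.**
For an i.i.d. sequence `{R_n}` of integer-valued random variables with
`E(R_1) ≤ 0` and `0 < Var(R_1) < ∞`, the walk `X_n = x + Σ_{k<n} R_k`
drops to `≤ 0` almost surely, from any initial value `x ∈ ℤ`. -/
theorem integer_random_walk_as_hitting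
    {Ω : Type*} {m0 : MeasurableSpace Ω} (μ : Measure Ω) [IsProbabilityMeasure μ]
    (R : ℕ → Ω → ℤ) (hmeas : ∀ n, Measurable (R n))
    (hindep : iIndepFun R μ)
    (hident : ∀ n, IdentDistrib (R n) (R 0) μ μ)
    (hmean : ∫ ω, (R 0 ω : ℝ) ∂μ ≤ 0)
    (h2 : MemLp (fun ω => (R 0 ω : ℝ)) 2 μ)
    (hvar : 0 < variance (fun ω => (R 0 ω : ℝ)) μ) :
    ∀ x : ℤ,
      μ {ω | ∃ n : ℕ, x + ∑ k ∈ Finset.range n, R k ω ≤ 0} = 1 := by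
  intro x
  have hunbdd := measure_not_bddBelow_partialSums_eq_one μ (X := fun k ω => (R k ω : ℝ))
    (fun k => measurable_from_top.comp (hmeas k))
    (hindep.comp (fun _ z => (z : ℝ)) fun _ => measurable_from_top)
    (fun k => (hident k).comp measurable_from_top) h2 hmean hvar
  refine le_antisymm prob_le_one (hunbdd.symm.le.trans (measure_mono fun ω hω => ?_))
  obtain ⟨_, ⟨n, rfl⟩, hn⟩ := not_bddBelow_iff.1 hω (-x)
  exact ⟨n, by exact_mod_cast (show (x : ℝ) + ∑ k ∈ Finset.range n, (R k ω : ℝ) ≤ 0 by linarith)⟩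
end

section
/- Let {X_n}_{n∈ℕ₀} be independent random variables with X_0 ≡ 1/2 and, for n ≥ 1, P(X_n = 1) = e^{−1/n²} and P(X_n = −4n²) = 1 − e^{−1/n²}. Define Y_n := Σ_{j=0}^n X_j, and let F_n be the σ-algebra generated by X_0,…,X_n. Then: (a) each Y_n is integrable and for all n, E[Y_{n+1} | F_n] ≤ Y_n − 1.52 a.s., so {Y_n} is a supermartingale (indeed a ranking supermartingale) satisfying the LBCAD condition; (b) with Z := min{n : Y_n ≤ 0} (min ∅ := ∞), one has P(Z > n) = ∏_{j=1}^n e^{−1/j²} for all n, and consequently P(Z = ∞) = e^{−π²/6} > 0. Hence the nonnegativity condition in the difference-bounded supermartingale theorem cannot be dropped. -/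
/-!
Every step `X_n`, `n ≥ 1`, has mean `e^{-1/n²} - 4n²(1 - e^{-1/n²}) ≤ -1.52`, and by
independence this mean is the conditional drift of `Y` given `F_n`. Yet `Y` stays positive up to
time `n` exactly when all steps up to `n` equal `1`: a first step `-4k²` hits the partial sum
`1/2 + (k - 1)` and makes it negative. Hence `P(Z > n) = ∏_{j ≤ n} e^{-1/j²}`, which decreases to
`e^{-ζ(2)} = e^{-π²/6} > 0`.
-/

open MeasureTheory ProbabilityTheory

open Filter Topology Finset

section PartialSums

variable {x : ℕ → ℝ} {n : ℕ}

theorem sum_range_succ_eq_of_eq_one (h0 : x 0 = 1 / 2) (h1 : ∀ j ∈ Icc 1 n, x j = 1) :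
    ∑ j ∈ range (n + 1), x j = 1 / 2 + n := by
  rw [sum_range_succ', h0,
    sum_congr rfl fun j hj => h1 (j + 1) (mem_Icc.2 ⟨Nat.le_add_left 1 j, mem_range.1 hj⟩)]
  simp [add_comm]

theorem forall_sum_range_pos_iff (h0 : x 0 = 1 / 2)
    (hx : ∀ j ∈ Icc 1 n, x j = 1 ∨ x j = -4 * (j : ℝ) ^ 2) :
    (∀ m ≤ n, 0 < ∑ j ∈ range (m + 1), x j) ↔ ∀ j ∈ Icc 1 n, x j = 1 := by
  refine ⟨fun hpos => ?_, fun h1 m hm => ?_⟩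
  · induction n with
    | zero => simp
    | succ n ih =>
      have hprev := ih (fun j hj => hx j (Icc_subset_Icc_right n.le_succ hj))
        fun m hm => hpos m (hm.trans n.le_succ)
      intro j hj
      rcases (mem_Icc.1 hj).2.lt_or_eq with hjn | rfl
      · exact hprev j (mem_Icc.2 ⟨(mem_Icc.1 hj).1, Nat.lt_succ_iff.1 hjn⟩)
      refine (hx _ hj).resolve_right fun hneg => ?_
      have := hpos (n + 1) le_rfl
      rw [sum_range_succ, sum_range_succ_eq_of_eq_one h0 hprev, hneg] at this
      push_cast at this
      nlinarith
  · rw [sum_range_succ_eq_of_eq_one h0 fun j hj => h1 j (Icc_subset_Icc_right hm hj)]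
    positivity

end PartialSums

theorem one_ne_neg_four_mul_sq {m : ℕ} : (1 : ℝ) ≠ -4 * (m : ℝ) ^ 2 := by
  nlinarith [sq_nonneg (m : ℝ)]

theorem exp_neg_inv_sq_le_one {m : ℕ} : Real.exp (-1 / (m : ℝ) ^ 2) ≤ 1 :=
  Real.exp_le_one_iff.2 (div_nonpos_of_nonpos_of_nonneg (by norm_num) (sq_nonneg _))

theorem exp_neg_inv_sq_sub_four_sq_mul_le {m : ℕ} (hm : 1 ≤ m) :
    Real.exp (-1 / (m : ℝ) ^ 2) + -4 * (m : ℝ) ^ 2 * (1 - Real.exp (-1 / (m : ℝ) ^ 2)) ≤ -1.52 := by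
  set t : ℝ := 1 / (m : ℝ) ^ 2 with ht
  have hM : (1 : ℝ) ≤ (m : ℝ) ^ 2 := one_le_pow₀ (by exact_mod_cast hm)
  have htM : t * (m : ℝ) ^ 2 = 1 := by rw [ht]; field_simp
  have ht0 : 0 < t := by positivity
  have ht1 : t ≤ 1 := by rw [ht, div_le_one (by positivity)]; exact hM
  -- With `t = 1/m²` this bounds the left side by `-(3 + 2t)/(1 + t + t²/2) ≤ -2`; the cruder
  -- `e^t ≥ 1 + t` only gives `-3/(1 + t)`, which is `-1.5` at `m = 1`.
  have hexp : Real.exp (-t) * (1 + t + t ^ 2 / 2) ≤ 1 := by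
    rw [Real.exp_neg, inv_mul_le_iff₀ (Real.exp_pos t), mul_one]
    exact Real.quadratic_le_exp_of_nonneg ht0.le
  rw [neg_div, ← ht]
  nlinarith [Real.exp_pos (-t)]

theorem tendsto_prod_Icc_exp_neg_inv_sq :
    Tendsto (fun n : ℕ => ∏ j ∈ Icc 1 n, Real.exp (-1 / (j : ℝ) ^ 2)) atTop
      (𝓝 (Real.exp (-(Real.pi ^ 2) / 6))) := by
  have hsum : ∀ n : ℕ, ∏ j ∈ Icc 1 n, Real.exp (-1 / (j : ℝ) ^ 2) =
      Real.exp (-∑ j ∈ range (n + 1), 1 / (j : ℝ) ^ 2) := by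
    intro n
    rw [sum_range_eq_add_Ico _ (by positivity : 0 < n + 1), Ico_add_one_right_eq_Icc,
      ← Real.exp_sum]
    simp [neg_div, sum_neg_distrib]
  simp_rw [hsum, neg_div]
  exact (Real.continuous_exp.tendsto _).comp
    (hasSum_zeta_two.tendsto_sum_nat.comp (tendsto_add_atTop_nat 1)).neg

section

variable {Ω : Type*} {m0 : MeasurableSpace Ω} {μ : Measure Ω}

section TwoPoint

variable [IsProbabilityMeasure μ] {X : Ω → ℝ} {a b p : ℝ}

theorem ae_eq_or_eq_of_measure_eq_ofReal (hX : Measurable X) (hab : a ≠ b) (hp : p ≤ 1)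
    (ha : μ {ω | X ω = a} = ENNReal.ofReal p) (hb : μ {ω | X ω = b} = 1 - ENNReal.ofReal p) :
    ∀ᵐ ω ∂μ, X ω = a ∨ X ω = b := by
  have hA : MeasurableSet {ω | X ω = a} := hX (measurableSet_singleton a)
  have hB : MeasurableSet {ω | X ω = b} := hX (measurableSet_singleton b)
  have hdisj : Disjoint {ω | X ω = a} {ω | X ω = b} :=
    Set.disjoint_left.2 fun ω ha hb => hab (ha.symm.trans hb)
  refine (ae_iff_measure_eq (hA.union hB).nullMeasurableSet).2 ?_
  change μ ({ω | X ω = a} ∪ {ω | X ω = b}) = μ Set.univ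
  rw [measure_union hdisj hB, ha, hb, measure_univ]
  exact add_tsub_cancel_of_le (ENNReal.ofReal_le_one.2 hp)

theorem integrable_of_ae_eq_or_eq (hX : Measurable X) (h : ∀ᵐ ω ∂μ, X ω = a ∨ X ω = b) :
    Integrable X μ := by
  refine .of_bound hX.aestronglyMeasurable (|a| + |b|) ?_
  filter_upwards [h] with ω hω
  rcases hω with hω | hω <;> rw [hω, Real.norm_eq_abs] <;> linarith [abs_nonneg a, abs_nonneg b]

theorem integral_eq_of_measure_eq_ofReal (hX : Measurable X) (hab : a ≠ b) (hp0 : 0 ≤ p)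
    (hp1 : p ≤ 1) (ha : μ {ω | X ω = a} = ENNReal.ofReal p)
    (hb : μ {ω | X ω = b} = 1 - ENNReal.ofReal p) :
    ∫ ω, X ω ∂μ = a * p + b * (1 - p) := by
  have hA : MeasurableSet {ω | X ω = a} := hX (measurableSet_singleton a)
  have hB : MeasurableSet {ω | X ω = b} := hX (measurableSet_singleton b)
  have hsplit : X =ᵐ[μ] fun ω =>
      {ω | X ω = a}.indicator (fun _ => a) ω + {ω | X ω = b}.indicator (fun _ => b) ω := by
    filter_upwards [ae_eq_or_eq_of_measure_eq_ofReal hX hab hp1 ha hb] with ω hω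
    rcases hω with hω | hω <;> simp [Set.indicator, hω, hab, hab.symm]
  rw [integral_congr_ae hsplit, integral_add ((integrable_const a).indicator hA)
    ((integrable_const b).indicator hB), integral_indicator_const _ hA,
    integral_indicator_const _ hB, measureReal_def, measureReal_def, ha, hb,
    ENNReal.toReal_sub_of_le (ENNReal.ofReal_le_one.2 hp1) ENNReal.one_ne_top,
    ENNReal.toReal_ofReal hp0, ENNReal.toReal_one, smul_eq_mul, smul_eq_mul, mul_comm p,
    mul_comm (1 - p)]

end TwoPoint

section Step

variable [IsProbabilityMeasure μ] {V : Ω → ℝ} {m : ℕ}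

theorem ae_eq_one_or_eq_neg_four_mul_sq (hV : Measurable V)
    (h1 : μ {ω | V ω = 1} = ENNReal.ofReal (Real.exp (-1 / (m : ℝ) ^ 2)))
    (h2 : μ {ω | V ω = -4 * (m : ℝ) ^ 2} = 1 - ENNReal.ofReal (Real.exp (-1 / (m : ℝ) ^ 2))) :
    ∀ᵐ ω ∂μ, V ω = 1 ∨ V ω = -4 * (m : ℝ) ^ 2 :=
  ae_eq_or_eq_of_measure_eq_ofReal hV one_ne_neg_four_mul_sq exp_neg_inv_sq_le_one h1 h2

theorem integral_le_of_measure_eq_exp_neg_inv_sq (hV : Measurable V) (hm : 1 ≤ m)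
    (h1 : μ {ω | V ω = 1} = ENNReal.ofReal (Real.exp (-1 / (m : ℝ) ^ 2)))
    (h2 : μ {ω | V ω = -4 * (m : ℝ) ^ 2} = 1 - ENNReal.ofReal (Real.exp (-1 / (m : ℝ) ^ 2))) :
    ∫ ω, V ω ∂μ ≤ -1.52 := by
  rw [integral_eq_of_measure_eq_ofReal hV one_ne_neg_four_mul_sq (Real.exp_pos _).le
    exp_neg_inv_sq_le_one h1 h2, one_mul]
  exact exp_neg_inv_sq_sub_four_sq_mul_le hm

end Step

theorem tendsto_measure_setOf_forall_le [IsFiniteMeasure μ] {P : ℕ → Ω → Prop}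
    (hP : ∀ n, NullMeasurableSet {ω | P n ω} μ) :
    Tendsto (fun n => μ {ω | ∀ m ≤ n, P m ω}) atTop (𝓝 (μ {ω | ∀ n, P n ω})) := by
  convert tendsto_measure_iInter_le hP ⟨0, measure_ne_top μ _⟩ using 3 <;> ext <;> simp

theorem ProbabilityTheory.iIndepFun.condExp_sum_range_succ_ae_eq {X : ℕ → Ω → ℝ}
    (hX : ∀ n, StronglyMeasurable (X n)) (hindep : iIndepFun X μ)
    (hint : ∀ n, Integrable (X n) μ) (n : ℕ) :
    μ[fun ω => ∑ j ∈ range (n + 1 + 1), X j ω | Filtration.natural X hX n] =ᵐ[μ]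
      fun ω => ∑ j ∈ range (n + 1), X j ω + μ[X (n + 1)] := by
  have := hindep.isProbabilityMeasure
  have hpast : StronglyMeasurable[Filtration.natural X hX n] fun ω => ∑ j ∈ range (n + 1), X j ω :=
    Finset.stronglyMeasurable_fun_sum _ fun j hj =>
      (Filtration.stronglyAdapted_natural hX j).mono
        (Filtration.mono _ (Nat.lt_succ_iff.1 (mem_range.1 hj)))
  have hsum_int : Integrable (fun ω => ∑ j ∈ range (n + 1), X j ω) μ :=
    integrable_finsetSum _ fun j _ => hint j
  have hsplit : (fun ω => ∑ j ∈ range (n + 1 + 1), X j ω) =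
      (fun ω => ∑ j ∈ range (n + 1), X j ω) + X (n + 1) := by
    funext ω
    simp only [sum_range_succ _ (n + 1), Pi.add_apply]
  rw [hsplit]
  filter_upwards [condExp_add hsum_int (hint (n + 1)) (Filtration.natural X hX n),
    hindep.condExp_natural_ae_eq_of_lt hX n.lt_add_one] with ω hadd hnext
  rw [hadd, Pi.add_apply, condExp_of_stronglyMeasurable (Filtration.le _ n) hpast hsum_int, hnext]

theorem measure_forall_sum_range_pos {X : ℕ → Ω → ℝ} (hindep : iIndepFun X μ)
    (hX0 : ∀ ω, X 0 ω = 1 / 2)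
    (htwo : ∀ j, 1 ≤ j → ∀ᵐ ω ∂μ, X j ω = 1 ∨ X j ω = -4 * (j : ℝ) ^ 2) (n : ℕ) :
    μ {ω | ∀ m ≤ n, 0 < ∑ j ∈ range (m + 1), X j ω} = ∏ j ∈ Icc 1 n, μ {ω | X j ω = 1} := by
  have hgood : ∀ᵐ ω ∂μ, ∀ j ∈ Icc 1 n, X j ω = 1 ∨ X j ω = -4 * (j : ℝ) ^ 2 :=
    (eventually_all_finset _).2 fun j hj => htwo j (mem_Icc.1 hj).1
  have hae : {ω | ∀ m ≤ n, 0 < ∑ j ∈ range (m + 1), X j ω} =ᵐ[μ]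
      ⋂ j ∈ Icc 1 n, {ω | X j ω = 1} := by
    rw [eventuallyEq_set]
    filter_upwards [hgood] with ω hω
    simpa only [Set.mem_iInter, Set.mem_ofPred_eq] using
      forall_sum_range_pos_iff (hX0 ω) hω
  rw [measure_congr hae]
  exact hindep.meas_biInter fun j _ => ⟨{1}, measurableSet_singleton 1, rfl⟩

end

/-- **Necessity of the nonnegativity condition (Example 3).**
With independent `X_n` where `X₀ ≡ 1/2`, `P(X_n = 1) = e^{−1/n²}`,
`P(X_n = −4n²) = 1 − e^{−1/n²}` (`n ≥ 1`), and `Y_n = Σ_{j≤n} X_j`,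
`F_n = σ(X₀,…,X_n)`: each `Y_n` is integrable,
`E[Y_{n+1} | F_n] ≤ Y_n − 1.52` a.s. (so `{Y_n}` is a supermartingale, indeed a
ranking supermartingale, satisfying LBCAD), while with `Z = min {n | Y_n ≤ 0}` one
has `P(Z > n) = ∏_{j=1}^n e^{−1/j²}` and `P(Z = ∞) = e^{−π²/6} > 0`. -/
theorem nonnegativity_condition_necessary
    {Ω : Type*} {m0 : MeasurableSpace Ω} (μ : Measure Ω) [IsProbabilityMeasure μ]
    (X : ℕ → Ω → ℝ) (hmeas : ∀ n, Measurable (X n))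
    (hindep : iIndepFun X μ)
    (hX0 : ∀ ω, X 0 ω = 1 / 2)
    (hdist : ∀ n : ℕ, 1 ≤ n →
      μ {ω | X n ω = 1} = ENNReal.ofReal (Real.exp (-1 / (n : ℝ) ^ 2)) ∧
      μ {ω | X n ω = -4 * (n : ℝ) ^ 2} =
        1 - ENNReal.ofReal (Real.exp (-1 / (n : ℝ) ^ 2)))
    (Y : ℕ → Ω → ℝ) (hY : ∀ n ω, Y n ω = ∑ j ∈ Finset.range (n + 1), X j ω)
    (F : ℕ → MeasurableSpace Ω)
    (hF : ∀ n, F n = ⨆ j ∈ Finset.range (n + 1),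
      MeasurableSpace.comap (X j) inferInstance) :
    (∀ n, Integrable (Y n) μ) ∧
      (∀ n : ℕ, ∀ᵐ ω ∂μ, (μ[Y (n + 1) | F n]) ω ≤ Y n ω - 1.52) ∧
      (∀ n : ℕ, μ {ω | ∀ m ≤ n, 0 < Y m ω} =
        ENNReal.ofReal (∏ j ∈ Finset.Icc 1 n, Real.exp (-1 / (j : ℝ) ^ 2))) ∧
      μ {ω | ∀ n : ℕ, 0 < Y n ω} = ENNReal.ofReal (Real.exp (-(Real.pi ^ 2) / 6)) ∧
      0 < Real.exp (-(Real.pi ^ 2) / 6) := by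
  have hsm : ∀ n, StronglyMeasurable (X n) := fun n => (hmeas n).stronglyMeasurable
  obtain rfl : Y = fun n ω => ∑ j ∈ range (n + 1), X j ω := funext fun n => funext (hY n)
  obtain rfl : F = Filtration.natural X hsm := funext fun n => by
    rw [hF n]
    simp only [mem_range_succ_iff]
    rfl
  have htwo : ∀ m, 1 ≤ m → ∀ᵐ ω ∂μ, X m ω = 1 ∨ X m ω = -4 * (m : ℝ) ^ 2 := fun m hm =>
    ae_eq_one_or_eq_neg_four_mul_sq (hmeas m) (hdist m hm).1 (hdist m hm).2
  have hint : ∀ m, Integrable (X m) μ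
    | 0 => by rw [funext hX0]; exact integrable_const _
    | m + 1 => integrable_of_ae_eq_or_eq (hmeas _) (htwo _ (Nat.le_add_left 1 m))
  have hfinite : ∀ n, μ {ω | ∀ m ≤ n, 0 < ∑ j ∈ range (m + 1), X j ω} =
      ENNReal.ofReal (∏ j ∈ Icc 1 n, Real.exp (-1 / (j : ℝ) ^ 2)) := fun n => by
    rw [measure_forall_sum_range_pos hindep hX0 htwo, ENNReal.ofReal_prod_of_nonneg
      fun j _ => (Real.exp_pos _).le]
    exact prod_congr rfl fun j hj => (hdist j (mem_Icc.1 hj).1).1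
  refine ⟨fun n => integrable_finsetSum _ fun j _ => hint j, fun n => ?_, hfinite, ?_,
    Real.exp_pos _⟩
  · filter_upwards [hindep.condExp_sum_range_succ_ae_eq hsm hint n] with ω hω
    rw [hω]
    have hm : 1 ≤ n + 1 := Nat.le_add_left 1 n
    linarith [integral_le_of_measure_eq_exp_neg_inv_sq (hmeas _) hm (hdist _ hm).1 (hdist _ hm).2]
  · refine tendsto_nhds_unique (tendsto_measure_setOf_forall_le fun n => ?_) ?_
    · exact (measurableSet_lt measurable_const
        (Finset.measurable_fun_sum _ fun j _ => hmeas j)).nullMeasurableSet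
    · simp_rw [hfinite]
      exact (ENNReal.continuous_ofReal.tendsto _).comp tendsto_prod_Icc_exp_neg_inv_sq
end
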